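/- arXiv:1809.03626 — 6 statements merged into one kernel-verified Lean document; each statement's English description precedes it below -/
import Mathlib

section
/- For every δ > 0, there exists a δ-net N on the unit sphere S^{n-1} ⊂ ℝ^n (with the Euclidean metric) of cardinality at most 2n(1 + 2/δ)^{n-1}. -/
open MeasureTheory Metric Finset
open scoped ENNReal

private lemma pow_sub_pow_le_aux {a b δ : ℝ} (n : ℕ) (hb : 0 ≤ b) (hba : b ≤ a)
    (hd : a - b ≤ δ) :
    a ^ n - b ^ n ≤ δ * n * a ^ (n - 1) := by
  have ha : 0 ≤ a := hb.trans hba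
  have key : a ^ n - b ^ n = (∑ i ∈ Finset.range n, a ^ i * b ^ (n - 1 - i)) * (a - b) :=
    (geom_sum₂_mul a b n).symm
  rw [key]
  have hsum : (∑ i ∈ Finset.range n, a ^ i * b ^ (n - 1 - i)) ≤ (n : ℝ) * a ^ (n - 1) := by
    calc (∑ i ∈ Finset.range n, a ^ i * b ^ (n - 1 - i))
        ≤ ∑ _i ∈ Finset.range n, a ^ (n - 1) := by
          apply Finset.sum_le_sum
          intro i hi
          have hi' := Finset.mem_range.mp hi
          have h1 : a ^ i * b ^ (n - 1 - i) ≤ a ^ i * a ^ (n - 1 - i) :=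
            mul_le_mul_of_nonneg_left (pow_le_pow_left₀ hb hba _) (pow_nonneg ha _)
          refine h1.trans_eq ?_
          rw [← pow_add]
          congr 1
          omega
      _ = (n : ℝ) * a ^ (n - 1) := by
          rw [Finset.sum_const, Finset.card_range, nsmul_eq_mul]
  have hs0 : 0 ≤ a - b := sub_nonneg.mpr hba
  calc (∑ i ∈ Finset.range n, a ^ i * b ^ (n - 1 - i)) * (a - b)
      ≤ ((n : ℝ) * a ^ (n - 1)) * δ := by
        apply mul_le_mul hsum hd hs0
        positivity
    _ = δ * n * a ^ (n - 1) := by ring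

private lemma sep_card_le (n : ℕ) (δ : ℝ) (hδ : 0 < δ) (N : Finset (EuclideanSpace ℝ (Fin n)))
    (h1 : ∀ y ∈ N, ‖y‖ = 1)
    (hsep : (N : Set (EuclideanSpace ℝ (Fin n))).Pairwise (fun x y => δ ≤ dist x y)) :
    (N.card : ℝ) ≤ 2 * n * (1 + 2 / δ) ^ (n - 1) := by
  rcases Nat.eq_zero_or_pos n with hn | hn
  · subst hn
    have : N = ∅ := by
      rcases Finset.eq_empty_or_nonempty N with h | ⟨y, hy⟩
      · exact h
      · exfalso
        have h2 := h1 y hy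
        have hy0 : y = 0 := Subsingleton.elim y 0
        rw [hy0, norm_zero] at h2
        norm_num at h2
    simp [this]
  haveI : Nontrivial (EuclideanSpace ℝ (Fin n)) :=
    Module.nontrivial_of_finrank_pos (R := ℝ)
      (by rw [finrank_euclideanSpace_fin]; exact hn)
  have hrank : Module.finrank ℝ (EuclideanSpace ℝ (Fin n)) = n := finrank_euclideanSpace_fin
  set μ : Measure (EuclideanSpace ℝ (Fin n)) := volume with hμ
  set B := μ (ball (0 : EuclideanSpace ℝ (Fin n)) 1) with hB
  have hB0 : B ≠ 0 := (measure_ball_pos μ 0 one_pos).ne'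
  have hBtop : B ≠ ⊤ := measure_ball_lt_top.ne
  set r : ℝ := max (1 - δ / 2) 0 with hr
  have hr0 : 0 ≤ r := le_max_right _ _
  have hra : r ≤ 1 + δ / 2 := by
    apply max_le <;> nlinarith
  have hdisj : (N : Set (EuclideanSpace ℝ (Fin n))).PairwiseDisjoint
      (fun y => ball y (δ / 2)) := by
    intro x hx y hy hxy
    exact ball_disjoint_ball (by linarith [hsep hx hy hxy])
  have hmeas : ∀ y ∈ N, MeasurableSet (ball y (δ / 2)) := fun y _ => measurableSet_ball
  have hsum : μ (⋃ y ∈ N, ball y (δ / 2)) = ∑ y ∈ N, μ (ball y (δ / 2)) :=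
    measure_biUnion_finset hdisj hmeas
  have hballvol : ∀ y : EuclideanSpace ℝ (Fin n),
      μ (ball y (δ / 2)) = ENNReal.ofReal ((δ / 2) ^ n) * B := by
    intro y
    rw [Measure.addHaar_ball μ y (by positivity : (0:ℝ) ≤ δ / 2), hrank]
  have hsub : (⋃ y ∈ N, ball y (δ / 2))
      ⊆ closedBall (0 : EuclideanSpace ℝ (Fin n)) (1 + δ / 2) \ ball 0 r := by
    intro z hz
    simp only [Set.mem_iUnion] at hz
    obtain ⟨y, hyN, hzy⟩ := hz
    rw [mem_ball] at hzy
    have hy1 : dist y (0 : EuclideanSpace ℝ (Fin n)) = 1 := by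
      rw [dist_zero_right]; exact h1 y hyN
    constructor
    · rw [mem_closedBall]
      calc dist z 0 ≤ dist z y + dist y 0 := dist_triangle _ _ _
        _ ≤ 1 + δ / 2 := by rw [hy1]; linarith
    · intro hzr
      rw [mem_ball] at hzr
      have h2 : 1 - δ / 2 ≤ dist z 0 := by
        have h3 := dist_triangle y z 0
        rw [dist_comm y z] at h3
        rw [hy1] at h3
        linarith
      have : r ≤ dist z 0 := max_le h2 dist_nonneg
      linarith
  have hann : μ (closedBall (0 : EuclideanSpace ℝ (Fin n)) (1 + δ / 2) \ ball 0 r)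
      = ENNReal.ofReal ((1 + δ / 2) ^ n - r ^ n) * B := by
    rw [measure_diff ((ball_subset_ball hra).trans ball_subset_closedBall)
      measurableSet_ball.nullMeasurableSet measure_ball_lt_top.ne,
      Measure.addHaar_closedBall μ _ (by positivity : (0:ℝ) ≤ 1 + δ / 2),
      Measure.addHaar_ball μ _ hr0, hrank,
      ← ENNReal.sub_mul (fun _ _ => hBtop), ← ENNReal.ofReal_sub _ (by positivity)]
  have key : (N.card : ℝ≥0∞) * (ENNReal.ofReal ((δ / 2) ^ n) * B)
      ≤ ENNReal.ofReal ((1 + δ / 2) ^ n - r ^ n) * B := by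
    calc (N.card : ℝ≥0∞) * (ENNReal.ofReal ((δ / 2) ^ n) * B)
        = ∑ y ∈ N, μ (ball y (δ / 2)) := by
          rw [Finset.sum_congr rfl (fun y _ => hballvol y), Finset.sum_const, nsmul_eq_mul]
      _ = μ (⋃ y ∈ N, ball y (δ / 2)) := hsum.symm
      _ ≤ μ (closedBall (0 : EuclideanSpace ℝ (Fin n)) (1 + δ / 2) \ ball 0 r) :=
          measure_mono hsub
      _ = _ := hann
  have key2 : (N.card : ℝ) * (δ / 2) ^ n ≤ (1 + δ / 2) ^ n - r ^ n := by
    have h3 : (N.card : ℝ≥0∞) * ENNReal.ofReal ((δ / 2) ^ n)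
        ≤ ENNReal.ofReal ((1 + δ / 2) ^ n - r ^ n) := by
      rw [← mul_assoc] at key
      exact (ENNReal.mul_le_mul_iff_left hB0 hBtop).mp key
    rw [← ENNReal.ofReal_natCast, ← ENNReal.ofReal_mul (by positivity)] at h3
    have hrn : r ^ n ≤ (1 + δ / 2) ^ n := pow_le_pow_left₀ hr0 hra n
    exact (ENNReal.ofReal_le_ofReal_iff (by linarith)).mp h3
  have hmvt : (1 + δ / 2) ^ n - r ^ n ≤ δ * n * (1 + δ / 2) ^ (n - 1) := by
    apply pow_sub_pow_le_aux n hr0 hra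
    have hrl : 1 - δ / 2 ≤ r := le_max_left _ _
    linarith
  have hfinal : (N.card : ℝ) * (δ / 2) ^ n ≤ δ * n * (1 + δ / 2) ^ (n - 1) :=
    key2.trans hmvt
  have heq : 2 * (n : ℝ) * (1 + 2 / δ) ^ (n - 1) * (δ / 2) ^ n
      = δ * n * (1 + δ / 2) ^ (n - 1) := by
    have hn1 : n - 1 + 1 = n := Nat.succ_pred_eq_of_pos hn
    calc 2 * (n : ℝ) * (1 + 2 / δ) ^ (n - 1) * (δ / 2) ^ n
        = 2 * (n : ℝ) * (1 + 2 / δ) ^ (n - 1) * ((δ / 2) ^ (n - 1) * (δ / 2)) := by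
          rw [← pow_succ, hn1]
      _ = δ * n * ((1 + 2 / δ) * (δ / 2)) ^ (n - 1) := by
          rw [mul_pow]; ring
      _ = δ * n * (1 + δ / 2) ^ (n - 1) := by
          congr 2
          field_simp
          ring
  have hpow : (0 : ℝ) < (δ / 2) ^ n := by positivity
  rw [← heq] at hfinal
  exact le_of_mul_le_mul_right hfinal hpow

theorem exists_delta_net (n : ℕ) (δ : ℝ) (hδ : 0 < δ) :
    ∃ N : Finset (EuclideanSpace ℝ (Fin n)),
      (∀ y ∈ N, ‖y‖ = 1) ∧
      (∀ x : EuclideanSpace ℝ (Fin n), ‖x‖ = 1 → ∃ y ∈ N, ‖x - y‖ ≤ δ) ∧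
      (N.card : ℝ) ≤ 2 * n * (1 + 2 / δ) ^ (n - 1) := by
  classical
  set F : Set (Finset (EuclideanSpace ℝ (Fin n))) := {N | (∀ y ∈ N, ‖y‖ = 1) ∧
    (N : Set (EuclideanSpace ℝ (Fin n))).Pairwise (fun x y => δ ≤ dist x y)} with hF
  have hbound : ∀ N ∈ F, (N.card : ℝ) ≤ 2 * n * (1 + 2 / δ) ^ (n - 1) := by
    intro N hN
    exact sep_card_le n δ hδ N hN.1 hN.2
  obtain ⟨C, hC⟩ : ∃ C : ℕ, ∀ N ∈ F, N.card ≤ C := by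
    refine ⟨⌈(2 * (n:ℝ) * (1 + 2 / δ) ^ (n - 1))⌉₊, fun N hN => ?_⟩
    exact_mod_cast (hbound N hN).trans (Nat.le_ceil _)
  set T : Set ℕ := (fun N : Finset (EuclideanSpace ℝ (Fin n)) => N.card) '' F with hT
  have hTne : T.Nonempty := ⟨0, ∅, ⟨by simp, by simp⟩, rfl⟩
  have hTbdd : BddAbove T := ⟨C, by rintro k ⟨N, hN, rfl⟩; exact hC N hN⟩
  obtain ⟨N, hNF, hNcard⟩ : ∃ N ∈ F, N.card = sSup T := Nat.sSup_mem hTne hTbdd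
  refine ⟨N, hNF.1, ?_, hbound N hNF⟩
  intro x hx
  by_contra hcon
  push_neg at hcon
  have hxN : x ∉ N := fun hxN => by
    have h4 := hcon x hxN
    simp at h4
    linarith
  have hsep' : ∀ y ∈ N, δ ≤ dist x y := by
    intro y hy
    have h5 := hcon y hy
    rw [← dist_eq_norm] at h5
    exact h5.le
  have hins : insert x N ∈ F := by
    constructor
    · intro y hy
      rcases Finset.mem_insert.mp hy with h | h
      · exact h ▸ hx
      · exact hNF.1 y h
    · rw [Finset.coe_insert]
      apply Set.Pairwise.insert hNF.2
      intro y hy hxy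
      constructor
      · exact hsep' y hy
      · rw [dist_comm]; exact hsep' y hy
  have hle : (insert x N).card ≤ sSup T := le_csSup hTbdd ⟨insert x N, hins, rfl⟩
  rw [Finset.card_insert_of_notMem hxN, hNcard] at hle
  omega
end

section
/- Let ξ₁,…,ξ_k be independent real random variables such that Prob(|ξ_i| ≤ ε) ≤ c₀ε for every ε > 0. Then there exists a universal constant c̃ > 0 such that for every ε > 0, Prob(√(ξ₁² + ⋯ + ξ_k²) ≤ ε√k) ≤ (c̃·c₀·ε)^k. -/
open MeasureTheory ProbabilityTheory
open scoped ENNReal NNReal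

lemma smallBall_aux_ineq (j : ℕ) : ((j : ℝ) + 1) * Real.exp (-(j : ℝ)) ≤ 2 * (3/4)^j := by
  have hr : (2:ℝ) ≤ 3/4 * Real.exp 1 := by
    have h := Real.exp_one_gt_d9
    nlinarith
  have key : ((j : ℝ) + 1) ≤ 2 * (3/4 * Real.exp 1)^j := by
    induction j with
    | zero => norm_num
    | succ n ih =>
      have hpow : (0:ℝ) ≤ (3/4 * Real.exp 1)^n := by positivity
      push_cast
      push_cast at ih
      calc (n:ℝ) + 1 + 1 ≤ 2 * ((n:ℝ) + 1) := by
            have : (0:ℝ) ≤ (n:ℝ) := Nat.cast_nonneg n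
            linarith
        _ ≤ 2 * (2 * (3/4 * Real.exp 1)^n) := by linarith
        _ ≤ (3/4 * Real.exp 1) * (2 * (3/4 * Real.exp 1)^n) := by nlinarith
        _ = 2 * (3/4 * Real.exp 1)^(n+1) := by ring
  have hexp : Real.exp (-(j:ℝ)) = ((Real.exp 1)^j)⁻¹ := by
    rw [Real.exp_one_pow, ← Real.exp_neg]
  have hepos : (0:ℝ) < (Real.exp 1)^j := by positivity
  rw [hexp]
  rw [mul_inv_le_iff₀ hepos]
  calc ((j:ℝ) + 1) ≤ 2 * (3/4 * Real.exp 1)^j := key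
    _ = 2 * (3/4)^j * (Real.exp 1)^j := by rw [mul_pow]; ring

lemma smallBall_coord_bound {Ω : Type} [MeasurableSpace Ω] (μ : Measure Ω)
    [IsProbabilityMeasure μ] (ξ : Ω → ℝ) (hm : Measurable ξ) {c₀ : ℝ} (hc₀ : 0 < c₀)
    (hsb : ∀ ε : ℝ, 0 < ε → μ {ω | |ξ ω| ≤ ε} ≤ ENNReal.ofReal (c₀ * ε))
    {ε : ℝ} (hε : 0 < ε) :
    ∫⁻ ω, ENNReal.ofReal (Real.exp (-(ξ ω ^ 2) / ε ^ 2)) ∂μ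
      ≤ ENNReal.ofReal (8 * (c₀ * ε)) := by
  set F : ℕ → Set Ω := fun j => {ω | |ξ ω| ≤ ε * Real.sqrt ((j : ℝ) + 1)} with hF
  have hFmeas : ∀ j, MeasurableSet (F j) := fun j =>
    measurableSet_le hm.abs measurable_const
  -- pointwise bound
  have hpt : ∀ ω, ENNReal.ofReal (Real.exp (-(ξ ω ^ 2) / ε ^ 2))
      ≤ ∑' j : ℕ, (F j).indicator (fun _ => ENNReal.ofReal (Real.exp (-(j : ℝ)))) ω := by
    intro ω
    set s : ℝ := ξ ω ^ 2 / ε ^ 2 with hs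
    have hs0 : 0 ≤ s := by positivity
    set j₀ : ℕ := ⌊s⌋₊ with hj₀
    have hmem : ω ∈ F j₀ := by
      have hlt : s < (j₀ : ℝ) + 1 := Nat.lt_floor_add_one s
      have hε2 : (0:ℝ) < ε ^ 2 := by positivity
      have hx2 : ξ ω ^ 2 ≤ ε ^ 2 * ((j₀ : ℝ) + 1) := by
        rw [hs, div_lt_iff₀ hε2] at hlt
        nlinarith
      have h1 : |ξ ω| = Real.sqrt (ξ ω ^ 2) := (Real.sqrt_sq_eq_abs _).symm
      have h2 : Real.sqrt (ξ ω ^ 2) ≤ Real.sqrt (ε ^ 2 * ((j₀ : ℝ) + 1)) :=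
        Real.sqrt_le_sqrt hx2
      have h3 : Real.sqrt (ε ^ 2 * ((j₀ : ℝ) + 1)) = ε * Real.sqrt ((j₀ : ℝ) + 1) := by
        rw [Real.sqrt_mul (by positivity), Real.sqrt_sq hε.le]
      show |ξ ω| ≤ ε * Real.sqrt ((j₀ : ℝ) + 1)
      rw [h1, ← h3]; exact h2
    have hexp : Real.exp (-(ξ ω ^ 2) / ε ^ 2) ≤ Real.exp (-(j₀ : ℝ)) := by
      apply Real.exp_le_exp.2
      have hfl : (j₀ : ℝ) ≤ s := Nat.floor_le hs0
      have : -(ξ ω ^ 2) / ε ^ 2 = -s := by rw [hs]; ring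
      rw [this]; linarith
    calc ENNReal.ofReal (Real.exp (-(ξ ω ^ 2) / ε ^ 2))
        ≤ ENNReal.ofReal (Real.exp (-(j₀ : ℝ))) := ENNReal.ofReal_le_ofReal hexp
      _ = (F j₀).indicator (fun _ => ENNReal.ofReal (Real.exp (-(j₀ : ℝ)))) ω := by
          rw [Set.indicator_of_mem hmem]
      _ ≤ ∑' j : ℕ, (F j).indicator (fun _ => ENNReal.ofReal (Real.exp (-(j : ℝ)))) ω :=
          ENNReal.le_tsum j₀
  calc ∫⁻ ω, ENNReal.ofReal (Real.exp (-(ξ ω ^ 2) / ε ^ 2)) ∂μ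
      ≤ ∫⁻ ω, ∑' j : ℕ, (F j).indicator
          (fun _ => ENNReal.ofReal (Real.exp (-(j : ℝ)))) ω ∂μ := lintegral_mono hpt
    _ = ∑' j : ℕ, ∫⁻ ω, (F j).indicator
          (fun _ => ENNReal.ofReal (Real.exp (-(j : ℝ)))) ω ∂μ :=
        lintegral_tsum (fun j => ((measurable_const.indicator (hFmeas j)).aemeasurable))
    _ = ∑' j : ℕ, ENNReal.ofReal (Real.exp (-(j : ℝ))) * μ (F j) := by
        congr 1; ext j; rw [lintegral_indicator_const (hFmeas j)]
    _ ≤ ∑' j : ℕ, ENNReal.ofReal (2 * (c₀ * ε)) * (ENNReal.ofReal (3/4))^j := by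
        apply ENNReal.tsum_le_tsum
        intro j
        have hjpos : (0:ℝ) < ε * Real.sqrt ((j : ℝ) + 1) := by positivity
        have hμ : μ (F j) ≤ ENNReal.ofReal (c₀ * (ε * Real.sqrt ((j : ℝ) + 1))) :=
          hsb _ hjpos
        calc ENNReal.ofReal (Real.exp (-(j : ℝ))) * μ (F j)
            ≤ ENNReal.ofReal (Real.exp (-(j : ℝ))) *
              ENNReal.ofReal (c₀ * (ε * Real.sqrt ((j : ℝ) + 1))) :=
              mul_le_mul_right hμ _
          _ = ENNReal.ofReal (Real.exp (-(j : ℝ)) * (c₀ * (ε * Real.sqrt ((j : ℝ) + 1)))) :=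
              (ENNReal.ofReal_mul (Real.exp_pos _).le).symm
          _ ≤ ENNReal.ofReal (2 * (c₀ * ε) * (3/4)^j) := by
              apply ENNReal.ofReal_le_ofReal
              have hsqrt : Real.sqrt ((j : ℝ) + 1) ≤ (j : ℝ) + 1 := by
                nlinarith [Real.sq_sqrt (show (0:ℝ) ≤ (j:ℝ)+1 by positivity),
                  Real.sqrt_nonneg ((j:ℝ)+1), sq_nonneg (Real.sqrt ((j:ℝ)+1) - 1)]
              have h1 : ((j : ℝ) + 1) * Real.exp (-(j : ℝ)) ≤ 2 * (3/4)^j :=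
                smallBall_aux_ineq j
              have hexpnn : (0:ℝ) ≤ Real.exp (-(j:ℝ)) := (Real.exp_pos _).le
              calc Real.exp (-(j : ℝ)) * (c₀ * (ε * Real.sqrt ((j : ℝ) + 1)))
                  ≤ Real.exp (-(j : ℝ)) * (c₀ * (ε * ((j : ℝ) + 1))) := by
                    apply mul_le_mul_of_nonneg_left _ hexpnn
                    apply mul_le_mul_of_nonneg_left _ hc₀.le
                    exact mul_le_mul_of_nonneg_left hsqrt hε.le
                _ = (((j : ℝ) + 1) * Real.exp (-(j : ℝ))) * (c₀ * ε) := by ring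
                _ ≤ (2 * (3/4)^j) * (c₀ * ε) :=
                    mul_le_mul_of_nonneg_right h1 (by positivity)
                _ = 2 * (c₀ * ε) * (3/4)^j := by ring
          _ = ENNReal.ofReal (2 * (c₀ * ε)) * (ENNReal.ofReal (3/4))^j := by
              rw [← ENNReal.ofReal_pow (by norm_num), ← ENNReal.ofReal_mul (by positivity)]
    _ = ENNReal.ofReal (2 * (c₀ * ε)) * (1 - ENNReal.ofReal (3/4))⁻¹ := by
        rw [ENNReal.tsum_mul_left, ENNReal.tsum_geometric]
    _ = ENNReal.ofReal (8 * (c₀ * ε)) := by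
        have h1 : (1 : ℝ≥0∞) - ENNReal.ofReal (3/4) = ENNReal.ofReal (1/4) := by
          rw [← ENNReal.ofReal_one, ← ENNReal.ofReal_sub _ (by norm_num : (0:ℝ) ≤ 3/4)]
          norm_num
        rw [h1, ← ENNReal.ofReal_inv_of_pos (by norm_num : (0:ℝ) < 1/4),
          ← ENNReal.ofReal_mul (by positivity)]
        congr 1
        field_simp
        ring

/-- Tensorization of small-ball estimates: if the independent random variables
`ξ i` satisfy `Prob(|ξ i| ≤ ε) ≤ c₀ ε`, then
`Prob(√(ξ₁²+⋯+ξ_k²) ≤ ε√k) ≤ (c̃·c₀·ε)^k` for a universal constant `c̃`. -/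
theorem smallBall_euclidean_norm :
    ∃ c : ℝ, 0 < c ∧
      ∀ (Ω : Type) (_ : MeasurableSpace Ω) (μ : Measure Ω),
        IsProbabilityMeasure μ →
        ∀ (k : ℕ) (ξ : Fin k → Ω → ℝ),
          (∀ i, Measurable (ξ i)) →
          iIndepFun ξ μ →
          ∀ c₀ : ℝ, 0 < c₀ →
          (∀ i, ∀ ε : ℝ, 0 < ε → μ {ω | |ξ i ω| ≤ ε} ≤ ENNReal.ofReal (c₀ * ε)) →
          ∀ ε : ℝ, 0 < ε →
            μ {ω | Real.sqrt (∑ i, ξ i ω ^ 2) ≤ ε * Real.sqrt k}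
              ≤ ENNReal.ofReal ((c * c₀ * ε) ^ k) := by
  refine ⟨8 * Real.exp 1, by positivity, ?_⟩
  intro Ω mΩ μ hμ k ξ hmeas hindep c₀ hc₀ hsb ε hε
  set t : ℝ := -(1 / ε ^ 2) with ht
  set X : Fin k → Ω → ℝ := fun i ω => ξ i ω ^ 2 with hX
  have hXmeas : ∀ i, Measurable (X i) := fun i => (hmeas i).pow_const 2
  have hXindep : iIndepFun X μ :=
    hindep.comp (fun _ x => x ^ 2) (fun _ => measurable_id.pow_const 2)
  have hXnn : ∀ i ω, 0 ≤ X i ω := fun i ω => sq_nonneg _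
  have htneg : t ≤ 0 := by rw [ht]; exact neg_nonpos.2 (by positivity)
  have hint : ∀ i, Integrable (fun ω => Real.exp (t * X i ω)) μ := by
    intro i
    apply Integrable.mono' (integrable_const (1:ℝ))
      (((hXmeas i).const_mul t).exp).aestronglyMeasurable
    apply ae_of_all
    intro ω
    rw [Real.norm_eq_abs, abs_of_pos (Real.exp_pos _)]
    calc Real.exp (t * X i ω) ≤ Real.exp 0 :=
          Real.exp_le_exp.2 (mul_nonpos_of_nonpos_of_nonneg htneg (hXnn i ω))
      _ = 1 := Real.exp_zero
  have hIntSum : Integrable (fun ω => Real.exp (t * (∑ i, X i) ω)) μ :=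
    hXindep.integrable_exp_mul_sum hXmeas (fun i _ => hint i)
  set a : ℝ≥0∞ := ENNReal.ofReal (Real.exp (-(k : ℝ))) with ha
  set f : Ω → ℝ≥0∞ := fun ω => ENNReal.ofReal (Real.exp (t * (∑ i, X i) ω)) with hf
  have hsummeas : Measurable (∑ i, X i) := by
    have hrw : (∑ i, X i) = fun ω => ∑ i, X i ω := by
      ext ω; simp [Finset.sum_apply]
    rw [hrw]
    exact Finset.measurable_sum Finset.univ (fun i _ => hXmeas i)
  have hfmeas : Measurable f := ((hsummeas.const_mul t).exp).ennreal_ofReal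
  -- inclusion of events
  have hsub : {ω | Real.sqrt (∑ i, ξ i ω ^ 2) ≤ ε * Real.sqrt k} ⊆ {ω | a ≤ f ω} := by
    intro ω hω
    simp only [Set.mem_setOf_eq] at hω ⊢
    have hsum_nn : (0:ℝ) ≤ ∑ i, ξ i ω ^ 2 :=
      Finset.sum_nonneg (fun i _ => sq_nonneg _)
    have h1 : ∑ i, ξ i ω ^ 2 ≤ ε ^ 2 * k := by
      have h2 : Real.sqrt (∑ i, ξ i ω ^ 2) ^ 2 ≤ (ε * Real.sqrt k) ^ 2 := by
        apply pow_le_pow_left₀ (Real.sqrt_nonneg _) hω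
      rw [Real.sq_sqrt hsum_nn] at h2
      rw [mul_pow, Real.sq_sqrt (Nat.cast_nonneg k)] at h2
      exact h2
    have hsumapp : (∑ i, X i) ω = ∑ i, ξ i ω ^ 2 := by
      rw [Finset.sum_apply]
    have h3 : -(k:ℝ) ≤ t * (∑ i, X i) ω := by
      rw [hsumapp, ht]
      have hε2 : (0:ℝ) < ε ^ 2 := by positivity
      have hkey : (1 / ε ^ 2) * (∑ i, ξ i ω ^ 2) ≤ (k:ℝ) := by
        rw [div_mul_eq_mul_div, one_mul, div_le_iff₀ hε2]
        linarith
      nlinarith [hkey]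
    exact ENNReal.ofReal_le_ofReal (Real.exp_le_exp.2 h3)
  have hmarkov : a * μ {ω | Real.sqrt (∑ i, ξ i ω ^ 2) ≤ ε * Real.sqrt k}
      ≤ ∫⁻ ω, f ω ∂μ :=
    le_trans (mul_le_mul_right (measure_mono hsub) a)
      (mul_meas_ge_le_lintegral₀ hfmeas.aemeasurable a)
  have heq : ∫⁻ ω, f ω ∂μ = ENNReal.ofReal (mgf (∑ i, X i) μ t) :=
    (ofReal_integral_eq_lintegral_ofReal hIntSum
      (ae_of_all _ fun ω => (Real.exp_pos _).le)).symm
  have hprod : mgf (∑ i, X i) μ t = ∏ i, mgf (X i) μ t :=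
    hXindep.mgf_sum hXmeas Finset.univ
  have hcoord : ∀ i, mgf (X i) μ t ≤ 8 * (c₀ * ε) := by
    intro i
    have hmgf_eq : ENNReal.ofReal (mgf (X i) μ t)
        = ∫⁻ ω, ENNReal.ofReal (Real.exp (-(ξ i ω ^ 2) / ε ^ 2)) ∂μ := by
      rw [show mgf (X i) μ t = ∫ ω, Real.exp (t * X i ω) ∂μ from rfl]
      rw [ofReal_integral_eq_lintegral_ofReal (hint i)
        (ae_of_all _ fun ω => (Real.exp_pos _).le)]
      congr 1; ext ω; congr 1; rw [ht, hX]; ring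
    have hb := smallBall_coord_bound μ (ξ i) (hmeas i) hc₀ (hsb i) hε
    rw [← hmgf_eq] at hb
    exact (ENNReal.ofReal_le_ofReal_iff (by positivity)).1 hb
  have hprodle : ∏ i, mgf (X i) μ t ≤ (8 * (c₀ * ε)) ^ k := by
    calc ∏ i, mgf (X i) μ t ≤ ∏ _i : Fin k, (8 * (c₀ * ε)) :=
          Finset.prod_le_prod (fun i _ => mgf_nonneg) (fun i _ => hcoord i)
      _ = (8 * (c₀ * ε)) ^ k := by
          rw [Finset.prod_const, Finset.card_univ, Fintype.card_fin]
  have ha0 : a ≠ 0 := by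
    rw [ha]; simp [Real.exp_pos]
  have hatop : a ≠ ⊤ := ENNReal.ofReal_ne_top
  calc μ {ω | Real.sqrt (∑ i, ξ i ω ^ 2) ≤ ε * Real.sqrt k}
      = a⁻¹ * (a * μ {ω | Real.sqrt (∑ i, ξ i ω ^ 2) ≤ ε * Real.sqrt k}) := by
        rw [← mul_assoc, ENNReal.inv_mul_cancel ha0 hatop, one_mul]
    _ ≤ a⁻¹ * ENNReal.ofReal ((8 * (c₀ * ε)) ^ k) := by
        apply mul_le_mul_right
        refine hmarkov.trans ?_
        rw [heq, hprod]
        exact ENNReal.ofReal_le_ofReal hprodle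
    _ = ENNReal.ofReal (Real.exp k) * ENNReal.ofReal ((8 * (c₀ * ε)) ^ k) := by
        rw [ha, ← ENNReal.ofReal_inv_of_pos (Real.exp_pos _), Real.exp_neg, inv_inv]
    _ = ENNReal.ofReal ((8 * Real.exp 1 * c₀ * ε) ^ k) := by
        rw [← ENNReal.ofReal_mul (Real.exp_pos _).le]
        congr 1
        rw [← Real.exp_one_pow, ← mul_pow]
        congr 1
        ring
end

section
/- Let P = (p₁,…,p_{n-1}) be a system of homogeneous polynomials in n variables with max degree d, and define ‖P‖_∞ := sup_{x ∈ S^{n-1}} (Σ_i p_i(x)²)^{1/2} and ‖D^{(1)}P‖_∞ := sup_{x,u ∈ S^{n-1}} ‖DP(x)(u)‖₂. Then ‖D^{(1)}P‖_∞ ≤ d²·‖P‖_∞. -/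
open MvPolynomial

/-- `‖P(x)‖₂` for a polynomial system `P`. -/
noncomputable def pNorm {n m : ℕ} (P : Fin m → MvPolynomial (Fin n) ℝ)
    (x : Fin n → ℝ) : ℝ :=
  Real.sqrt (∑ i, (MvPolynomial.eval x (P i)) ^ 2)

/-- `‖P‖_∞ = sup_{x ∈ Sⁿ⁻¹} ‖P(x)‖₂`. -/
noncomputable def pSupNorm {n m : ℕ} (P : Fin m → MvPolynomial (Fin n) ℝ) : ℝ :=
  sSup {r : ℝ | ∃ x : Fin n → ℝ, (∑ j, x j ^ 2) = 1 ∧ r = pNorm P x}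

/-- `‖DP(x)(u)‖₂`, the norm of the Jacobian of `P` at `x` applied to `u`. -/
noncomputable def jacNorm {n m : ℕ} (P : Fin m → MvPolynomial (Fin n) ℝ)
    (x u : Fin n → ℝ) : ℝ :=
  Real.sqrt (∑ i,
    (∑ j, u j * MvPolynomial.eval x (MvPolynomial.pderiv j (P i))) ^ 2)

/-- `‖D⁽¹⁾P‖_∞ = sup_{x,u ∈ Sⁿ⁻¹} ‖DP(x)(u)‖₂`. -/
noncomputable def jacSupNorm {n m : ℕ}
    (P : Fin m → MvPolynomial (Fin n) ℝ) : ℝ :=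
  sSup {r : ℝ | ∃ x u : Fin n → ℝ,
    (∑ j, x j ^ 2) = 1 ∧ (∑ j, u j ^ 2) = 1 ∧ r = jacNorm P x u}


section Infra

lemma degree_eq_sum_univ {n : ℕ} (γ : Fin n →₀ ℕ) : γ.degree = ∑ t, γ t := by
  rw [Finsupp.degree]
  exact Finset.sum_subset (Finset.subset_univ _)
    (fun t _ ht => Finsupp.notMem_support_iff.mp ht)

lemma isHom_degree {n k : ℕ} {p : MvPolynomial (Fin n) ℝ} (hp : p.IsHomogeneous k)
    {γ : Fin n →₀ ℕ} (hγ : γ ∈ p.support) : γ.degree = k := by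
  rw [Finsupp.degree_eq_weight_one]
  exact hp (MvPolynomial.mem_support_iff.mp hγ)

lemma euler_monomial {n : ℕ} (γ : Fin n →₀ ℕ) (a : ℝ) (x : Fin n → ℝ) :
    ∑ j, x j * eval x (pderiv j (monomial γ a)) = (γ.degree : ℝ) * eval x (monomial γ a) := by
  have key : ∀ j : Fin n, x j * eval x (pderiv j (monomial γ a))
      = (γ j : ℝ) * eval x (monomial γ a) := by
    intro j
    rw [pderiv_monomial]
    rcases Nat.eq_zero_or_pos (γ j) with h | h
    · simp [h]
    · have hle : Finsupp.single j 1 ≤ γ := by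
        rw [Finsupp.single_le_iff]; exact h
      have hX : (X j : MvPolynomial (Fin n) ℝ) * monomial (γ - Finsupp.single j 1) (a * γ j)
          = monomial γ (a * γ j) := by
        rw [← pow_one (X j : MvPolynomial (Fin n) ℝ), ← monomial_single_add,
          add_tsub_cancel_of_le hle]
      calc x j * eval x (monomial (γ - Finsupp.single j 1) (a * γ j))
          = eval x ((X j : MvPolynomial (Fin n) ℝ) * monomial (γ - Finsupp.single j 1) (a * γ j)) := by
            rw [eval_mul, eval_X]
        _ = eval x (monomial γ (a * γ j)) := by rw [hX]
        _ = (γ j : ℝ) * eval x (monomial γ a) := by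
            rw [eval_monomial, eval_monomial]; ring
  rw [Finset.sum_congr rfl (fun j _ => key j), ← Finset.sum_mul, degree_eq_sum_univ]
  push_cast
  ring

lemma euler_eval {n k : ℕ} {p : MvPolynomial (Fin n) ℝ} (hp : p.IsHomogeneous k)
    (x : Fin n → ℝ) :
    ∑ j, x j * eval x (pderiv j p) = (k : ℝ) * eval x p := by
  conv_lhs => rw [as_sum p]
  conv_rhs => rw [as_sum p]
  rw [map_sum, Finset.mul_sum]
  have : ∀ j : Fin n, x j * eval x (pderiv j (∑ γ ∈ p.support, monomial γ (coeff γ p)))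
      = ∑ γ ∈ p.support, x j * eval x (pderiv j (monomial γ (coeff γ p))) := by
    intro j; rw [map_sum, map_sum, Finset.mul_sum]
  rw [Finset.sum_congr rfl (fun j _ => this j), Finset.sum_comm]
  refine Finset.sum_congr rfl (fun γ hγ => ?_)
  rw [euler_monomial, isHom_degree hp hγ]

lemma pderiv_isHomogeneous {n k : ℕ} {p : MvPolynomial (Fin n) ℝ}
    (hp : p.IsHomogeneous k) (j : Fin n) : (pderiv j p).IsHomogeneous (k - 1) := by
  conv_lhs => rw [as_sum p]
  rw [map_sum]
  apply MvPolynomial.IsHomogeneous.sum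
  intro γ hγ
  rw [pderiv_monomial]
  rcases Nat.eq_zero_or_pos (γ j) with h | h
  · rw [h]; simp only [Nat.cast_zero, mul_zero, monomial_zero]
    exact isHomogeneous_zero _ _ _
  · apply isHomogeneous_monomial
    have hdeg : γ.degree = k := isHom_degree hp hγ
    rw [degree_eq_sum_univ] at hdeg
    rw [degree_eq_sum_univ]
    have happ : ∀ t, (γ - Finsupp.single j 1 : Fin n →₀ ℕ) t = γ t - Finsupp.single j 1 t :=
      Finsupp.tsub_apply γ (Finsupp.single j 1)
    rw [Finset.sum_congr rfl (fun t _ => happ t),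
      Finset.sum_tsub_distrib _ (fun t _ => ?_), hdeg]
    · congr 1
      rw [Finset.sum_congr rfl (fun t _ => Finsupp.single_apply),
        Finset.sum_ite_eq Finset.univ j (fun _ => 1), if_pos (Finset.mem_univ j)]
    · rw [Finsupp.single_apply]
      split
      · next heq => rw [← heq]; omega
      · exact Nat.zero_le _

lemma eval_const_of_isHomogeneous_zero {n : ℕ} {p : MvPolynomial (Fin n) ℝ}
    (hp : p.IsHomogeneous 0) (x y : Fin n → ℝ) : eval x p = eval y p := by
  have : p = C (coeff 0 p) := by
    ext γ
    rcases eq_or_ne γ 0 with h | h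
    · simp [h]
    · rw [hp.coeff_eq_zero (by rwa [Ne, Finsupp.degree_eq_zero_iff]), coeff_C,
        if_neg (Ne.symm h)]
  rw [this, eval_C, eval_C]


lemma hasDerivAt_eval_curve {n : ℕ} (p : MvPolynomial (Fin n) ℝ)
    (c : Fin n → ℝ → ℝ) (c' : Fin n → ℝ) (t : ℝ)
    (hc : ∀ j, HasDerivAt (c j) (c' j) t) :
    HasDerivAt (fun θ => eval (fun j => c j θ) p)
      (∑ j, c' j * eval (fun j => c j t) (pderiv j p)) t := by
  induction p using MvPolynomial.induction_on with
  | C a =>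
      simp only [eval_C, pderiv_C, map_zero, mul_zero, Finset.sum_const_zero]
      exact hasDerivAt_const t a
  | add p q hp hq =>
      have := hp.add hq
      simp only [map_add, mul_add, Finset.sum_add_distrib] at *
      exact this
  | mul_X p i hp =>
      have key := hp.mul (hc i)
      have heq : (fun θ => eval (fun j => c j θ) (p * X i))
          = fun θ => eval (fun j => c j θ) p * c i θ := by
        funext θ; rw [eval_mul, eval_X]
      rw [heq]
      refine key.congr_deriv (Eq.symm ?_)
      have : ∀ j : Fin n, c' j * eval (fun j => c j t) (pderiv j (p * X i))
          = c' j * eval (fun j => c j t) (pderiv j p) * c i t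
            + (if i = j then c' j * eval (fun j => c j t) p else 0) := by
        intro j
        rw [pderiv_mul]
        classical
        rw [pderiv_X]
        rcases eq_or_ne i j with h | h
        · subst h; simp [eval_mul]; ring
        · rw [Pi.single_eq_of_ne h, if_neg h]; simp; ring
      rw [Finset.sum_congr rfl (fun j _ => this j), Finset.sum_add_distrib,
        Finset.sum_ite_eq Finset.univ i _, if_pos (Finset.mem_univ i), ← Finset.sum_mul]
      ring


noncomputable def eC (j : ℤ) : ℝ → ℂ := fun θ => Complex.exp ((j : ℂ) * Complex.I * (θ : ℝ))

def TrigPoly (d : ℕ) (f : ℝ → ℂ) : Prop :=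
  ∃ c : ℤ → ℂ, ∀ θ, f θ = ∑ j ∈ Finset.Icc (-(d : ℤ)) d, c j * eC j θ

lemma eC_mul (j l : ℤ) (θ : ℝ) : eC j θ * eC l θ = eC (j + l) θ := by
  unfold eC
  rw [← Complex.exp_add]
  push_cast
  ring_nf

lemma eC_zero (θ : ℝ) : eC 0 θ = 1 := by simp [eC]

lemma trig_const (d : ℕ) (z : ℂ) : TrigPoly d (fun _ => z) := by
  refine ⟨fun j => if j = 0 then z else 0, fun θ => ?_⟩
  rw [Finset.sum_eq_single 0]
  · simp [eC_zero]
  · intro j _ hj; simp [hj]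
  · intro h; exact absurd (by simp : (0:ℤ) ∈ Finset.Icc (-(d:ℤ)) d) h

lemma trig_mono {d d' : ℕ} (h : d ≤ d') {f : ℝ → ℂ} (hf : TrigPoly d f) :
    TrigPoly d' f := by
  obtain ⟨c, hc⟩ := hf
  refine ⟨fun j => if j ∈ Finset.Icc (-(d:ℤ)) d then c j else 0, fun θ => ?_⟩
  rw [hc θ]
  have hsub : Finset.Icc (-(d:ℤ)) d ⊆ Finset.Icc (-(d':ℤ)) d' := by
    apply Finset.Icc_subset_Icc <;> omega
  rw [← Finset.sum_subset hsub (fun r _ hr => by simp [hr])]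
  exact Finset.sum_congr rfl (fun j hj => by simp [hj])

lemma trig_add {d : ℕ} {f g : ℝ → ℂ} (hf : TrigPoly d f) (hg : TrigPoly d g) :
    TrigPoly d (fun θ => f θ + g θ) := by
  obtain ⟨c, hc⟩ := hf; obtain ⟨c', hc'⟩ := hg
  exact ⟨c + c', fun θ => by simp [hc θ, hc' θ, add_mul, Finset.sum_add_distrib]⟩

lemma trig_smul {d : ℕ} (z : ℂ) {f : ℝ → ℂ} (hf : TrigPoly d f) :
    TrigPoly d (fun θ => z * f θ) := by
  obtain ⟨c, hc⟩ := hf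
  refine ⟨fun j => z * c j, fun θ => ?_⟩
  simp only [hc θ, Finset.mul_sum]
  exact Finset.sum_congr rfl (fun j _ => by ring)

lemma trig_sum {ι : Type*} {d : ℕ} (s : Finset ι) (f : ι → ℝ → ℂ)
    (hf : ∀ i ∈ s, TrigPoly d (f i)) : TrigPoly d (fun θ => ∑ i ∈ s, f i θ) := by
  classical
  induction s using Finset.induction_on with
  | empty => simpa using trig_const d 0
  | insert a s hnotmem ih =>
      simp only [Finset.sum_insert hnotmem]
      exact trig_add (hf a (Finset.mem_insert_self a s))
        (ih (fun i hi => hf i (Finset.mem_insert_of_mem hi)))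

lemma trig_mul {a b : ℕ} {f g : ℝ → ℂ} (hf : TrigPoly a f) (hg : TrigPoly b g) :
    TrigPoly (a + b) (fun θ => f θ * g θ) := by
  obtain ⟨c, hc⟩ := hf; obtain ⟨c', hc'⟩ := hg
  refine ⟨fun r => ∑ j ∈ Finset.Icc (-(a:ℤ)) a,
      c j * (if r - j ∈ Finset.Icc (-(b:ℤ)) b then c' (r - j) else 0), fun θ => ?_⟩
  have key : ∀ j ∈ Finset.Icc (-(a:ℤ)) a,
      ∑ r ∈ Finset.Icc (-((a:ℤ)+b)) ((a:ℤ)+b),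
        (if r - j ∈ Finset.Icc (-(b:ℤ)) b then c' (r - j) else 0) * eC r θ
      = ∑ l ∈ Finset.Icc (-(b:ℤ)) b, c' l * eC (j + l) θ := by
    intro j hj
    rw [Finset.mem_Icc] at hj
    have himg : (Finset.Icc (-(b:ℤ)) b).map (addLeftEmbedding j)
        ⊆ Finset.Icc (-((a:ℤ)+b)) ((a:ℤ)+b) := by
      intro r hr
      rw [Finset.mem_map] at hr
      obtain ⟨l, hl, rfl⟩ := hr
      rw [Finset.mem_Icc] at hl
      simp only [addLeftEmbedding_apply, Finset.mem_Icc]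
      omega
    rw [← Finset.sum_subset himg (fun r _ hr => ?_)]
    · rw [Finset.sum_map]
      refine Finset.sum_congr rfl (fun l hl => ?_)
      have h2 : addLeftEmbedding j l - j = l := by simp
      rw [h2, if_pos hl, addLeftEmbedding_apply]
    · have : r - j ∉ Finset.Icc (-(b:ℤ)) b := by
        intro hmem
        exact hr (Finset.mem_map.mpr ⟨r - j, hmem, by simp⟩)
      rw [if_neg this, zero_mul]
  calc f θ * g θ = ∑ j ∈ Finset.Icc (-(a:ℤ)) a,
        c j * ∑ l ∈ Finset.Icc (-(b:ℤ)) b, c' l * eC (j+l) θ := by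
        rw [hc θ, hc' θ, Finset.sum_mul]
        refine Finset.sum_congr rfl (fun j hj => ?_)
        rw [Finset.mul_sum, Finset.mul_sum]
        refine Finset.sum_congr rfl (fun l hl => ?_)
        rw [← eC_mul]; ring
    _ = _ := by
        rw [Finset.sum_congr rfl (fun j hj => by rw [← key j hj, Finset.mul_sum])]
        rw [Finset.sum_comm]
        refine Finset.sum_congr rfl (fun r hr => ?_)
        rw [Finset.sum_mul]
        exact Finset.sum_congr rfl (fun j hj => by ring)

lemma trig_pow {f : ℝ → ℂ} (hf : TrigPoly 1 f) (k : ℕ) :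
    TrigPoly k (fun θ => f θ ^ k) := by
  induction k with
  | zero => simpa using trig_const 0 1
  | succ k ih =>
      have := trig_mul ih hf
      simpa [pow_succ] using this

lemma trig_prod {ι : Type*} (s : Finset ι) (e : ι → ℕ) (f : ι → ℝ → ℂ)
    (hf : ∀ i ∈ s, TrigPoly (e i) (f i)) :
    TrigPoly (∑ i ∈ s, e i) (fun θ => ∏ i ∈ s, f i θ) := by
  classical
  induction s using Finset.induction_on with
  | empty => simpa using trig_const 0 1
  | insert a s hnotmem ih =>
      simp only [Finset.prod_insert hnotmem, Finset.sum_insert hnotmem]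
      exact trig_mul (hf a (Finset.mem_insert_self a s))
        (ih (fun i hi => hf i (Finset.mem_insert_of_mem hi)))



-- node k out of N
noncomputable def nodeθ (N k : ℕ) : ℝ := 2 * Real.pi * k / N

lemma sum_eC_node (N : ℕ) (hN : 0 < N) (m : ℤ) :
    ∑ k ∈ Finset.range N, eC m (nodeθ N k)
      = if (N:ℤ) ∣ m then (N:ℂ) else 0 := by
  have hterm : ∀ k ∈ Finset.range N,
      eC m (nodeθ N k) = Complex.exp ((m:ℂ) / N * (2 * Real.pi * Complex.I)) ^ k := by
    intro k _
    rw [← Complex.exp_nat_mul]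
    unfold eC nodeθ
    congr 1
    push_cast
    have hNne : (N:ℂ) ≠ 0 := Nat.cast_ne_zero.mpr hN.ne'
    field_simp
  rw [Finset.sum_congr rfl hterm]
  have hNne : (N:ℂ) ≠ 0 := Nat.cast_ne_zero.mpr hN.ne'
  by_cases hdvd : (N:ℤ) ∣ m
  · obtain ⟨q, hq⟩ := hdvd
    have hr : Complex.exp ((m:ℂ) / N * (2 * Real.pi * Complex.I)) = 1 := by
      have : (m:ℂ) / N = (q:ℂ) := by
        rw [hq]; push_cast; field_simp
      rw [this]
      exact_mod_cast Complex.exp_int_mul_two_pi_mul_I q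
    rw [if_pos ⟨q, hq⟩]
    simp [hr]
  · have hr : Complex.exp ((m:ℂ) / N * (2 * Real.pi * Complex.I)) ≠ 1 := by
      rw [Ne, Complex.exp_eq_one_iff]
      rintro ⟨q, hq⟩
      have h2 : (2 * (Real.pi:ℂ) * Complex.I) ≠ 0 := by
        simp [Real.pi_ne_zero, Complex.I_ne_zero]
      have h3 : (m:ℂ) / N = (q:ℂ) := mul_right_cancel₀ h2 hq
      have hm : (m:ℂ) = q * N := by
        field_simp at h3
        linear_combination h3
      have : m = q * N := by exact_mod_cast hm
      exact hdvd ⟨q, by rw [this]; ring⟩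
    rw [geom_sum_eq hr, if_neg hdvd]
    have : Complex.exp ((m:ℂ) / N * (2 * Real.pi * Complex.I)) ^ N = 1 := by
      rw [← Complex.exp_nat_mul]
      have hNne : (N:ℂ) ≠ 0 := Nat.cast_ne_zero.mpr hN.ne'
      have harg : (N:ℂ) * ((m:ℂ) / N * (2 * Real.pi * Complex.I))
          = (m:ℂ) * (2 * Real.pi * Complex.I) := by field_simp
      rw [harg]
      exact_mod_cast Complex.exp_int_mul_two_pi_mul_I m
    rw [this, sub_self, zero_div]

noncomputable def wN (d k : ℕ) : ℝ :=
  ∑ l ∈ Finset.Icc 1 d, 2 * l * Real.sin (l * nodeθ (2*d+1) k)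

lemma eC_eq (j : ℤ) (θ : ℝ) : eC j θ = Complex.exp (((j:ℂ) * (θ:ℂ)) * Complex.I) := by
  unfold eC; congr 1; ring

lemma wN_expand (d k : ℕ) : ((wN d k : ℝ) : ℂ)
    = ∑ l ∈ Finset.Icc 1 d, (-Complex.I) * l *
        (eC (l:ℤ) (nodeθ (2*d+1) k) - eC (-(l:ℤ)) (nodeθ (2*d+1) k)) := by
  unfold wN
  push_cast
  refine Finset.sum_congr rfl (fun l hl => ?_)
  rw [Complex.sin, eC_eq, eC_eq]
  push_cast
  ring_nf

lemma dvd_iff_zero (d : ℕ) (m : ℤ) (hm : |m| ≤ 2*d) :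
    (((2*d+1:ℕ):ℤ) ∣ m) ↔ m = 0 := by
  constructor
  · intro hdvd
    by_contra hne
    have := Int.le_of_dvd (abs_pos.mpr hne) ((dvd_abs _ _).mpr hdvd)
    push_cast at this
    omega
  · rintro rfl; exact dvd_zero _

lemma eC_mul' (j l : ℤ) (θ : ℝ) : eC j θ * eC l θ = eC (j + l) θ := by
  unfold eC
  rw [← Complex.exp_add]
  push_cast
  ring_nf

lemma sum_eC_node' (d : ℕ) (m : ℤ) (hm : |m| ≤ 2*d) :
    ∑ k ∈ Finset.range (2*d+1), eC m (nodeθ (2*d+1) k)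
      = if m = 0 then ((2*d+1:ℕ):ℂ) else 0 := by
  rw [sum_eC_node (2*d+1) (by omega) m]
  simp only [dvd_iff_zero d m hm]

lemma key_A (d : ℕ) (j : ℤ) (hj : |j| ≤ d) :
    ∑ k ∈ Finset.range (2*d+1), ((wN d k : ℝ):ℂ) * eC j (nodeθ (2*d+1) k)
      = ((2*d+1:ℕ):ℂ) * ((j:ℂ) * Complex.I) := by
  rw [abs_le] at hj
  set N := 2*d+1 with hN
  have step1 : ∀ k ∈ Finset.range N, ((wN d k : ℝ):ℂ) * eC j (nodeθ N k)
      = ∑ l ∈ Finset.Icc 1 d, ((-Complex.I) * l *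
          (eC ((l:ℤ)+j) (nodeθ N k) - eC (-(l:ℤ)+j) (nodeθ N k))) := by
    intro k _
    rw [wN_expand, Finset.sum_mul]
    refine Finset.sum_congr rfl (fun l hl => ?_)
    rw [mul_assoc, mul_assoc, sub_mul, eC_mul', eC_mul', ← mul_assoc]
  rw [Finset.sum_congr rfl step1, Finset.sum_comm]
  have step2 : ∀ l ∈ Finset.Icc 1 d,
      ∑ k ∈ Finset.range N, ((-Complex.I) * l *
          (eC ((l:ℤ)+j) (nodeθ N k) - eC (-(l:ℤ)+j) (nodeθ N k)))
      = (-Complex.I) * l * ((if (l:ℤ)+j = 0 then ((N:ℕ):ℂ) else 0)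
          - (if (l:ℤ) = j then ((N:ℕ):ℂ) else 0)) := by
    intro l hl
    rw [Finset.mem_Icc] at hl
    rw [← Finset.mul_sum, Finset.sum_sub_distrib,
      sum_eC_node' d _ (by rw [abs_le]; omega), sum_eC_node' d _ (by rw [abs_le]; omega)]
    congr 2
    by_cases h : (l:ℤ) = j
    · rw [if_pos h, if_pos (by omega)]
    · rw [if_neg h, if_neg (by omega)]
  rw [Finset.sum_congr rfl step2]
  rcases lt_trichotomy j 0 with hj0 | hj0 | hj0
  · -- j < 0 : only l = -j contributes, in first ite
    set l₀ := (-j).toNat with hl₀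
    have hcast : ((l₀:ℕ):ℤ) = -j := Int.toNat_of_nonneg (by omega)
    rw [Finset.sum_eq_single l₀]
    · rw [if_pos (by omega), if_neg (by omega)]
      have hc : ((l₀:ℕ):ℂ) = -(j:ℂ) := by exact_mod_cast congrArg (Int.cast : ℤ → ℂ) hcast
      rw [hc]
      push_cast
      ring
    · intro l hl hne
      rw [Finset.mem_Icc] at hl
      rw [if_neg (by omega), if_neg (by omega), sub_self, mul_zero]
    · intro hnot
      exact absurd (Finset.mem_Icc.mpr (by omega)) hnot
  · subst hj0
    rw [Finset.sum_eq_zero]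
    · simp
    · intro l hl
      rw [Finset.mem_Icc] at hl
      rw [if_neg (by omega), if_neg (by omega), sub_self, mul_zero]
  · -- j > 0 : only l = j contributes, in second ite
    set l₀ := j.toNat with hl₀
    have hcast : ((l₀:ℕ):ℤ) = j := Int.toNat_of_nonneg (by omega)
    rw [Finset.sum_eq_single l₀]
    · rw [if_neg (by omega), if_pos (by omega)]
      have hc : ((l₀:ℕ):ℂ) = (j:ℂ) := by exact_mod_cast congrArg (Int.cast : ℤ → ℂ) hcast
      rw [hc]
      push_cast
      ring
    · intro l hl hne
      rw [Finset.mem_Icc] at hl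
      rw [if_neg (by omega), if_neg (by omega), sub_self, mul_zero]
    · intro hnot
      exact absurd (Finset.mem_Icc.mpr (by omega)) hnot

lemma key_B (d : ℕ) :
    ∑ k ∈ Finset.range (2*d+1), (wN d k)^2
      = (2*d+1 : ℝ) * ∑ l ∈ Finset.Icc 1 d, 2 * (l:ℝ)^2 := by
  have hC : ∑ k ∈ Finset.range (2*d+1), ((wN d k : ℝ):ℂ)^2
      = ((2*d+1:ℕ):ℂ) * ∑ l ∈ Finset.Icc 1 d, 2 * (l:ℂ)^2 := by
    set N := 2*d+1 with hN
    have step1 : ∀ k ∈ Finset.range N, ((wN d k : ℝ):ℂ)^2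
        = ∑ l ∈ Finset.Icc 1 d, ∑ m ∈ Finset.Icc 1 d,
            (-(l:ℂ) * m) * (eC ((l:ℤ)+m) (nodeθ N k) - eC ((l:ℤ)-m) (nodeθ N k)
              - eC ((m:ℤ)-l) (nodeθ N k) + eC (-(l:ℤ)-m) (nodeθ N k)) := by
      intro k _
      rw [sq, wN_expand, Finset.sum_mul_sum]
      refine Finset.sum_congr rfl (fun l hl => Finset.sum_congr rfl (fun m hm => ?_))
      have e1 : eC (l:ℤ) (nodeθ N k) * eC (m:ℤ) (nodeθ N k) = eC ((l:ℤ)+m) (nodeθ N k) := eC_mul' _ _ _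
      have e2 : eC (l:ℤ) (nodeθ N k) * eC (-(m:ℤ)) (nodeθ N k) = eC ((l:ℤ)-m) (nodeθ N k) := by
        rw [eC_mul']; ring_nf
      have e3 : eC (-(l:ℤ)) (nodeθ N k) * eC (m:ℤ) (nodeθ N k) = eC ((m:ℤ)-l) (nodeθ N k) := by
        rw [eC_mul']; ring_nf
      have e4 : eC (-(l:ℤ)) (nodeθ N k) * eC (-(m:ℤ)) (nodeθ N k) = eC (-(l:ℤ)-m) (nodeθ N k) := by
        rw [eC_mul']; ring_nf
      calc (-Complex.I * l * (eC (l:ℤ) (nodeθ N k) - eC (-(l:ℤ)) (nodeθ N k)))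
            * (-Complex.I * m * (eC (m:ℤ) (nodeθ N k) - eC (-(m:ℤ)) (nodeθ N k)))
          = (Complex.I * Complex.I) * ((l:ℂ) * m) *
              (eC (l:ℤ) (nodeθ N k) * eC (m:ℤ) (nodeθ N k)
               - eC (l:ℤ) (nodeθ N k) * eC (-(m:ℤ)) (nodeθ N k)
               - eC (-(l:ℤ)) (nodeθ N k) * eC (m:ℤ) (nodeθ N k)
               + eC (-(l:ℤ)) (nodeθ N k) * eC (-(m:ℤ)) (nodeθ N k)) := by ring
        _ = _ := by
            rw [Complex.I_mul_I, e1, e2, e3, e4]; ring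
    rw [Finset.sum_congr rfl step1, Finset.sum_comm]
    have step2 : ∀ l ∈ Finset.Icc 1 d,
        ∑ k ∈ Finset.range N, ∑ m ∈ Finset.Icc 1 d,
            (-(l:ℂ) * m) * (eC ((l:ℤ)+m) (nodeθ N k) - eC ((l:ℤ)-m) (nodeθ N k)
              - eC ((m:ℤ)-l) (nodeθ N k) + eC (-(l:ℤ)-m) (nodeθ N k))
        = ((N:ℕ):ℂ) * (2 * (l:ℂ)^2) := by
      intro l hl
      rw [Finset.mem_Icc] at hl
      rw [Finset.sum_comm]
      have inner : ∀ m ∈ Finset.Icc 1 d,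
          ∑ k ∈ Finset.range N, (-(l:ℂ) * m) * (eC ((l:ℤ)+m) (nodeθ N k)
            - eC ((l:ℤ)-m) (nodeθ N k) - eC ((m:ℤ)-l) (nodeθ N k) + eC (-(l:ℤ)-m) (nodeθ N k))
          = if m = l then ((N:ℕ):ℂ) * (2 * (l:ℂ)^2) else 0 := by
        intro m hm
        rw [Finset.mem_Icc] at hm
        rw [← Finset.mul_sum]
        have expand : ∑ k ∈ Finset.range N, (eC ((l:ℤ)+m) (nodeθ N k)
            - eC ((l:ℤ)-m) (nodeθ N k) - eC ((m:ℤ)-l) (nodeθ N k) + eC (-(l:ℤ)-m) (nodeθ N k))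
            = (if ((l:ℤ)+m) = 0 then ((N:ℕ):ℂ) else 0) - (if ((l:ℤ)-m) = 0 then ((N:ℕ):ℂ) else 0)
              - (if ((m:ℤ)-l) = 0 then ((N:ℕ):ℂ) else 0) + (if (-(l:ℤ)-m) = 0 then ((N:ℕ):ℂ) else 0) := by
          rw [Finset.sum_add_distrib, Finset.sum_sub_distrib, Finset.sum_sub_distrib,
            sum_eC_node' d _ (by rw [abs_le]; omega), sum_eC_node' d _ (by rw [abs_le]; omega),
            sum_eC_node' d _ (by rw [abs_le]; omega), sum_eC_node' d _ (by rw [abs_le]; omega)]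
        rw [expand]
        by_cases hml : m = l
        · subst hml
          have c1 : ¬((m:ℤ) + m = 0) := by omega
          have c2 : ((m:ℤ) - m = 0) := by omega
          have c3 : ¬(-(m:ℤ) - m = 0) := by omega
          rw [if_neg c1, if_pos c2, if_neg c3, if_pos rfl]
          push_cast
          ring
        · have c1 : ¬((l:ℤ) + m = 0) := by omega
          have c2 : ¬((l:ℤ) - m = 0) := by omega
          have c3 : ¬((m:ℤ) - l = 0) := by omega
          have c4 : ¬(-(l:ℤ) - m = 0) := by omega
          rw [if_neg c1, if_neg c2, if_neg c3, if_neg c4, if_neg hml]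
          ring
      rw [Finset.sum_congr rfl inner, Finset.sum_ite_eq' _ l _, if_pos (Finset.mem_Icc.mpr hl)]
    rw [Finset.sum_congr rfl step2, ← Finset.mul_sum]
  exact_mod_cast hC

lemma trig_factor (a b : ℝ) :
    TrigPoly 1 (fun θ => ((Real.cos θ * a + Real.sin θ * b : ℝ) : ℂ)) := by
  refine ⟨fun j => if j = 1 then ((a:ℂ) - b * Complex.I)/2
    else if j = -1 then ((a:ℂ) + b * Complex.I)/2 else 0, fun θ => ?_⟩
  have hIcc : Finset.Icc (-((1:ℕ):ℤ)) ((1:ℕ):ℤ) = {-1, 0, 1} := rfl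
  rw [hIcc, Finset.sum_insert (by decide), Finset.sum_insert (by decide), Finset.sum_singleton]
  beta_reduce
  push_cast
  rw [Complex.cos, Complex.sin]
  simp only [eC]
  norm_num
  ring_nf

lemma eC_hasDerivAt (j : ℤ) : HasDerivAt (eC j) ((j:ℂ) * Complex.I) 0 := by
  have h1 : HasDerivAt (fun θ : ℝ => (θ : ℂ)) 1 0 := by
    simpa using (hasDerivAt_id (0:ℝ)).ofReal_comp
  have h2 : HasDerivAt (fun θ : ℝ => ((j:ℂ) * Complex.I) * (θ:ℂ))
      ((j:ℂ) * Complex.I * 1) 0 := h1.const_mul _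
  have h3 := h2.cexp
  show HasDerivAt (fun θ : ℝ => Complex.exp ((j:ℂ) * Complex.I * (θ:ℂ))) _ 0
  simpa using h3

lemma trig_hasDerivAt (d : ℕ) (c : ℤ → ℂ) :
    HasDerivAt (fun θ : ℝ => ∑ j ∈ Finset.Icc (-(d:ℤ)) d, c j * eC j θ)
      (∑ j ∈ Finset.Icc (-(d:ℤ)) d, c j * ((j:ℂ) * Complex.I)) 0 := by
  apply HasDerivAt.fun_sum
  intro j _
  exact (eC_hasDerivAt j).const_mul (c j)


lemma trig_eval_curve {n d : ℕ} (x v : Fin n → ℝ) (p : MvPolynomial (Fin n) ℝ)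
    (hp : ∀ γ ∈ p.support, γ.degree ≤ d) :
    TrigPoly d (fun θ => ((eval (fun j => Real.cos θ * x j + Real.sin θ * v j) p : ℝ) : ℂ)) := by
  have hfun : (fun θ : ℝ => ((eval (fun j => Real.cos θ * x j + Real.sin θ * v j) p : ℝ) : ℂ))
      = fun θ : ℝ => ∑ γ ∈ p.support, ((coeff γ p : ℝ):ℂ) *
          ∏ t : Fin n, ((Real.cos θ * x t + Real.sin θ * v t : ℝ):ℂ) ^ (γ t) := by
    funext θ
    rw [eval_eq]
    push_cast
    refine Finset.sum_congr rfl (fun γ hγ => ?_)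
    congr 1
    exact Finset.prod_subset (Finset.subset_univ _)
      (fun t _ ht => by rw [Finsupp.notMem_support_iff.mp ht, pow_zero])
  rw [hfun]
  apply trig_sum
  intro γ hγ
  apply trig_smul
  have := trig_prod (Finset.univ : Finset (Fin n)) (fun t => γ t)
    (fun t => fun θ => ((Real.cos θ * x t + Real.sin θ * v t : ℝ):ℂ) ^ (γ t))
    (fun t _ => trig_pow (trig_factor (x t) (v t)) (γ t))
  rw [← degree_eq_sum_univ] at this
  exact trig_mono (hp γ hγ) this
lemma tangential_bound {n m d : ℕ} (P : Fin m → MvPolynomial (Fin n) ℝ) (D : Fin m → ℕ)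
    (hdeg : ∀ i, (P i).IsHomogeneous (D i)) (hD : ∀ i, D i ≤ d)
    (c : Fin m → ℝ) (hc : ∑ i, c i ^ 2 ≤ 1)
    (x v : Fin n → ℝ) (hx : ∑ j, x j ^ 2 = 1) (hv : ∑ j, v j ^ 2 = 1)
    (hxv : ∑ j, x j * v j = 0)
    (S : ℝ) (hS : ∀ y : Fin n → ℝ, (∑ j, y j ^ 2) = 1 →
      Real.sqrt (∑ i, (eval y (P i)) ^ 2) ≤ S) :
    |∑ i, c i * (∑ j, v j * eval x (pderiv j (P i)))|
      ≤ Real.sqrt (∑ l ∈ Finset.Icc 1 d, 2 * (l:ℝ)^2) * S := by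
  set N : ℕ := 2*d+1 with hNdef
  set G : ℝ → ℝ := fun θ => ∑ i, c i * eval (fun j => Real.cos θ * x j + Real.sin θ * v j) (P i)
    with hGdef
  set Tv : ℝ := ∑ i, c i * (∑ j, v j * eval x (pderiv j (P i))) with hTv
  -- the curve stays on the sphere
  have hsphere : ∀ θ : ℝ, ∑ j, (Real.cos θ * x j + Real.sin θ * v j) ^ 2 = 1 := by
    intro θ
    have hterm : ∀ j : Fin n, (Real.cos θ * x j + Real.sin θ * v j) ^ 2
        = Real.cos θ ^ 2 * x j ^ 2 + (2 * Real.cos θ * Real.sin θ) * (x j * v j)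
          + Real.sin θ ^ 2 * v j ^ 2 := fun j => by ring
    rw [Finset.sum_congr rfl (fun j _ => hterm j), Finset.sum_add_distrib,
      Finset.sum_add_distrib, ← Finset.mul_sum, ← Finset.mul_sum, ← Finset.mul_sum,
      hx, hv, hxv]
    linear_combination Real.sin_sq_add_cos_sq θ
  -- |G θ| ≤ S
  have hGbound : ∀ θ : ℝ, |G θ| ≤ S := by
    intro θ
    set y : Fin n → ℝ := fun j => Real.cos θ * x j + Real.sin θ * v j with hy
    have hcs : (∑ i, c i * eval y (P i)) ^ 2 ≤ ∑ i, (eval y (P i)) ^ 2 := by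
      calc (∑ i, c i * eval y (P i)) ^ 2
          ≤ (∑ i, c i ^ 2) * (∑ i, (eval y (P i)) ^ 2) :=
            Finset.sum_mul_sq_le_sq_mul_sq _ _ _
        _ ≤ 1 * (∑ i, (eval y (P i)) ^ 2) := by
            apply mul_le_mul_of_nonneg_right hc
            positivity
        _ = _ := one_mul _
    have : |G θ| = Real.sqrt ((∑ i, c i * eval y (P i)) ^ 2) := by
      rw [Real.sqrt_sq_eq_abs]
    rw [this]
    exact le_trans (Real.sqrt_le_sqrt hcs) (hS y (hsphere θ))
  have hS0 : 0 ≤ S := le_trans (Real.sqrt_nonneg _) (hS x hx)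
  -- derivative of G at 0 is Tv
  have hcurve0 : (fun j : Fin n => Real.cos 0 * x j + Real.sin 0 * v j) = x := by
    funext j; simp
  have hGderiv : HasDerivAt G Tv 0 := by
    rw [hGdef, hTv]
    apply HasDerivAt.fun_sum
    intro i _
    have hcj : ∀ j : Fin n, HasDerivAt (fun θ => Real.cos θ * x j + Real.sin θ * v j) (v j) 0 := by
      intro j
      have := ((Real.hasDerivAt_cos 0).mul_const (x j)).add ((Real.hasDerivAt_sin 0).mul_const (v j))
      exact this.congr_deriv (by simp)
    have := hasDerivAt_eval_curve (P i) (fun j θ => Real.cos θ * x j + Real.sin θ * v j)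
      v 0 hcj
    rw [hcurve0] at this
    exact this.const_mul (c i)
  -- G as a complex trigonometric polynomial of degree ≤ d
  have hGtrig : TrigPoly d (fun θ => ((G θ : ℝ) : ℂ)) := by
    have : (fun θ => ((G θ : ℝ) : ℂ)) = fun θ => ∑ i, ((c i : ℝ) : ℂ) *
        ((eval (fun j => Real.cos θ * x j + Real.sin θ * v j) (P i) : ℝ) : ℂ) := by
      funext θ
      rw [hGdef]
      push_cast
      rfl
    rw [this]
    apply trig_sum
    intro i _
    apply trig_smul
    apply trig_eval_curve
    intro γ hγ
    rw [isHom_degree (hdeg i) hγ]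
    exact hD i
  obtain ⟨cc, hcc⟩ := hGtrig
  -- identify Tv with the coefficients
  have hTveq : (Tv : ℂ) = ∑ j ∈ Finset.Icc (-(d:ℤ)) d, cc j * ((j:ℂ) * Complex.I) := by
    have h1 : HasDerivAt (fun θ => ((G θ : ℝ) : ℂ)) ((Tv : ℝ) : ℂ) 0 := hGderiv.ofReal_comp
    have h2 : (fun θ : ℝ => ((G θ : ℝ) : ℂ))
        = fun θ => ∑ j ∈ Finset.Icc (-(d:ℤ)) d, cc j * eC j θ := funext hcc
    rw [h2] at h1
    exact h1.unique (trig_hasDerivAt d cc)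
  -- the sampling identity : N * Tv = ∑ₖ w k * G (θ k)
  have hsample : ((N:ℕ):ℝ) * Tv = ∑ k ∈ Finset.range N, wN d k * G (nodeθ N k) := by
    have hCeq : ∑ k ∈ Finset.range N, ((wN d k : ℝ):ℂ) * ((G (nodeθ N k) : ℝ) : ℂ)
        = ((N:ℕ):ℂ) * ((Tv : ℝ) : ℂ) := by
      calc ∑ k ∈ Finset.range N, ((wN d k : ℝ):ℂ) * ((G (nodeθ N k) : ℝ) : ℂ)
          = ∑ k ∈ Finset.range N, ∑ j ∈ Finset.Icc (-(d:ℤ)) d,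
              cc j * (((wN d k : ℝ):ℂ) * eC j (nodeθ N k)) := by
            refine Finset.sum_congr rfl (fun k _ => ?_)
            rw [show ((G (nodeθ N k) : ℝ) : ℂ) = ∑ j ∈ Finset.Icc (-(d:ℤ)) d, cc j * eC j (nodeθ N k) from hcc _, Finset.mul_sum]
            exact Finset.sum_congr rfl (fun j _ => by ring)
        _ = ∑ j ∈ Finset.Icc (-(d:ℤ)) d,
              cc j * ∑ k ∈ Finset.range N, (((wN d k : ℝ):ℂ) * eC j (nodeθ N k)) := by
            rw [Finset.sum_comm]
            exact Finset.sum_congr rfl (fun j _ => by rw [Finset.mul_sum])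
        _ = ∑ j ∈ Finset.Icc (-(d:ℤ)) d, cc j * (((N:ℕ):ℂ) * ((j:ℂ) * Complex.I)) := by
            refine Finset.sum_congr rfl (fun j hj => ?_)
            rw [Finset.mem_Icc] at hj
            rw [key_A d j (by rw [abs_le]; exact hj)]
        _ = ((N:ℕ):ℂ) * ∑ j ∈ Finset.Icc (-(d:ℤ)) d, cc j * ((j:ℂ) * Complex.I) := by
            rw [Finset.mul_sum]
            exact Finset.sum_congr rfl (fun j _ => by ring)
        _ = ((N:ℕ):ℂ) * ((Tv : ℝ) : ℂ) := by rw [hTveq]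
    have := hCeq.symm
    exact_mod_cast this
  -- final estimate
  have habs : ((N:ℕ):ℝ) * |Tv| ≤ S * ∑ k ∈ Finset.range N, |wN d k| := by
    have h1 : |((N:ℕ):ℝ) * Tv| ≤ ∑ k ∈ Finset.range N, |wN d k * G (nodeθ N k)| := by
      rw [hsample]
      exact Finset.abs_sum_le_sum_abs _ _
    have h2 : ∀ k ∈ Finset.range N, |wN d k * G (nodeθ N k)| ≤ |wN d k| * S := by
      intro k _
      rw [abs_mul]
      exact mul_le_mul_of_nonneg_left (hGbound _) (abs_nonneg _)
    calc ((N:ℕ):ℝ) * |Tv| = |((N:ℕ):ℝ) * Tv| := by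
          rw [abs_mul, abs_of_nonneg (by positivity : (0:ℝ) ≤ ((N:ℕ):ℝ))]
      _ ≤ ∑ k ∈ Finset.range N, |wN d k * G (nodeθ N k)| := h1
      _ ≤ ∑ k ∈ Finset.range N, |wN d k| * S := Finset.sum_le_sum h2
      _ = S * ∑ k ∈ Finset.range N, |wN d k| := by rw [← Finset.sum_mul]; ring
  have hw : (∑ k ∈ Finset.range N, |wN d k|) ≤ ((N:ℕ):ℝ) *
      Real.sqrt (∑ l ∈ Finset.Icc 1 d, 2 * (l:ℝ)^2) := by
    have hcs : (∑ k ∈ Finset.range N, 1 * |wN d k|) ^ 2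
        ≤ (∑ k ∈ Finset.range N, (1:ℝ)^2) * (∑ k ∈ Finset.range N, |wN d k|^2) :=
      Finset.sum_mul_sq_le_sq_mul_sq _ _ _
    have hsq : ∑ k ∈ Finset.range N, |wN d k|^2 = ∑ k ∈ Finset.range N, (wN d k)^2 := by
      exact Finset.sum_congr rfl (fun k _ => sq_abs _)
    rw [hsq, key_B d] at hcs
    simp only [one_mul, one_pow, Finset.sum_const, Finset.card_range, nsmul_eq_mul, mul_one] at hcs
    have hnonneg : 0 ≤ ∑ k ∈ Finset.range N, |wN d k| :=
      Finset.sum_nonneg (fun k _ => abs_nonneg _)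
    have hNcast : ((N:ℕ):ℝ) = 2*(d:ℝ)+1 := by rw [hNdef]; push_cast; ring
    rw [← hNcast] at hcs
    have hB0 : 0 ≤ ∑ l ∈ Finset.Icc 1 d, 2 * (l:ℝ)^2 := by positivity
    have h1 := Real.sqrt_le_sqrt hcs
    rw [Real.sqrt_sq hnonneg] at h1
    refine le_trans h1 (le_of_eq ?_)
    rw [show ((N:ℕ):ℝ) * (((N:ℕ):ℝ) * ∑ l ∈ Finset.Icc 1 d, 2 * (l:ℝ)^2)
        = (((N:ℕ):ℝ))^2 * ∑ l ∈ Finset.Icc 1 d, 2 * (l:ℝ)^2 by ring,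
      Real.sqrt_mul (sq_nonneg _), Real.sqrt_sq (by positivity : (0:ℝ) ≤ ((N:ℕ):ℝ))]
  -- conclude
  have hNpos : (0:ℝ) < ((N:ℕ):ℝ) := by positivity
  have hfinal : ((N:ℕ):ℝ) * |Tv| ≤ ((N:ℕ):ℝ) *
      (Real.sqrt (∑ l ∈ Finset.Icc 1 d, 2 * (l:ℝ)^2) * S) := by
    refine le_trans habs ?_
    calc S * ∑ k ∈ Finset.range N, |wN d k|
        ≤ S * (((N:ℕ):ℝ) * Real.sqrt (∑ l ∈ Finset.Icc 1 d, 2 * (l:ℝ)^2)) :=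
          mul_le_mul_of_nonneg_left hw hS0
      _ = ((N:ℕ):ℝ) * (Real.sqrt (∑ l ∈ Finset.Icc 1 d, 2 * (l:ℝ)^2) * S) := by ring
  exact le_of_mul_le_mul_left hfinal hNpos
lemma nat_ineq (d : ℕ) (hd : 2 ≤ d) :
    (d:ℝ)^2 + ∑ l ∈ Finset.Icc 1 d, 2 * (l:ℝ)^2 ≤ (d:ℝ)^4 := by
  have key : ∀ e : ℕ, 2 ≤ e → (e^2 + ∑ l ∈ Finset.Icc 1 e, 2 * l^2 ≤ e^4) := by
    intro e he
    induction e with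
    | zero => omega
    | succ e ih =>
        rcases Nat.lt_or_ge e 2 with h2 | h2
        · interval_cases e
          · omega
          · decide
        · have step := ih h2
          rw [Finset.sum_Icc_succ_top (by omega : 1 ≤ e + 1)]
          nlinarith [step, h2]
  have := key d hd
  have hcast : ((d^2 + ∑ l ∈ Finset.Icc 1 d, 2 * l^2 : ℕ) : ℝ) ≤ ((d^4 : ℕ) : ℝ) :=
    Nat.cast_le.mpr this
  push_cast at hcast
  linarith

lemma isHomogeneous_zero_eq_C {n : ℕ} {p : MvPolynomial (Fin n) ℝ}
    (hp : p.IsHomogeneous 0) : p = C (coeff 0 p) := by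
  ext γ
  rcases eq_or_ne γ 0 with h | h
  · simp [h]
  · rw [hp.coeff_eq_zero (by rwa [Ne, Finsupp.degree_eq_zero_iff]), coeff_C,
      if_neg (Ne.symm h)]

lemma radial_bound {n m d : ℕ} (P : Fin m → MvPolynomial (Fin n) ℝ) (D : Fin m → ℕ)
    (hdeg : ∀ i, (P i).IsHomogeneous (D i)) (hD : ∀ i, D i ≤ d)
    (c : Fin m → ℝ) (hc : ∑ i, c i ^ 2 ≤ 1) (y : Fin n → ℝ) :
    |∑ i, c i * (∑ j, y j * eval y (pderiv j (P i)))|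
      ≤ (d:ℝ) * Real.sqrt (∑ i, (eval y (P i))^2) := by
  have heuler : ∀ i, ∑ j, y j * eval y (pderiv j (P i)) = (D i : ℝ) * eval y (P i) :=
    fun i => euler_eval (hdeg i) y
  rw [Finset.sum_congr rfl (fun i _ => by rw [heuler i])]
  have hcs : (∑ i, c i * ((D i : ℝ) * eval y (P i)))^2
      ≤ (∑ i, c i ^ 2) * (∑ i, ((D i : ℝ) * eval y (P i))^2) :=
    Finset.sum_mul_sq_le_sq_mul_sq _ _ _
  have hB : (∑ i, ((D i : ℝ) * eval y (P i))^2) ≤ (d:ℝ)^2 * ∑ i, (eval y (P i))^2 := by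
    rw [Finset.mul_sum]
    refine Finset.sum_le_sum (fun i _ => ?_)
    have h1 : ((D i : ℝ))^2 ≤ (d:ℝ)^2 := by
      have : ((D i : ℕ):ℝ) ≤ (d:ℝ) := Nat.cast_le.mpr (hD i)
      nlinarith [Nat.cast_nonneg (α := ℝ) (D i)]
    calc ((D i : ℝ) * eval y (P i))^2 = ((D i : ℝ))^2 * (eval y (P i))^2 := by ring
      _ ≤ (d:ℝ)^2 * (eval y (P i))^2 := by nlinarith [sq_nonneg (eval y (P i))]
  have h2 : (∑ i, c i * ((D i : ℝ) * eval y (P i)))^2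
      ≤ (d:ℝ)^2 * ∑ i, (eval y (P i))^2 := by
    calc (∑ i, c i * ((D i : ℝ) * eval y (P i)))^2
        ≤ (∑ i, c i ^ 2) * (∑ i, ((D i : ℝ) * eval y (P i))^2) := hcs
      _ ≤ 1 * (∑ i, ((D i : ℝ) * eval y (P i))^2) := by
          apply mul_le_mul_of_nonneg_right hc
          positivity
      _ = ∑ i, ((D i : ℝ) * eval y (P i))^2 := one_mul _
      _ ≤ (d:ℝ)^2 * ∑ i, (eval y (P i))^2 := hB
  have := Real.sqrt_le_sqrt h2
  rw [Real.sqrt_sq_eq_abs] at this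
  refine le_trans this (le_of_eq ?_)
  rw [Real.sqrt_mul (by positivity), Real.sqrt_sq (by positivity)]

lemma scalar_bound {n m d : ℕ} (P : Fin m → MvPolynomial (Fin n) ℝ) (D : Fin m → ℕ)
    (hdeg : ∀ i, (P i).IsHomogeneous (D i)) (hD : ∀ i, D i ≤ d)
    (c : Fin m → ℝ) (hc : ∑ i, c i ^ 2 ≤ 1)
    (x u : Fin n → ℝ) (hx : ∑ j, x j ^ 2 = 1) (hu : ∑ j, u j ^ 2 = 1)
    (S : ℝ) (hS : ∀ y : Fin n → ℝ, (∑ j, y j ^ 2) = 1 →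
      Real.sqrt (∑ i, (eval y (P i)) ^ 2) ≤ S) :
    |∑ i, c i * (∑ j, u j * eval x (pderiv j (P i)))| ≤ (d:ℝ)^2 * S := by
  have hS0 : 0 ≤ S := le_trans (Real.sqrt_nonneg _) (hS x hx)
  rcases Nat.lt_or_ge d 2 with hd2 | hd2
  · -- low degree case : d ≤ 1
    have hkey : ∀ i, ∑ j, u j * eval x (pderiv j (P i)) = (D i : ℝ) * eval u (P i) := by
      intro i
      have hDi := hD i
      rcases Nat.lt_or_ge (D i) 1 with h0 | h1
      · have h0' : D i = 0 := by omega
        have hC := isHomogeneous_zero_eq_C (h0' ▸ hdeg i)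
        rw [h0']
        rw [Finset.sum_eq_zero, Nat.cast_zero, zero_mul]
        intro j _
        rw [hC, pderiv_C, map_zero, mul_zero]
      · have h1' : D i = 1 := by omega
        have hder0 : ∀ j, (pderiv j (P i)).IsHomogeneous 0 := by
          intro j
          have := pderiv_isHomogeneous (hdeg i) j
          rwa [h1'] at this
        have hconst : ∀ j, eval x (pderiv j (P i)) = eval u (pderiv j (P i)) :=
          fun j => eval_const_of_isHomogeneous_zero (hder0 j) x u
        rw [Finset.sum_congr rfl (fun j _ => by rw [hconst j]), euler_eval (hdeg i) u]
    rw [Finset.sum_congr rfl (fun i _ => by rw [hkey i])]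
    have := radial_bound P D hdeg hD c hc u
    rw [Finset.sum_congr rfl (fun i _ => by rw [euler_eval (hdeg i) u])] at this
    refine le_trans this ?_
    have hle : (d:ℝ) * Real.sqrt (∑ i, (eval u (P i))^2) ≤ (d:ℝ) * S :=
      mul_le_mul_of_nonneg_left (hS u hu) (by positivity)
    refine le_trans hle ?_
    have : (d:ℝ) ≤ (d:ℝ)^2 := by interval_cases d <;> norm_num
    nlinarith [hS0]
  · -- main case : d ≥ 2
    set α : ℝ := ∑ j, x j * u j with hα
    set w : Fin n → ℝ := fun j => u j - α * x j with hw
    have hworth : ∑ j, x j * w j = 0 := by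
      rw [hw]
      simp only
      rw [Finset.sum_congr rfl (fun j _ => by ring_nf :
        ∀ j ∈ Finset.univ, x j * (u j - α * x j) = x j * u j - α * (x j)^2)]
      rw [Finset.sum_sub_distrib, ← Finset.mul_sum, hx, mul_one]
      exact sub_self _
    have hwnorm : ∑ j, w j ^ 2 = 1 - α^2 := by
      rw [hw]
      simp only
      rw [Finset.sum_congr rfl (fun j _ => by ring_nf :
        ∀ j ∈ Finset.univ, (u j - α * x j)^2 = u j^2 - 2*α*(x j * u j) + α^2 * x j^2)]
      rw [Finset.sum_add_distrib, Finset.sum_sub_distrib, ← Finset.mul_sum, ← Finset.mul_sum,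
        hx, hu, ← hα]
      ring
    have hα2 : α^2 ≤ 1 := by
      have h0 : 0 ≤ ∑ j, w j ^ 2 := Finset.sum_nonneg (fun j _ => sq_nonneg _)
      linarith [hwnorm ▸ h0]
    -- split the directional derivative
    have huj : ∀ i : Fin m, (∑ j, u j * eval x (pderiv j (P i)))
        = α * (∑ j, x j * eval x (pderiv j (P i)))
          + ∑ j, w j * eval x (pderiv j (P i)) := by
      intro i
      rw [Finset.mul_sum, ← Finset.sum_add_distrib]
      refine Finset.sum_congr rfl (fun j _ => ?_)
      have huw : u j = α * x j + w j := by simp only [hw]; ring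
      rw [huw]; ring
    have hsplit : ∑ i, c i * (∑ j, u j * eval x (pderiv j (P i)))
        = α * (∑ i, c i * (∑ j, x j * eval x (pderiv j (P i))))
          + ∑ i, c i * (∑ j, w j * eval x (pderiv j (P i))) := by
      rw [Finset.sum_congr rfl (fun i _ => by rw [huj i] :
        ∀ i ∈ Finset.univ, c i * (∑ j, u j * eval x (pderiv j (P i)))
          = c i * (α * (∑ j, x j * eval x (pderiv j (P i)))
            + ∑ j, w j * eval x (pderiv j (P i))))]
      rw [Finset.sum_congr rfl (fun i _ => by ring :
        ∀ i ∈ Finset.univ, c i * (α * (∑ j, x j * eval x (pderiv j (P i)))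
            + ∑ j, w j * eval x (pderiv j (P i)))
          = α * (c i * (∑ j, x j * eval x (pderiv j (P i))))
            + c i * (∑ j, w j * eval x (pderiv j (P i))))]
      rw [Finset.sum_add_distrib, ← Finset.mul_sum]
    set Tx : ℝ := ∑ i, c i * (∑ j, x j * eval x (pderiv j (P i))) with hTx
    have hTxb : |Tx| ≤ (d:ℝ) * S := by
      have := radial_bound P D hdeg hD c hc x
      refine le_trans this ?_
      exact mul_le_mul_of_nonneg_left (hS x hx) (by positivity)
    by_cases hwzero : ∑ j, w j ^ 2 = 0
    · -- u = ± x
      have hwj : ∀ j, w j = 0 := by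
        intro j
        have := (Finset.sum_eq_zero_iff_of_nonneg (fun j _ => sq_nonneg (w j))).mp hwzero j
          (Finset.mem_univ j)
        exact pow_eq_zero_iff (by norm_num) |>.mp this
      have hTw : ∑ i, c i * (∑ j, w j * eval x (pderiv j (P i))) = 0 := by
        apply Finset.sum_eq_zero
        intro i _
        rw [Finset.sum_eq_zero (fun j _ => by rw [hwj j, zero_mul]), mul_zero]
      rw [hsplit, hTw, add_zero, abs_mul]
      have hαle : |α| ≤ 1 := by
        rw [← Real.sqrt_one, ← Real.sqrt_sq_eq_abs]
        exact Real.sqrt_le_sqrt hα2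
      calc |α| * |Tx| ≤ 1 * ((d:ℝ) * S) :=
            mul_le_mul hαle hTxb (abs_nonneg _) (by norm_num)
        _ = (d:ℝ) * S := one_mul _
        _ ≤ (d:ℝ)^2 * S := by
            apply mul_le_mul_of_nonneg_right _ hS0
            have h2d : (2:ℝ) ≤ (d:ℝ) := by exact_mod_cast hd2
            nlinarith [h2d, sq_nonneg ((d:ℝ) - 1)]
    · -- genuine tangential part
      have hwpos : 0 < ∑ j, w j ^ 2 :=
        lt_of_le_of_ne (Finset.sum_nonneg (fun j _ => sq_nonneg _)) (Ne.symm hwzero)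
      set β : ℝ := Real.sqrt (∑ j, w j ^ 2) with hβ
      have hβpos : 0 < β := Real.sqrt_pos.mpr hwpos
      set v : Fin n → ℝ := fun j => w j / β with hv
      have hvnorm : ∑ j, v j ^ 2 = 1 := by
        rw [hv]
        simp only
        rw [Finset.sum_congr rfl (fun j _ => div_pow _ _ _), ← Finset.sum_div,
          hβ, Real.sq_sqrt hwpos.le, div_self hwzero]
      have hvorth : ∑ j, x j * v j = 0 := by
        rw [hv]
        simp only
        rw [Finset.sum_congr rfl (fun j _ => by rw [mul_div_assoc] :
          ∀ j ∈ Finset.univ, x j * (w j / β) = x j * w j / β), ← Finset.sum_div, hworth,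
          zero_div]
      have hwv : ∀ j, w j = β * v j := by
        intro j; rw [hv]; field_simp
      set Tv : ℝ := ∑ i, c i * (∑ j, v j * eval x (pderiv j (P i))) with hTvdef
      have hTw : ∑ i, c i * (∑ j, w j * eval x (pderiv j (P i))) = β * Tv := by
        rw [hTvdef, Finset.mul_sum]
        refine Finset.sum_congr rfl (fun i _ => ?_)
        rw [Finset.sum_congr rfl (fun j _ => by rw [hwv j, mul_assoc] :
          ∀ j ∈ Finset.univ, w j * eval x (pderiv j (P i))
            = β * (v j * eval x (pderiv j (P i)))), ← Finset.mul_sum]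
        ring
      have hTvb : |Tv| ≤ Real.sqrt (∑ l ∈ Finset.Icc 1 d, 2 * (l:ℝ)^2) * S :=
        tangential_bound P D hdeg hD c hc x v hx hvnorm hvorth S hS
      -- combine
      rw [hsplit, hTw]
      have hβ2 : β^2 = 1 - α^2 := by rw [hβ, Real.sq_sqrt hwpos.le, hwnorm]
      have hBnn : (0:ℝ) ≤ ∑ l ∈ Finset.Icc 1 d, 2 * (l:ℝ)^2 := by positivity
      have hsq : (α * Tx + β * Tv)^2 ≤ (Tx^2 + Tv^2) := by
        have hcs2 : (α * Tx + β * Tv)^2 ≤ (α^2 + β^2) * (Tx^2 + Tv^2) := by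
          nlinarith [sq_nonneg (α * Tv - β * Tx)]
        have : α^2 + β^2 = 1 := by rw [hβ2]; ring
        rw [this, one_mul] at hcs2
        exact hcs2
      have hTx2 : Tx^2 ≤ ((d:ℝ) * S)^2 := by
        rw [← sq_abs]
        exact pow_le_pow_left₀ (abs_nonneg _) hTxb 2
      have hTv2 : Tv^2 ≤ (∑ l ∈ Finset.Icc 1 d, 2 * (l:ℝ)^2) * S^2 := by
        rw [← sq_abs]
        refine le_trans (pow_le_pow_left₀ (abs_nonneg _) hTvb 2) (le_of_eq ?_)
        rw [mul_pow, Real.sq_sqrt hBnn]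
      have htot : (α * Tx + β * Tv)^2 ≤ ((d:ℝ)^2 * S)^2 := by
        have hkey := nat_ineq d hd2
        calc (α * Tx + β * Tv)^2 ≤ Tx^2 + Tv^2 := hsq
          _ ≤ ((d:ℝ)*S)^2 + (∑ l ∈ Finset.Icc 1 d, 2 * (l:ℝ)^2) * S^2 := add_le_add hTx2 hTv2
          _ = ((d:ℝ)^2 + ∑ l ∈ Finset.Icc 1 d, 2 * (l:ℝ)^2) * S^2 := by ring
          _ ≤ (d:ℝ)^4 * S^2 := mul_le_mul_of_nonneg_right hkey (sq_nonneg S)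
          _ = ((d:ℝ)^2 * S)^2 := by ring
      have := Real.sqrt_le_sqrt htot
      rw [Real.sqrt_sq_eq_abs, Real.sqrt_sq_eq_abs] at this
      refine le_trans this (le_of_eq ?_)
      rw [abs_of_nonneg (by positivity : (0:ℝ) ≤ (d:ℝ)^2 * S)]

lemma pNorm_le_pSupNorm {n m : ℕ} (P : Fin m → MvPolynomial (Fin n) ℝ)
    (y : Fin n → ℝ) (hy : (∑ j, y j ^ 2) = 1) : pNorm P y ≤ pSupNorm P := by
  set A : Set ℝ := {r : ℝ | ∃ x : Fin n → ℝ, (∑ j, x j ^ 2) = 1 ∧ r = pNorm P x} with hA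
  have hmem : pNorm P y ∈ A := ⟨y, hy, rfl⟩
  have hbdd : BddAbove A := by
    have hAimg : A = (pNorm P) '' {x : Fin n → ℝ | (∑ j, x j ^ 2) = 1} := by
      ext r
      simp only [hA, Set.mem_setOf_eq, Set.mem_image]
      constructor
      · rintro ⟨x, hx, rfl⟩; exact ⟨x, hx, rfl⟩
      · rintro ⟨x, hx, rfl⟩; exact ⟨x, hx, rfl⟩
    rw [hAimg]
    have hcont : Continuous (pNorm P) := by
      apply Real.continuous_sqrt.comp
      exact continuous_finset_sum _ (fun i _ => (MvPolynomial.continuous_eval (P i)).pow 2)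
    have hcontsum : Continuous (fun x : Fin n → ℝ => ∑ j, x j ^ 2) :=
      continuous_finset_sum _ (fun j _ => (continuous_apply j).pow 2)
    have hclosed : IsClosed {x : Fin n → ℝ | (∑ j, x j ^ 2) = 1} :=
      isClosed_eq hcontsum continuous_const
    have hbounded : Bornology.IsBounded {x : Fin n → ℝ | (∑ j, x j ^ 2) = 1} := by
      apply Bornology.IsBounded.subset (Metric.isBounded_closedBall (x := (0 : Fin n → ℝ)) (r := 1))
      intro x hx
      simp only [Set.mem_setOf_eq] at hx
      rw [Metric.mem_closedBall, dist_zero_right]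
      rw [pi_norm_le_iff_of_nonneg (by norm_num)]
      intro j
      rw [Real.norm_eq_abs, ← Real.sqrt_one, ← Real.sqrt_sq_eq_abs]
      apply Real.sqrt_le_sqrt
      rw [← hx]
      exact Finset.single_le_sum (f := fun j => x j ^ 2) (fun t _ => sq_nonneg _)
        (Finset.mem_univ j)
    exact ((Metric.isCompact_of_isClosed_isBounded hclosed hbounded).image hcont).bddAbove
  exact le_csSup hbdd hmem

lemma pSupNorm_nonneg {n m : ℕ} (P : Fin m → MvPolynomial (Fin n) ℝ) :
    0 ≤ pSupNorm P := by
  apply Real.sSup_nonneg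
  rintro r ⟨x, hx, rfl⟩
  exact Real.sqrt_nonneg _

lemma jacNorm_le_bound {n m d : ℕ} (P : Fin m → MvPolynomial (Fin n) ℝ) (D : Fin m → ℕ)
    (hdeg : ∀ i, (P i).IsHomogeneous (D i)) (hD : ∀ i, D i ≤ d)
    (x u : Fin n → ℝ) (hx : ∑ j, x j ^ 2 = 1) (hu : ∑ j, u j ^ 2 = 1) :
    jacNorm P x u ≤ (d:ℝ)^2 * pSupNorm P := by
  set S := pSupNorm P with hSdef
  have hS0 : 0 ≤ S := pSupNorm_nonneg P
  have hS : ∀ y : Fin n → ℝ, (∑ j, y j ^ 2) = 1 →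
      Real.sqrt (∑ i, (eval y (P i)) ^ 2) ≤ S := fun y hy => pNorm_le_pSupNorm P y hy
  set T : Fin m → ℝ := fun i => ∑ j, u j * eval x (pderiv j (P i)) with hT
  have hjac : jacNorm P x u = Real.sqrt (∑ i, T i ^ 2) := rfl
  rw [hjac]
  set Q : ℝ := ∑ i, T i ^ 2 with hQ
  have hQ0 : 0 ≤ Q := Finset.sum_nonneg (fun i _ => sq_nonneg _)
  have hQle : Q ≤ ((d:ℝ)^2 * S)^2 := by
    rcases eq_or_lt_of_le hQ0 with h0 | hpos
    · rw [← h0]; positivity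
    · set t : ℝ := Real.sqrt Q with ht
      have htpos : 0 < t := Real.sqrt_pos.mpr hpos
      have ht2 : t^2 = Q := Real.sq_sqrt hQ0
      set c : Fin m → ℝ := fun i => T i / t with hcdef
      have hc : ∑ i, c i ^ 2 ≤ 1 := by
        rw [hcdef]
        simp only
        rw [Finset.sum_congr rfl (fun i _ => div_pow _ _ _), ← Finset.sum_div, ← hQ, ← ht2]
        rw [div_self (by positivity)]
      have hsum : ∑ i, c i * T i = t := by
        rw [hcdef]
        simp only
        rw [Finset.sum_congr rfl (fun i _ => by rw [div_mul_eq_mul_div, ← sq] :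
          ∀ i ∈ Finset.univ, T i / t * T i = T i ^ 2 / t), ← Finset.sum_div, ← hQ, ← ht2]
        rw [sq, mul_div_assoc, div_self htpos.ne', mul_one]
      have := scalar_bound P D hdeg hD c hc x u hx hu S hS
      have htle : t ≤ (d:ℝ)^2 * S := by
        rw [← hsum]
        exact le_trans (le_abs_self _) this
      calc Q = t^2 := ht2.symm
        _ ≤ ((d:ℝ)^2 * S)^2 := pow_le_pow_left₀ htpos.le htle 2
  calc Real.sqrt Q ≤ Real.sqrt (((d:ℝ)^2 * S)^2) := Real.sqrt_le_sqrt hQle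
    _ = |(d:ℝ)^2 * S| := Real.sqrt_sq_eq_abs _
    _ = (d:ℝ)^2 * S := abs_of_nonneg (by positivity)

end Infra

/-- Kellog-type inequality: `‖D⁽¹⁾P‖_∞ ≤ d²·‖P‖_∞` for a homogeneous system
of maximal degree `d`. -/
theorem jacSupNorm_le_sq {n m d : ℕ}
    (P : Fin m → MvPolynomial (Fin n) ℝ) (D : Fin m → ℕ)
    (hdeg : ∀ i, MvPolynomial.IsHomogeneous (P i) (D i))
    (hD : ∀ i, D i ≤ d) :
    jacSupNorm P ≤ (d : ℝ) ^ 2 * pSupNorm P := by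
  apply Real.sSup_le
  · rintro r ⟨x, u, hx, hu, rfl⟩
    exact jacNorm_le_bound P D hdeg hD x u hx hu
  · have := pSupNorm_nonneg P
    positivity
end

section
/- Let P = (p₁,…,p_{n-1}) be a system of homogeneous polynomials in n variables, each of the same degree d. Then ‖D^{(1)}P‖_∞ ≤ d·‖P‖_∞, where ‖P‖_∞ := sup_{x ∈ S^{n-1}} ‖P(x)‖₂ and ‖D^{(1)}P‖_∞ := sup_{x,u ∈ S^{n-1}} ‖DP(x)(u)‖₂. -/
open MvPolynomial

namespace KelloggAux

open Finset Complex

noncomputable def node (d : ℕ) (φ : ℝ) (l : ℕ) : ℝ := (φ + Real.pi * l) / d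

noncomputable def uu (d : ℕ) (φ : ℝ) (l : ℕ) : ℂ :=
  Complex.exp ((2 * node d φ l : ℝ) * Complex.I)

noncomputable def rr (d : ℕ) (φ : ℝ) (l : ℕ) : ℝ :=
  Complex.normSq (∑ a ∈ Finset.range d, uu d φ l ^ a) / d

noncomputable def ww (d : ℕ) (φ : ℝ) (l : ℕ) : ℝ := (-1) ^ l * rr d φ l

lemma rr_nonneg (d : ℕ) (φ : ℝ) (l : ℕ) : 0 ≤ rr d φ l :=
  div_nonneg (Complex.normSq_nonneg _) (Nat.cast_nonneg d)

lemma abs_ww (d : ℕ) (φ : ℝ) (l : ℕ) : |ww d φ l| = rr d φ l := by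
  rw [ww, abs_mul]
  rw [show |(-1:ℝ)^l| = 1 by rw [_root_.abs_pow]; simp]
  rw [one_mul, _root_.abs_of_nonneg (rr_nonneg d φ l)]

lemma uu_zpow (d : ℕ) (φ : ℝ) (l : ℕ) (K : ℤ) :
    uu d φ l ^ K = Complex.exp ((K : ℂ) * ((2 * node d φ l : ℝ) * Complex.I)) := by
  rw [Complex.exp_int_mul, uu]

lemma Tsum (d : ℕ) (hd : 0 < d) (φ : ℝ) (K : ℤ) (h1 : -(d:ℤ) < K) (h2 : K < 2*d) :
    ∑ l ∈ Finset.range d, uu d φ l ^ K =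
      if K = 0 then (d:ℂ) else if K = (d:ℤ) then (d:ℂ) * Complex.exp ((2*φ:ℝ) * Complex.I)
        else 0 := by
  have hdR : (d:ℝ) ≠ 0 := Nat.cast_ne_zero.mpr hd.ne'
  have hdZ : (1:ℤ) ≤ (d:ℤ) := by exact_mod_cast hd
  set a0 : ℝ := 2*K*φ/d with ha0
  set a1 : ℝ := 2*K*Real.pi/d with ha1
  have hterm : ∀ l, uu d φ l ^ K =
      Complex.exp ((a0:ℝ) * Complex.I) * Complex.exp ((a1:ℝ) * Complex.I) ^ l := by
    intro l
    rw [uu_zpow, ← Complex.exp_nat_mul, ← Complex.exp_add]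
    congr 1
    have hr : (K:ℝ) * (2 * node d φ l) = a0 + l * a1 := by
      rw [node, ha0, ha1]; field_simp
    calc (K:ℂ) * ((2 * node d φ l : ℝ) * Complex.I)
        = ((K:ℝ) * (2 * node d φ l) : ℝ) * Complex.I := by push_cast; ring
      _ = ((a0 + l * a1 : ℝ)) * Complex.I := by rw [hr]
      _ = (a0:ℝ) * Complex.I + (l:ℂ) * ((a1:ℝ) * Complex.I) := by push_cast; ring
  rw [Finset.sum_congr rfl fun l _ => hterm l, ← Finset.mul_sum]
  rcases eq_or_ne K 0 with h0 | h0
  · subst h0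
    simp [ha0, ha1]
  rcases eq_or_ne K (d:ℤ) with hKd | hKd
  · subst hKd
    have e0 : a0 = 2*φ := by rw [ha0]; push_cast; field_simp
    have e1 : a1 = 2*Real.pi := by rw [ha1]; push_cast; field_simp
    have e1' : Complex.exp ((a1:ℝ) * Complex.I) = 1 := by
      rw [e1]; push_cast
      rw [show (2:ℂ) * Real.pi * Complex.I = (1:ℤ) * (2 * Real.pi * Complex.I) by ring,
        Complex.exp_int_mul_two_pi_mul_I]
    rw [e0, e1']
    simp only [one_pow, Finset.sum_const, Finset.card_range, nsmul_eq_mul, mul_one]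
    split_ifs with hc
    · exact absurd hc h0
    · ring
  · have hq1 : Complex.exp ((a1:ℝ) * Complex.I) ≠ 1 := by
      intro h
      rw [Complex.exp_eq_one_iff] at h
      obtain ⟨m, hm⟩ := h
      have e2 : ((a1 * d : ℝ):ℂ) * Complex.I = ((m*d:ℤ):ℂ) * (2 * Real.pi * Complex.I) := by
        push_cast
        rw [show ((a1:ℂ) * (d:ℕ)) * Complex.I = ((a1:ℂ) * Complex.I) * (d:ℕ) by ring, hm]
        ring
      have e3 : (a1 * d : ℝ) = 2*K*Real.pi := by rw [ha1]; field_simp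
      rw [e3] at e2
      have e4 : (K:ℂ) * (2 * Real.pi * Complex.I) = ((m*d:ℤ):ℂ) * (2*Real.pi*Complex.I) := by
        rw [← e2]; push_cast; ring
      have hKint : K = m * d := by
        exact_mod_cast mul_right_cancel₀ Complex.two_pi_I_ne_zero e4
      rcases lt_trichotomy m 0 with hm0 | hm0 | hm0
      · have hle : m ≤ -1 := by omega
        have h5 : m * (d:ℤ) ≤ (-1) * d := mul_le_mul_of_nonneg_right hle (by omega)
        have h6 : (-1 : ℤ) * d = -(d:ℤ) := by ring
        linarith [h1]
      · subst hm0; simp at hKint; exact h0 hKint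
      · rcases eq_or_lt_of_le (by omega : (1:ℤ) ≤ m) with h | h
        · refine hKd ?_
          rw [hKint, ← h, one_mul]
        · have hle : (2:ℤ) ≤ m := by omega
          have h5 : 2 * (d:ℤ) ≤ m * d := mul_le_mul_of_nonneg_right hle (by omega)
          linarith [h2]
    have hqd : Complex.exp ((a1:ℝ) * Complex.I) ^ d = 1 := by
      rw [← Complex.exp_nat_mul]
      have e5 : ((d:ℝ) * a1 : ℝ) = 2*K*Real.pi := by rw [ha1]; field_simp
      have e6 : (d:ℂ) * ((a1:ℝ) * Complex.I) = (K:ℤ) * (2 * Real.pi * Complex.I) := by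
        calc (d:ℂ) * ((a1:ℝ) * Complex.I) = (((d:ℝ) * a1 : ℝ):ℂ) * Complex.I := by
              push_cast; ring
          _ = (K:ℤ) * (2*Real.pi*Complex.I) := by rw [e5]; push_cast; ring
      rw [e6, Complex.exp_int_mul_two_pi_mul_I]
    rw [geom_sum_eq hq1, hqd]
    simp [h0, hKd]


lemma momentA (d j : ℕ) (hd : 0 < d) (hj : j ≤ d) (φ : ℝ) :
    ∑ l ∈ Finset.range d, (rr d φ l : ℂ) * uu d φ l ^ j
      = ((d:ℂ) - j) + j * Complex.exp ((2*φ:ℝ) * Complex.I) := by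
  have hdC : (d:ℂ) ≠ 0 := Nat.cast_ne_zero.mpr hd.ne'
  have habs : ∀ l, ‖uu d φ l‖ = 1 := fun l => Complex.norm_exp_ofReal_mul_I _
  have hne : ∀ l, uu d φ l ≠ 0 := fun l => Complex.exp_ne_zero _
  have step1 : ∀ l, (rr d φ l : ℂ) * uu d φ l ^ j
      = (∑ a ∈ Finset.range d, ∑ b ∈ Finset.range d, uu d φ l ^ ((a:ℤ) + j - b)) / d := by
    intro l
    set u := uu d φ l with hu
    have hS : ((Complex.normSq (∑ a ∈ Finset.range d, u ^ a) : ℝ) : ℂ)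
        = (∑ a ∈ Finset.range d, u ^ a) * (∑ b ∈ Finset.range d, u⁻¹ ^ b) := by
      rw [← Complex.mul_conj]
      congr 1
      rw [map_sum]
      exact Finset.sum_congr rfl fun b _ => by rw [map_pow, ← Complex.inv_eq_conj (habs l)]
    rw [rr, Complex.ofReal_div, Complex.ofReal_natCast, hS]
    rw [div_mul_eq_mul_div]
    congr 1
    rw [Finset.sum_mul_sum, Finset.sum_mul]
    refine Finset.sum_congr rfl fun a _ => ?_
    rw [Finset.sum_mul]
    refine Finset.sum_congr rfl fun b _ => ?_
    have h1 : u⁻¹ ^ b = u ^ (-(b:ℤ)) := by rw [zpow_neg, zpow_natCast, inv_pow]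
    rw [h1, ← zpow_natCast u a, ← zpow_natCast u j,
      ← zpow_add₀ (hne l), ← zpow_add₀ (hne l)]
    congr 1
    ring
  rw [Finset.sum_congr rfl fun l _ => step1 l, ← Finset.sum_div]
  rw [Finset.sum_comm]
  have swap2 : ∀ a : ℕ, ∑ l ∈ Finset.range d, ∑ b ∈ Finset.range d, uu d φ l ^ ((a:ℤ) + j - b)
      = ∑ b ∈ Finset.range d, ∑ l ∈ Finset.range d, uu d φ l ^ ((a:ℤ) + j - b) :=
    fun a => Finset.sum_comm
  rw [Finset.sum_congr rfl fun a _ => swap2 a]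
  set E := Complex.exp ((2*φ:ℝ) * Complex.I) with hE
  have inner : ∀ a ∈ Finset.range d, ∑ b ∈ Finset.range d,
      (∑ l ∈ Finset.range d, uu d φ l ^ ((a:ℤ) + j - b))
      = if a + j < d then (d:ℂ) else (d:ℂ) * E := by
    intro a ha
    rw [Finset.mem_range] at ha
    have hT : ∀ b ∈ Finset.range d, (∑ l ∈ Finset.range d, uu d φ l ^ ((a:ℤ) + j - b))
        = if (a:ℤ) + j - b = 0 then (d:ℂ) else if (a:ℤ) + j - b = (d:ℤ) then (d:ℂ) * E else 0 := by
      intro b hb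
      rw [Finset.mem_range] at hb
      exact Tsum d hd φ _ (by omega) (by omega)
    rw [Finset.sum_congr rfl hT]
    by_cases hcase : a + j < d
    · have : ∀ b ∈ Finset.range d,
          (if (a:ℤ) + j - b = 0 then (d:ℂ) else if (a:ℤ) + j - b = (d:ℤ) then (d:ℂ) * E else 0)
          = if b = a + j then (d:ℂ) else 0 := by
        intro b hb
        rw [Finset.mem_range] at hb
        by_cases h : b = a + j
        · rw [if_pos h, if_pos (by omega)]
        · rw [if_neg h, if_neg (by omega), if_neg (by omega)]
      rw [Finset.sum_congr rfl this, Finset.sum_ite_eq' (Finset.range d) (a+j) fun _ => (d:ℂ),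
        if_pos (Finset.mem_range.mpr hcase), if_pos hcase]
    · have : ∀ b ∈ Finset.range d,
          (if (a:ℤ) + j - b = 0 then (d:ℂ) else if (a:ℤ) + j - b = (d:ℤ) then (d:ℂ) * E else 0)
          = if b = a + j - d then (d:ℂ) * E else 0 := by
        intro b hb
        rw [Finset.mem_range] at hb
        by_cases h : b = a + j - d
        · rw [if_pos h, if_neg (by omega), if_pos (by omega)]
        · rw [if_neg h, if_neg (by omega), if_neg (by omega)]
      rw [Finset.sum_congr rfl this,
        Finset.sum_ite_eq' (Finset.range d) (a+j-d) fun _ => (d:ℂ) * E,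
        if_pos (Finset.mem_range.mpr (by omega)), if_neg hcase]
  rw [Finset.sum_congr rfl inner]
  rw [Finset.sum_ite, Finset.sum_const, Finset.sum_const]
  have hf1 : (Finset.range d).filter (fun a => a + j < d) = Finset.range (d - j) := by
    ext a; simp only [Finset.mem_filter, Finset.mem_range]; omega
  have hcard2 : ((Finset.range d).filter (fun a => ¬ a + j < d)).card = j := by
    have h := Finset.card_filter_add_card_filter_not
      (s := Finset.range d) (p := fun a => a + j < d)
    rw [hf1] at h
    simp only [Finset.card_range] at h
    omega
  rw [hf1, hcard2, Finset.card_range]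
  rw [nsmul_eq_mul, nsmul_eq_mul]
  rw [Nat.cast_sub hj]
  field_simp
lemma sum_rr (d : ℕ) (hd : 0 < d) (φ : ℝ) : ∑ l ∈ Finset.range d, rr d φ l = d := by
  have h := momentA d 0 hd (Nat.zero_le d) φ
  simp only [pow_zero, mul_one, Nat.cast_zero, sub_zero, zero_mul, add_zero] at h
  exact_mod_cast h

variable {n : ℕ}

/-- The great-circle curve through `x` with direction `v`. -/
noncomputable def gam (x v : Fin n → ℝ) (t : ℝ) : Fin n → ℝ :=
  fun i => Real.cos t * x i + Real.sin t * v i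

lemma gam_zero (x v : Fin n → ℝ) : gam x v 0 = x := by
  funext i; simp [gam]

/-- Spectral representation of `t ↦ p(γ(t))` for `p` homogeneous of degree `d`. -/
def Rep (x v : Fin n → ℝ) (d : ℕ) (p : MvPolynomial (Fin n) ℝ) : Prop :=
  ∃ c : ℕ → ℂ, (∀ j, d < j → c j = 0) ∧
    (∀ t : ℝ, ((eval (gam x v t) p : ℝ) : ℂ) * Complex.exp ((t:ℂ) * Complex.I) ^ d
        = ∑ j ∈ Finset.range (d+1), c j * Complex.exp ((t:ℂ) * Complex.I) ^ (2*j)) ∧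
    (((∑ i, v i * eval x (pderiv i p)) : ℝ) : ℂ)
        = ∑ j ∈ Finset.range (d+1), c j * (2*(j:ℂ) - (d:ℂ)) * Complex.I

lemma trig_helper (a b t : ℝ) :
    ((Real.cos t * a + Real.sin t * b : ℝ) : ℂ) * Complex.exp ((t:ℂ)*Complex.I) * 2
      = ((a:ℂ) - b*Complex.I) * Complex.exp ((t:ℂ)*Complex.I)^2 + ((a:ℂ) + b*Complex.I) := by
  rw [Complex.exp_mul_I]
  push_cast
  linear_combination ((a:ℂ) + b*Complex.I) * (Complex.sin_sq_add_cos_sq (t:ℂ))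
    + (-(a:ℂ) * Complex.sin t ^ 2 + 2*b*Complex.cos t*Complex.sin t
        + b * Complex.sin t ^2 * Complex.I) * Complex.I_sq

lemma rep_C (x v : Fin n → ℝ) (r : ℝ) : Rep x v 0 (C r) := by
  refine ⟨fun j => if j = 0 then (r:ℂ) else 0, ?_, ?_, ?_⟩
  · intro j hj
    show (if j = 0 then (r:ℂ) else 0) = 0
    rw [if_neg (by omega)]
  · intro t; simp
  · simp

lemma rep_zero (x v : Fin n → ℝ) (d : ℕ) : Rep x v d 0 := by
  refine ⟨fun _ => 0, fun _ _ => rfl, ?_, ?_⟩ <;> simp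

lemma rep_add (x v : Fin n → ℝ) (d : ℕ) (p q : MvPolynomial (Fin n) ℝ)
    (hp : Rep x v d p) (hq : Rep x v d q) : Rep x v d (p + q) := by
  obtain ⟨c1, hb1, h11, h12⟩ := hp
  obtain ⟨c2, hb2, h21, h22⟩ := hq
  refine ⟨fun j => c1 j + c2 j,
    fun j hj => by show c1 j + c2 j = 0; rw [hb1 j hj, hb2 j hj, add_zero], ?_, ?_⟩
  · intro t
    show ((eval (gam x v t) (p+q) : ℝ) : ℂ) * Complex.exp ((t:ℂ) * Complex.I) ^ d
        = ∑ j ∈ Finset.range (d+1), (c1 j + c2 j) * Complex.exp ((t:ℂ) * Complex.I) ^ (2*j)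
    rw [eval_add, Complex.ofReal_add, add_mul, h11 t, h21 t, ← Finset.sum_add_distrib]
    exact Finset.sum_congr rfl fun j _ => by ring
  · show (((∑ i, v i * eval x (pderiv i (p + q))) : ℝ) : ℂ)
        = ∑ j ∈ Finset.range (d+1), (c1 j + c2 j) * (2*(j:ℂ) - (d:ℂ)) * Complex.I
    simp only [map_add, eval_add]
    have e : ∀ i, v i * (eval x (pderiv i p) + eval x (pderiv i q))
        = v i * eval x (pderiv i p) + v i * eval x (pderiv i q) := fun i => by ring
    rw [Finset.sum_congr rfl fun i _ => e i, Finset.sum_add_distrib, Complex.ofReal_add,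
      h12, h22, ← Finset.sum_add_distrib]
    exact Finset.sum_congr rfl fun j _ => by ring

lemma rep_eval0 (x v : Fin n → ℝ) (d : ℕ) (p : MvPolynomial (Fin n) ℝ) (c : ℕ → ℂ)
    (h : ∀ t : ℝ, ((eval (gam x v t) p : ℝ) : ℂ) * Complex.exp ((t:ℂ) * Complex.I) ^ d
        = ∑ j ∈ Finset.range (d+1), c j * Complex.exp ((t:ℂ) * Complex.I) ^ (2*j)) :
    ((eval x p : ℝ) : ℂ) = ∑ j ∈ Finset.range (d+1), c j := by
  have h0 := h 0
  rw [gam_zero] at h0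
  simpa using h0

lemma sum_shift (d : ℕ) (c : ℕ → ℂ) (f : ℕ → ℂ) :
    ∑ j ∈ Finset.range (d+1+1), (if j = 0 then 0 else c (j-1)) * f j
      = ∑ j ∈ Finset.range (d+1), c j * f (j+1) := by
  rw [Finset.sum_range_succ' (fun j => (if j = 0 then 0 else c (j-1)) * f j) (d+1)]
  simp

lemma sum_top (d : ℕ) (c : ℕ → ℂ) (f : ℕ → ℂ) (hc : c (d+1) = 0) :
    ∑ j ∈ Finset.range (d+1+1), c j * f j = ∑ j ∈ Finset.range (d+1), c j * f j := by
  rw [Finset.sum_range_succ, hc, zero_mul, add_zero]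

lemma rep_X_mul (x v : Fin n → ℝ) (d : ℕ) (i₀ : Fin n) (p : MvPolynomial (Fin n) ℝ)
    (hp : Rep x v d p) : Rep x v (d+1) (X i₀ * p) := by
  obtain ⟨c, hb, h1, h2⟩ := hp
  set A : ℂ := (x i₀ : ℝ) - (v i₀ : ℝ) * Complex.I with hA
  set B : ℂ := (x i₀ : ℝ) + (v i₀ : ℝ) * Complex.I with hB
  refine ⟨fun j => A/2 * (if j = 0 then 0 else c (j-1)) + B/2 * c j, ?_, ?_, ?_⟩
  · intro j hj
    show A/2 * (if j = 0 then 0 else c (j-1)) + B/2 * c j = 0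
    rw [if_neg (by omega), hb (j-1) (by omega), hb j (by omega)]
    ring
  · intro t
    show ((eval (gam x v t) (X i₀ * p) : ℝ) : ℂ) * Complex.exp ((t:ℂ) * Complex.I) ^ (d+1)
        = ∑ j ∈ Finset.range (d+1+1),
            (A/2 * (if j = 0 then 0 else c (j-1)) + B/2 * c j)
              * Complex.exp ((t:ℂ) * Complex.I) ^ (2*j)
    set E := Complex.exp ((t:ℂ) * Complex.I) with hE
    have lhs : ((eval (gam x v t) (X i₀ * p) : ℝ) : ℂ) * E ^ (d+1)
        = (((Real.cos t * x i₀ + Real.sin t * v i₀ : ℝ) : ℂ) * E)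
          * (((eval (gam x v t) p : ℝ) : ℂ) * E ^ d) := by
      rw [eval_mul, eval_X]
      show ((gam x v t i₀ * eval (gam x v t) p : ℝ) : ℂ) * E ^ (d+1) = _
      rw [gam]
      push_cast
      ring
    have key : (((Real.cos t * x i₀ + Real.sin t * v i₀ : ℝ) : ℂ) * E)
        = (A * E^2 + B) / 2 := by
      rw [eq_div_iff (by norm_num : (2:ℂ) ≠ 0), hA, hB]
      exact trig_helper (x i₀) (v i₀) t
    rw [lhs, h1 t, key]
    simp only [← hE]
    have rhsplit : ∀ j ∈ Finset.range (d+1+1),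
        (A/2 * (if j = 0 then 0 else c (j-1)) + B/2 * c j) * E ^ (2*j)
        = (if j = 0 then 0 else c (j-1)) * (A/2 * E ^ (2*j)) + c j * (B/2 * E ^ (2*j)) :=
      fun j _ => by ring
    rw [Finset.sum_congr rfl rhsplit, Finset.sum_add_distrib,
      sum_shift d c (fun j => A/2 * E ^ (2*j)),
      sum_top d c (fun j => B/2 * E ^ (2*j)) (hb (d+1) (by omega))]
    have lsplit : ∀ j ∈ Finset.range (d+1),
        (A * E ^ 2 + B)/2 * (c j * E ^ (2*j))
        = c j * (A/2 * E ^ (2*(j+1))) + c j * (B/2 * E ^ (2*j)) :=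
      fun j _ => by ring
    rw [Finset.mul_sum, Finset.sum_congr rfl lsplit, Finset.sum_add_distrib]
  · -- derivative conjunct
    have hpd : ∀ i, pderiv i (X i₀ * p)
        = (if i₀ = i then 1 else 0) * p + X i₀ * pderiv i p := by
      intro i
      rw [pderiv_mul, pderiv_X, Pi.single_apply]
    have lhs : (∑ i, v i * eval x (pderiv i (X i₀ * p)))
        = v i₀ * eval x p + x i₀ * ∑ i, v i * eval x (pderiv i p) := by
      rw [Finset.sum_congr rfl fun i _ => by rw [hpd i]]
      have e : ∀ i ∈ Finset.univ, v i * eval x ((if i₀ = i then 1 else 0) * p + X i₀ * pderiv i p)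
          = (if i₀ = i then v i * eval x p else 0) + x i₀ * (v i * eval x (pderiv i p)) := by
        intro i _
        rw [eval_add, eval_mul, eval_mul, eval_X]
        by_cases h : i₀ = i
        · rw [if_pos h, if_pos h]; simp; ring
        · rw [if_neg h, if_neg h]; simp; ring
      rw [Finset.sum_congr rfl e, Finset.sum_add_distrib,
        Finset.sum_ite_eq Finset.univ i₀ (fun i => v i * eval x p), if_pos (Finset.mem_univ i₀),
        ← Finset.mul_sum]
    show (((∑ i, v i * eval x (pderiv i (X i₀ * p))) : ℝ) : ℂ)
        = ∑ j ∈ Finset.range (d+1+1),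
            (A/2 * (if j = 0 then 0 else c (j-1)) + B/2 * c j)
              * (2*(j:ℂ) - ((d+1:ℕ):ℂ)) * Complex.I
    rw [lhs, Complex.ofReal_add, Complex.ofReal_mul, Complex.ofReal_mul,
      h2, rep_eval0 x v d p c h1]
    have rhsplit : ∀ j ∈ Finset.range (d+1+1),
        (A/2 * (if j = 0 then 0 else c (j-1)) + B/2 * c j) * (2*(j:ℂ) - ((d+1:ℕ):ℂ)) * Complex.I
        = (if j = 0 then 0 else c (j-1)) * (A/2 * (2*(j:ℂ) - ((d+1:ℕ):ℂ)) * Complex.I)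
          + c j * (B/2 * (2*(j:ℂ) - ((d+1:ℕ):ℂ)) * Complex.I) :=
      fun j _ => by ring
    rw [Finset.sum_congr rfl rhsplit, Finset.sum_add_distrib,
      sum_shift d c (fun j => A/2 * (2*(j:ℂ) - ((d+1:ℕ):ℂ)) * Complex.I),
      sum_top d c (fun j => B/2 * (2*(j:ℂ) - ((d+1:ℕ):ℂ)) * Complex.I) (hb (d+1) (by omega))]
    rw [Finset.mul_sum, Finset.mul_sum, ← Finset.sum_add_distrib, ← Finset.sum_add_distrib]
    refine Finset.sum_congr rfl fun j _ => ?_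
    rw [hA, hB]
    push_cast
    linear_combination ((v i₀ : ℝ):ℂ) * c j * Complex.I_sq

lemma sum_mul_pderiv_X_mul (x v : Fin n → ℝ) (i₀ : Fin n) (p : MvPolynomial (Fin n) ℝ) :
    (∑ i, v i * eval x (pderiv i (X i₀ * p)))
      = v i₀ * eval x p + x i₀ * ∑ i, v i * eval x (pderiv i p) := by
  have hpd : ∀ i : Fin n, pderiv i (X i₀ * p)
      = (if i₀ = i then 1 else 0) * p + X i₀ * pderiv i p := by
    intro i
    rw [pderiv_mul, pderiv_X, Pi.single_apply]
  rw [Finset.sum_congr rfl fun i _ => by rw [hpd i]]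
  have e : ∀ i ∈ Finset.univ, v i * eval x ((if i₀ = i then 1 else 0) * p + X i₀ * pderiv i p)
      = (if i₀ = i then v i * eval x p else 0) + x i₀ * (v i * eval x (pderiv i p)) := by
    intro i _
    rw [eval_add, eval_mul, eval_mul, eval_X]
    by_cases h : i₀ = i
    · rw [if_pos h, if_pos h]; simp; ring
    · rw [if_neg h, if_neg h]; simp; ring
  rw [Finset.sum_congr rfl e, Finset.sum_add_distrib,
    Finset.sum_ite_eq Finset.univ i₀ (fun i => v i * eval x p), if_pos (Finset.mem_univ i₀),
    ← Finset.mul_sum]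

lemma degree_univ (f : Fin n →₀ ℕ) : f.degree = ∑ j, f j := by
  rw [Finsupp.degree]
  exact Finset.sum_subset (Finset.subset_univ _) fun j _ hj => Finsupp.notMem_support_iff.mp hj

/-- Induction principle for homogeneous polynomials. -/
lemma homog_rec {M : ℕ → MvPolynomial (Fin n) ℝ → Prop}
    (h0 : ∀ r : ℝ, M 0 (C r)) (hz : ∀ d, M d 0)
    (hadd : ∀ d p q, M d p → M d q → M d (p + q))
    (hX : ∀ d (i : Fin n) p, M d p → M (d+1) (X i * p)) :
    ∀ d (p : MvPolynomial (Fin n) ℝ), p.IsHomogeneous d → M d p := by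
  have mono : ∀ d (k : Fin n →₀ ℕ) (r : ℝ), k.degree = d → M d (monomial k r) := by
    intro d
    induction d with
    | zero =>
      intro k r hk
      have hk0 : k = 0 := (Finsupp.degree_eq_zero_iff k).mp hk
      subst hk0
      rw [monomial_zero']
      exact h0 r
    | succ d ih =>
      intro k r hk
      obtain ⟨i, hi⟩ : ∃ i, k i ≠ 0 := by
        by_contra hcon
        push_neg at hcon
        have : k = 0 := Finsupp.ext fun i => hcon i
        rw [this, map_zero] at hk
        omega
      set k' : Fin n →₀ ℕ := k - Finsupp.single i 1 with hk'
      have hsplit : k = Finsupp.single i 1 + k' := by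
        ext j
        simp only [Finsupp.add_apply, hk', Finsupp.tsub_apply, Finsupp.single_apply]
        by_cases h : i = j
        · subst h; simp; omega
        · simp [h]
      have hdeg' : k'.degree = d := by
        have h1 : k.degree = (Finsupp.single i 1).degree + k'.degree := by
          rw [hsplit, degree_univ, degree_univ, degree_univ]
          rw [← Finset.sum_add_distrib]
          exact Finset.sum_congr rfl fun j _ => Finsupp.add_apply _ _ _
        have h2 : (Finsupp.single i 1).degree = 1 := by
          rw [degree_univ]
          rw [Finset.sum_congr rfl fun j _ => Finsupp.single_apply]
          rw [Finset.sum_ite_eq Finset.univ i (fun _ => 1), if_pos (Finset.mem_univ i)]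
        omega
      have hmon : monomial k r = X i * monomial k' r := by
        rw [hsplit, monomial_single_add, pow_one]
      rw [hmon]
      exact hX d i (monomial k' r) (ih k' r hdeg')
  intro d p hp
  rw [← p.support_sum_monomial_coeff]
  refine Finset.sum_induction _ (M d) (hadd d) (hz d) ?_
  intro k hk
  refine mono d k _ ?_
  by_contra hne
  exact (mem_support_iff.mp hk) (hp.coeff_eq_zero hne)

lemma rep_of_homog (x v : Fin n → ℝ) (d : ℕ) (p : MvPolynomial (Fin n) ℝ)
    (hp : p.IsHomogeneous d) : Rep x v d p :=
  homog_rec (rep_C x v) (rep_zero x v) (rep_add x v) (rep_X_mul x v) d p hp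

/-- Euler's identity, evaluated form. -/
lemma euler (x : Fin n → ℝ) (d : ℕ) (p : MvPolynomial (Fin n) ℝ) (hp : p.IsHomogeneous d) :
    ∑ i, x i * eval x (pderiv i p) = d * eval x p := by
  refine homog_rec
    (M := fun d p => ∑ i, x i * eval x (pderiv i p) = (d:ℝ) * eval x p) ?_ ?_ ?_ ?_ d p hp
  · intro r; simp
  · intro d; simp
  · intro d p q hP hQ
    simp only [map_add, eval_add]
    have e : ∀ i ∈ Finset.univ, x i * (eval x (pderiv i p) + eval x (pderiv i q))
        = x i * eval x (pderiv i p) + x i * eval x (pderiv i q) := fun i _ => by ring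
    rw [Finset.sum_congr rfl e, Finset.sum_add_distrib, hP, hQ]
    ring
  · intro d i p hP
    rw [sum_mul_pderiv_X_mul x x i p, hP, eval_mul, eval_X]
    push_cast
    ring

/-- The Szegő-type interpolation identity. -/
theorem key (x v : Fin n → ℝ) {d : ℕ} (hd : 0 < d) (p : MvPolynomial (Fin n) ℝ)
    (hp : p.IsHomogeneous d) (φ : ℝ) :
    ∑ l ∈ Finset.range d, ww d φ l * eval (gam x v (node d φ l)) p
      = d * Real.cos φ * eval x p + Real.sin φ * (∑ i, v i * eval x (pderiv i p)) := by
  obtain ⟨c, hb, h1, h2⟩ := rep_of_homog x v d p hp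
  have heval0 : ((eval x p : ℝ):ℂ) = ∑ j ∈ Finset.range (d+1), c j := rep_eval0 x v d p c h1
  have hdR : (d:ℝ) ≠ 0 := Nat.cast_ne_zero.mpr hd.ne'
  set E : ℕ → ℂ := fun l => Complex.exp (((node d φ l : ℝ):ℂ) * Complex.I) with hE
  have hEne : ∀ l, E l ≠ 0 := fun l => Complex.exp_ne_zero _
  have hEd : ∀ l, E l ^ d = Complex.exp (((φ:ℝ):ℂ) * Complex.I) * (-1:ℂ)^l := by
    intro l
    have e1 : (E l) ^ d = Complex.exp ((d:ℂ) * (((node d φ l : ℝ):ℂ) * Complex.I)) := by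
      rw [Complex.exp_nat_mul]
    have e2 : (d:ℂ) * (((node d φ l : ℝ):ℂ) * Complex.I)
        = ((φ:ℝ):ℂ) * Complex.I + (l:ℂ) * (((Real.pi:ℝ):ℂ) * Complex.I) := by
      have hr : (d:ℝ) * node d φ l = φ + l * Real.pi := by
        rw [node]; field_simp
      calc (d:ℂ) * (((node d φ l : ℝ):ℂ) * Complex.I)
          = (((d:ℝ) * node d φ l : ℝ):ℂ) * Complex.I := by push_cast; ring
        _ = ((φ + l * Real.pi : ℝ):ℂ) * Complex.I := by rw [hr]
        _ = ((φ:ℝ):ℂ) * Complex.I + (l:ℂ) * (((Real.pi:ℝ):ℂ) * Complex.I) := by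
            push_cast; ring
    rw [e1, e2, Complex.exp_add, Complex.exp_nat_mul, Complex.exp_pi_mul_I]
  have hE2 : ∀ l, ∀ j : ℕ, E l ^ (2*j) = uu d φ l ^ j := by
    intro l j
    rw [pow_mul]
    congr 1
    simp only [hE]
    rw [uu, ← Complex.exp_nat_mul]
    congr 1
    push_cast
    ring
  have hmult : ∀ j ∈ Finset.range (d+1),
      ∑ l ∈ Finset.range d, (ww d φ l : ℂ) * (E l ^ (2*j) * (E l ^ d)⁻¹)
        = (d:ℂ) * (Real.cos φ : ℝ) + (2*(j:ℂ) - d) * (Real.sin φ : ℝ) * Complex.I := by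
    intro j hj
    rw [Finset.mem_range] at hj
    have term : ∀ l ∈ Finset.range d, (ww d φ l : ℂ) * (E l ^ (2*j) * (E l ^ d)⁻¹)
        = (rr d φ l : ℂ) * uu d φ l ^ j * (Complex.exp (((φ:ℝ):ℂ) * Complex.I))⁻¹ := by
      intro l _
      rw [hEd l, hE2 l j, ww]
      push_cast
      rw [mul_inv]
      have hm1 : ((-1:ℂ))^l ≠ 0 := pow_ne_zero _ (by norm_num)
      have hexpne : Complex.exp (((φ:ℝ):ℂ) * Complex.I) ≠ 0 := Complex.exp_ne_zero _
      field_simp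
    rw [Finset.sum_congr rfl term]
    have : ∑ l ∈ Finset.range d,
        (rr d φ l : ℂ) * uu d φ l ^ j * (Complex.exp (((φ:ℝ):ℂ) * Complex.I))⁻¹
        = (∑ l ∈ Finset.range d, (rr d φ l : ℂ) * uu d φ l ^ j)
          * (Complex.exp (((φ:ℝ):ℂ) * Complex.I))⁻¹ := by
      rw [Finset.sum_mul]
    rw [this, momentA d j hd (by omega) φ]
    have hexpne : Complex.exp (((φ:ℝ):ℂ) * Complex.I) ≠ 0 := Complex.exp_ne_zero _
    rw [inv_eq_one_div, mul_one_div, div_eq_iff hexpne]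
    have e2φ : Complex.exp (((2*φ:ℝ):ℂ) * Complex.I)
        = Complex.exp (((φ:ℝ):ℂ) * Complex.I) * Complex.exp (((φ:ℝ):ℂ) * Complex.I) := by
      rw [← Complex.exp_add]
      congr 1
      push_cast
      ring
    rw [e2φ, Complex.exp_mul_I]
    push_cast
    linear_combination (-((d:ℂ) - j)) * (Complex.sin_sq_add_cos_sq (φ:ℂ))
      + ((d:ℂ) - j) * (Complex.sin (φ:ℂ))^2 * Complex.I_sq
  -- now the main computation in ℂ
  rw [← Complex.ofReal_inj]
  have lhsC : ((∑ l ∈ Finset.range d, ww d φ l * eval (gam x v (node d φ l)) p : ℝ):ℂ)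
      = ∑ l ∈ Finset.range d, (ww d φ l : ℂ) * ((eval (gam x v (node d φ l)) p : ℝ):ℂ) := by
    push_cast
    rfl
  have hgl : ∀ l ∈ Finset.range d, ((eval (gam x v (node d φ l)) p : ℝ):ℂ)
      = ∑ j ∈ Finset.range (d+1), c j * (E l ^ (2*j) * (E l ^ d)⁻¹) := by
    intro l _
    have h := h1 (node d φ l)
    simp only [hE]
    set F := Complex.exp (((node d φ l : ℝ):ℂ) * Complex.I) with hF
    have hFdne : F ^ d ≠ 0 := pow_ne_zero _ (Complex.exp_ne_zero _)
    have e1 : ∑ j ∈ Finset.range (d+1), c j * (F ^ (2*j) * (F ^ d)⁻¹)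
        = (∑ j ∈ Finset.range (d+1), c j * F ^ (2*j)) * (F ^ d)⁻¹ := by
      rw [Finset.sum_mul]
      exact Finset.sum_congr rfl fun j _ => by ring
    rw [e1, ← h, mul_assoc, mul_inv_cancel₀ hFdne, mul_one]
  rw [lhsC, Finset.sum_congr rfl fun l hl => by rw [hgl l hl]]
  have swap : ∑ l ∈ Finset.range d, (ww d φ l : ℂ)
        * ∑ j ∈ Finset.range (d+1), c j * (E l ^ (2*j) * (E l ^ d)⁻¹)
      = ∑ j ∈ Finset.range (d+1), c j
        * ∑ l ∈ Finset.range d, (ww d φ l : ℂ) * (E l ^ (2*j) * (E l ^ d)⁻¹) := by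
    rw [Finset.sum_congr rfl fun l _ => Finset.mul_sum _ _ _]
    rw [Finset.sum_comm]
    refine Finset.sum_congr rfl fun j _ => ?_
    rw [Finset.mul_sum]
    exact Finset.sum_congr rfl fun l _ => by ring
  rw [swap, Finset.sum_congr rfl fun j hj => by rw [hmult j hj]]
  have expand : ∀ j ∈ Finset.range (d+1),
      c j * ((d:ℂ) * (Real.cos φ : ℝ) + (2*(j:ℂ) - d) * (Real.sin φ : ℝ) * Complex.I)
        = (d:ℂ) * (Real.cos φ : ℝ) * c j
          + (Real.sin φ : ℝ) * (c j * (2*(j:ℂ) - d) * Complex.I) :=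
    fun j _ => by ring
  rw [Finset.sum_congr rfl expand, Finset.sum_add_distrib, ← Finset.mul_sum, ← Finset.mul_sum,
    ← heval0, ← h2]
  push_cast
  ring


/-- Points on the great circle stay on the sphere. -/
lemma gam_sphere (x v : Fin n → ℝ) (hx : ∑ j, x j ^ 2 = 1) (hv : ∑ j, v j ^ 2 = 1)
    (hxv : ∑ j, x j * v j = 0) (t : ℝ) : ∑ j, gam x v t j ^ 2 = 1 := by
  have e : ∀ j ∈ Finset.univ, gam x v t j ^ 2
      = Real.cos t ^ 2 * x j ^ 2 + Real.sin t ^ 2 * v j ^ 2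
        + (2 * Real.cos t * Real.sin t) * (x j * v j) := by
    intro j _
    show (Real.cos t * x j + Real.sin t * v j) ^ 2 = _
    ring
  rw [Finset.sum_congr rfl e, Finset.sum_add_distrib, Finset.sum_add_distrib,
    ← Finset.mul_sum, ← Finset.mul_sum, ← Finset.mul_sum, hx, hv, hxv]
  have := Real.sin_sq_add_cos_sq t
  linarith

lemma pderiv_eq_zero_of_homog0 (p : MvPolynomial (Fin n) ℝ) (hp : p.IsHomogeneous 0)
    (i : Fin n) : pderiv i p = 0 := by
  refine homog_rec (M := fun d p => d = 0 → ∀ i : Fin n, pderiv i p = 0)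
    ?_ ?_ ?_ ?_ 0 p hp rfl i
  · intro r _ i; exact pderiv_C
  · intro d _ i; exact map_zero _
  · intro d p q hP hQ hd i; rw [map_add, hP hd i, hQ hd i, add_zero]
  · intro d i p _ hd; exact absurd hd (by omega)

end KelloggAux

namespace KelloggAux

variable {n m : ℕ}

lemma pSupNorm_nonneg (P : Fin m → MvPolynomial (Fin n) ℝ) : 0 ≤ pSupNorm P := by
  apply Real.sSup_nonneg
  rintro r ⟨y, hy, rfl⟩
  exact Real.sqrt_nonneg _

lemma pNorm_le_pSupNorm (P : Fin m → MvPolynomial (Fin n) ℝ) (y : Fin n → ℝ)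
    (hy : ∑ j, y j ^ 2 = 1) : pNorm P y ≤ pSupNorm P := by
  have hset : {r : ℝ | ∃ x : Fin n → ℝ, (∑ j, x j ^ 2) = 1 ∧ r = pNorm P x}
      = (fun x => pNorm P x) '' {x : Fin n → ℝ | (∑ j, x j ^ 2) = 1} := by
    ext r
    constructor
    · rintro ⟨x, hx, rfl⟩; exact ⟨x, hx, rfl⟩
    · rintro ⟨x, hx, rfl⟩; exact ⟨x, hx, rfl⟩
  have hcont : Continuous fun x : Fin n → ℝ => pNorm P x := by
    apply Continuous.sqrt
    exact continuous_finset_sum _ fun i _ => (MvPolynomial.continuous_eval (P i)).pow 2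
  have hK : IsCompact {x : Fin n → ℝ | (∑ j, x j ^ 2) = 1} := by
    apply Metric.isCompact_of_isClosed_isBounded
    · exact isClosed_eq (continuous_finset_sum _ fun j _ => (continuous_apply j).pow 2)
        continuous_const
    · rw [Metric.isBounded_iff_subset_closedBall 0]
      refine ⟨1, fun x hx => ?_⟩
      simp only [Set.mem_setOf_eq] at hx
      rw [Metric.mem_closedBall, dist_zero_right]
      rw [pi_norm_le_iff_of_nonneg (by norm_num)]
      intro j
      rw [Real.norm_eq_abs, ← sq_le_one_iff_abs_le_one]
      calc x j ^ 2 ≤ ∑ i, x i ^ 2 :=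
            Finset.single_le_sum (fun i _ => sq_nonneg (x i)) (Finset.mem_univ j)
        _ = 1 := hx
  have hrfl : pSupNorm P
      = sSup {r : ℝ | ∃ x : Fin n → ℝ, (∑ j, x j ^ 2) = 1 ∧ r = pNorm P x} := rfl
  rw [hrfl]
  apply le_csSup
  · rw [hset]
    exact (hK.image hcont).bddAbove
  · exact ⟨y, hy, rfl⟩

/-- Finite Minkowski inequality in `ℝ^m`. -/
lemma mink (L : ℕ) (w : ℕ → ℝ) (g : ℕ → Fin m → ℝ) :
    Real.sqrt (∑ i, (∑ l ∈ Finset.range L, w l * g l i) ^ 2)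
      ≤ ∑ l ∈ Finset.range L, |w l| * Real.sqrt (∑ i, g l i ^ 2) := by
  have hnorm : ∀ z : EuclideanSpace ℝ (Fin m), ‖z‖ = Real.sqrt (∑ i, z i ^ 2) := by
    intro z
    rw [EuclideanSpace.norm_eq]
    congr 1
    exact Finset.sum_congr rfl fun i _ => by rw [Real.norm_eq_abs, sq_abs]
  set V : ℕ → EuclideanSpace ℝ (Fin m) := fun l => WithLp.toLp 2 (g l) with hV
  have step1 : Real.sqrt (∑ i, (∑ l ∈ Finset.range L, w l * g l i) ^ 2)
      = ‖∑ l ∈ Finset.range L, w l • V l‖ := by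
    rw [hnorm]
    congr 1
    refine Finset.sum_congr rfl fun i _ => ?_
    congr 1
    rw [WithLp.ofLp_sum, Finset.sum_apply]
    exact Finset.sum_congr rfl fun l _ => rfl
  rw [step1]
  calc ‖∑ l ∈ Finset.range L, w l • V l‖ ≤ ∑ l ∈ Finset.range L, ‖w l • V l‖ :=
        norm_sum_le _ _
    _ = ∑ l ∈ Finset.range L, |w l| * Real.sqrt (∑ i, g l i ^ 2) := by
        refine Finset.sum_congr rfl fun l _ => ?_
        rw [norm_smul, Real.norm_eq_abs, hnorm]

/-- The pointwise bound `‖DP(x)(u)‖ ≤ d ‖P‖_∞`. -/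
theorem jacNorm_le (P : Fin m → MvPolynomial (Fin n) ℝ) {d : ℕ}
    (hdeg : ∀ i, (P i).IsHomogeneous d) (x u : Fin n → ℝ)
    (hx : ∑ j, x j ^ 2 = 1) (hu : ∑ j, u j ^ 2 = 1) :
    jacNorm P x u ≤ (d:ℝ) * pSupNorm P := by
  set M := pSupNorm P with hM
  have hM0 : 0 ≤ M := pSupNorm_nonneg P
  rcases Nat.eq_zero_or_pos d with hd0 | hd
  · subst hd0
    have : jacNorm P x u = 0 := by
      rw [jacNorm]
      have : ∀ i ∈ Finset.univ, (∑ j, u j * eval x (pderiv j (P i))) ^ 2 = 0 := by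
        intro i _
        have : ∀ j ∈ Finset.univ, u j * eval x (pderiv j (P i)) = 0 := by
          intro j _
          rw [pderiv_eq_zero_of_homog0 (P i) (hdeg i) j, map_zero, mul_zero]
        rw [Finset.sum_congr rfl this, Finset.sum_const_zero]
        norm_num
      rw [Finset.sum_congr rfl this, Finset.sum_const_zero, Real.sqrt_zero]
    rw [this]
    simp
  -- main case
  set α : ℝ := ∑ j, x j * u j with hα
  have hsum_s : ∑ j, (u j - α * x j) ^ 2 = 1 - α ^ 2 := by
    have e : ∀ j ∈ Finset.univ, (u j - α * x j) ^ 2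
        = u j ^ 2 + α ^ 2 * x j ^ 2 - 2 * α * (x j * u j) := fun j _ => by ring
    rw [Finset.sum_congr rfl e]
    rw [Finset.sum_sub_distrib, Finset.sum_add_distrib, ← Finset.mul_sum, ← Finset.mul_sum,
      hx, hu, ← hα]
    ring
  have hα2 : α ^ 2 ≤ 1 := by nlinarith [Finset.sum_nonneg (fun j (_ : j ∈ Finset.univ) => sq_nonneg (u j - α * x j)), hsum_s]
  rcases eq_or_lt_of_le hα2 with hα1 | hαlt
  · -- u = ± x : use Euler's identity
    have hzero : ∑ j, (u j - α * x j) ^ 2 = 0 := by rw [hsum_s]; linarith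
    have huj : ∀ j, u j = α * x j := by
      intro j
      have h := (Finset.sum_eq_zero_iff_of_nonneg
        (fun j (_ : j ∈ Finset.univ) => sq_nonneg (u j - α * x j))).mp hzero j (Finset.mem_univ j)
      have := pow_eq_zero_iff (n := 2) (by norm_num) |>.mp h
      linarith [sub_eq_zero.mp this]
    have hinner : ∀ i, ∑ j, u j * eval x (pderiv j (P i)) = α * d * eval x (P i) := by
      intro i
      have e : ∀ j ∈ Finset.univ, u j * eval x (pderiv j (P i))
          = α * (x j * eval x (pderiv j (P i))) := fun j _ => by rw [huj j]; ring
      rw [Finset.sum_congr rfl e, ← Finset.mul_sum, euler x d (P i) (hdeg i)]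
      ring
    have : jacNorm P x u = |α| * ((d:ℝ) * pNorm P x) := by
      rw [jacNorm, Finset.sum_congr rfl fun i (_ : i ∈ Finset.univ) => by rw [hinner i]]
      have e : ∀ i ∈ Finset.univ, (α * d * eval x (P i)) ^ 2
          = (α * d) ^ 2 * eval x (P i) ^ 2 := fun i _ => by ring
      rw [Finset.sum_congr rfl e, ← Finset.mul_sum, Real.sqrt_mul (sq_nonneg _),
        Real.sqrt_sq_eq_abs, abs_mul, pNorm]
      rw [Nat.abs_cast]
      ring
    rw [this]
    have habs : |α| = 1 := by nlinarith [abs_nonneg α, sq_abs α]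
    rw [habs, one_mul]
    exact mul_le_mul_of_nonneg_left (pNorm_le_pSupNorm P x hx) (Nat.cast_nonneg d)
  · -- generic case : Szegő interpolation
    have h1α : 0 < 1 - α ^ 2 := by linarith
    set β : ℝ := Real.sqrt (1 - α ^ 2) with hβ
    have hβpos : 0 < β := Real.sqrt_pos.mpr h1α
    have hβ2 : β ^ 2 = 1 - α ^ 2 := Real.sq_sqrt h1α.le
    set v : Fin n → ℝ := fun j => (u j - α * x j) / β with hv
    have hvnorm : ∑ j, v j ^ 2 = 1 := by
      have e : ∀ j ∈ Finset.univ, v j ^ 2 = (u j - α * x j) ^ 2 / β ^ 2 := by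
        intro j _
        show ((u j - α * x j) / β) ^ 2 = _
        rw [div_pow]
      rw [Finset.sum_congr rfl e, ← Finset.sum_div, hsum_s, hβ2,
        div_self (by linarith)]
    have hxv : ∑ j, x j * v j = 0 := by
      have e : ∀ j ∈ Finset.univ, x j * v j = (x j * u j - α * x j ^ 2) / β := by
        intro j _
        show x j * ((u j - α * x j) / β) = _
        field_simp
      rw [Finset.sum_congr rfl e, ← Finset.sum_div, Finset.sum_sub_distrib,
        ← Finset.mul_sum, hx, ← hα]
      simp
    have huj : ∀ j, u j = α * x j + β * v j := by
      intro j
      show u j = α * x j + β * ((u j - α * x j) / β)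
      field_simp
      ring
    set φ : ℝ := Real.arccos α with hφ
    have hαle : -1 ≤ α ∧ α ≤ 1 := abs_le.mp (by nlinarith [abs_nonneg α, sq_abs α])
    have hcos : Real.cos φ = α := Real.cos_arccos hαle.1 hαle.2
    have hsin : Real.sin φ = β := by rw [hφ, Real.sin_arccos, hβ]
    have hinner : ∀ i, ∑ j, u j * eval x (pderiv j (P i))
        = ∑ l ∈ Finset.range d, ww d φ l * eval (gam x v (node d φ l)) (P i) := by
      intro i
      rw [key x v hd (P i) (hdeg i) φ]
      have e : ∀ j ∈ Finset.univ, u j * eval x (pderiv j (P i))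
          = α * (x j * eval x (pderiv j (P i))) + β * (v j * eval x (pderiv j (P i))) := by
        intro j _
        rw [huj j]
        ring
      rw [Finset.sum_congr rfl e, Finset.sum_add_distrib, ← Finset.mul_sum, ← Finset.mul_sum,
        euler x d (P i) (hdeg i), hcos, hsin]
      ring
    rw [jacNorm, Finset.sum_congr rfl fun i (_ : i ∈ Finset.univ) => by rw [hinner i]]
    calc Real.sqrt (∑ i, (∑ l ∈ Finset.range d,
            ww d φ l * eval (gam x v (node d φ l)) (P i)) ^ 2)
        ≤ ∑ l ∈ Finset.range d, |ww d φ l|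
            * Real.sqrt (∑ i, eval (gam x v (node d φ l)) (P i) ^ 2) :=
          mink d (ww d φ) (fun l i => eval (gam x v (node d φ l)) (P i))
      _ ≤ ∑ l ∈ Finset.range d, rr d φ l * M := by
          refine Finset.sum_le_sum fun l _ => ?_
          rw [abs_ww]
          refine mul_le_mul_of_nonneg_left ?_ (rr_nonneg d φ l)
          exact pNorm_le_pSupNorm P (gam x v (node d φ l))
            (gam_sphere x v hx hvnorm hxv (node d φ l))
      _ = (d:ℝ) * M := by rw [← Finset.sum_mul, sum_rr d hd φ]

end KelloggAux

/-- Equal-degree Kellog-type inequality: `‖D⁽¹⁾P‖_∞ ≤ d·‖P‖_∞` when every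
`p i` is homogeneous of the same degree `d`. -/
theorem jacSupNorm_le {n m d : ℕ}
    (P : Fin m → MvPolynomial (Fin n) ℝ)
    (hdeg : ∀ i, MvPolynomial.IsHomogeneous (P i) d) :
    jacSupNorm P ≤ (d : ℝ) * pSupNorm P := by
  have hrfl : jacSupNorm P = sSup {r : ℝ | ∃ x u : Fin n → ℝ,
      (∑ j, x j ^ 2) = 1 ∧ (∑ j, u j ^ 2) = 1 ∧ r = jacNorm P x u} := rfl
  rw [hrfl]
  apply Real.sSup_le
  · rintro r ⟨x, u, hx, hu, rfl⟩
    exact KelloggAux.jacNorm_le P hdeg x u hx hu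
  · exact mul_nonneg (Nat.cast_nonneg d) (KelloggAux.pSupNorm_nonneg P)
end

section
/- Let P = (p₁,…,p_{n-1}) be a homogeneous polynomial system with max degree d, and for mutually orthogonal x, y ∈ S^{n-1} we have ‖DP(x)(y)‖₂ ≤ d·‖P‖_∞. -/
open MvPolynomial

section TrigAux

open Complex Finset

noncomputable def tpE (r : ℤ) (θ : ℝ) : ℂ := Complex.exp (r * θ * Complex.I)

lemma tpE_mul (a b : ℤ) (θ : ℝ) : tpE a θ * tpE b θ = tpE (a + b) θ := by
  rw [tpE, tpE, tpE, ← Complex.exp_add]; congr 1; push_cast; ring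

lemma tpE_zero (θ : ℝ) : tpE 0 θ = 1 := by simp [tpE]

lemma tpE_at_zero (r : ℤ) : tpE r 0 = 1 := by simp [tpE]

def IsTP (k : ℕ) (f : ℝ → ℂ) : Prop :=
  ∃ c : ℤ → ℂ, (∀ r, c r ≠ 0 → r ∈ Finset.Icc (-(k : ℤ)) k) ∧
    ∀ θ : ℝ, f θ = ∑ r ∈ Finset.Icc (-(k : ℤ)) k, c r * tpE r θ

lemma isTP_congr {k : ℕ} {f g : ℝ → ℂ} (h : ∀ θ, f θ = g θ) (hg : IsTP k g) : IsTP k f := by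
  obtain ⟨c, hc, hrep⟩ := hg
  exact ⟨c, hc, fun θ => (h θ).trans (hrep θ)⟩

lemma isTP_const (k : ℕ) (a : ℂ) : IsTP k (fun _ => a) := by
  refine ⟨fun r => if r = 0 then a else 0, fun r hr => ?_, fun θ => ?_⟩
  · rcases eq_or_ne r 0 with h | h
    · simp [h]
    · simp [h] at hr
  · rw [show (∑ r ∈ Finset.Icc (-(k : ℤ)) k, (if r = 0 then a else 0) * tpE r θ)
        = ∑ r ∈ Finset.Icc (-(k : ℤ)) k, (if r = 0 then a * tpE r θ else 0) by
        apply Finset.sum_congr rfl; intro r _; split <;> simp]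
    rw [Finset.sum_ite_eq' _ (0 : ℤ) (fun r => a * tpE r θ)]
    simp [tpE_zero]

lemma IsTP.add {k : ℕ} {f g : ℝ → ℂ} (hf : IsTP k f) (hg : IsTP k g) :
    IsTP k (fun θ => f θ + g θ) := by
  obtain ⟨c, hc, hf⟩ := hf
  obtain ⟨e, he, hg⟩ := hg
  refine ⟨c + e, fun r hr => ?_, fun θ => ?_⟩
  · by_contra h
    have h1 : c r = 0 := by by_contra h1; exact h (hc r h1)
    have h2 : e r = 0 := by by_contra h2; exact h (he r h2)
    simp [Pi.add_apply, h1, h2] at hr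
  · simp only [hf θ, hg θ, Pi.add_apply, add_mul, Finset.sum_add_distrib]

lemma IsTP.const_mul {k : ℕ} {f : ℝ → ℂ} (hf : IsTP k f) (a : ℂ) :
    IsTP k (fun θ => a * f θ) := by
  obtain ⟨c, hc, hf⟩ := hf
  refine ⟨fun r => a * c r, fun r hr => ?_, fun θ => ?_⟩
  · exact hc r (fun h => hr (by simp [h]))
  · simp only [hf θ, Finset.mul_sum, mul_assoc]

lemma IsTP.mono {k l : ℕ} (hkl : k ≤ l) {f : ℝ → ℂ} (hf : IsTP k f) : IsTP l f := by
  obtain ⟨c, hc, hf⟩ := hf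
  have hsub : Finset.Icc (-(k : ℤ)) k ⊆ Finset.Icc (-(l : ℤ)) l := by
    apply Finset.Icc_subset_Icc <;> exact_mod_cast by omega
  refine ⟨c, fun r hr => hsub (hc r hr), fun θ => ?_⟩
  rw [hf θ]
  apply Finset.sum_subset hsub
  intro r _ hr
  rcases eq_or_ne (c r) 0 with h | h
  · simp [h]
  · exact absurd (hc r h) hr

lemma IsTP.mul {k l : ℕ} {f g : ℝ → ℂ} (hf : IsTP k f) (hg : IsTP l g) :
    IsTP (k + l) (fun θ => f θ * g θ) := by
  classical
  obtain ⟨c, hc, hf⟩ := hf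
  obtain ⟨e, he, hg⟩ := hg
  refine ⟨fun u => ∑ r ∈ Finset.Icc (-(k : ℤ)) k, c r * e (u - r), fun u hu => ?_, fun θ => ?_⟩
  · by_contra h
    apply hu
    apply Finset.sum_eq_zero
    intro r hr
    rcases eq_or_ne (c r) 0 with h1 | h1
    · simp [h1]
    rcases eq_or_ne (e (u - r)) 0 with h2 | h2
    · simp [h2]
    exact absurd (by
      have := hc r h1
      have := he (u - r) h2
      simp only [Finset.mem_Icc] at *
      push_cast
      omega) h
  · show f θ * g θ = _
    calc f θ * g θ
        = ∑ r ∈ Finset.Icc (-(k : ℤ)) k, ∑ s ∈ Finset.Icc (-(l : ℤ)) l,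
            c r * tpE r θ * (e s * tpE s θ) := by rw [hf θ, hg θ, Finset.sum_mul_sum]
      _ = ∑ r ∈ Finset.Icc (-(k : ℤ)) k, ∑ s ∈ Finset.Icc (-(l : ℤ)) l,
            c r * e s * tpE (r + s) θ := by
          apply Finset.sum_congr rfl; intro r _; apply Finset.sum_congr rfl; intro s _
          rw [← tpE_mul]; ring
      _ = ∑ r ∈ Finset.Icc (-(k : ℤ)) k,
            ∑ u ∈ (Finset.Icc (-(l : ℤ)) l).map (addLeftEmbedding r),
            c r * e (u - r) * tpE u θ := by
          apply Finset.sum_congr rfl; intro r _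
          rw [Finset.sum_map]
          apply Finset.sum_congr rfl; intro s _
          simp [addLeftEmbedding_apply, add_sub_cancel_left, add_comm]
      _ = ∑ r ∈ Finset.Icc (-(k : ℤ)) k, ∑ u ∈ Finset.Icc (-((k : ℤ) + l)) (k + l),
            c r * e (u - r) * tpE u θ := by
          apply Finset.sum_congr rfl; intro r hr
          apply Finset.sum_subset
          · intro u hu
            simp only [Finset.mem_map, Finset.mem_Icc, addLeftEmbedding_apply] at hu ⊢
            simp only [Finset.mem_Icc] at hr
            obtain ⟨s, hs, rfl⟩ := hu
            omega
          · intro u _ hu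
            rcases eq_or_ne (e (u - r)) 0 with h2 | h2
            · simp [h2]
            · exfalso; apply hu
              have := he (u - r) h2
              simp only [Finset.mem_map, Finset.mem_Icc, addLeftEmbedding_apply] at this ⊢
              exact ⟨u - r, this, by ring⟩
      _ = ∑ u ∈ Finset.Icc (-((k : ℤ) + l)) (k + l),
            (∑ r ∈ Finset.Icc (-(k : ℤ)) k, c r * e (u - r)) * tpE u θ := by
          rw [Finset.sum_comm]
          apply Finset.sum_congr rfl; intro u _
          rw [Finset.sum_mul]
      _ = _ := by push_cast; ring_nf



lemma IsTP.pow {k : ℕ} {f : ℝ → ℂ} (hf : IsTP k f) (e : ℕ) :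
    IsTP (e * k) (fun θ => f θ ^ e) := by
  induction e with
  | zero => simpa using isTP_const 0 1
  | succ e ih =>
      have h2 : (e + 1) * k = e * k + k := by ring
      rw [h2]
      exact isTP_congr (fun θ => pow_succ (f θ) e) (ih.mul hf)

lemma IsTP.prod {ι : Type*} (s : Finset ι) (k : ι → ℕ) (f : ι → ℝ → ℂ)
    (h : ∀ i ∈ s, IsTP (k i) (f i)) :
    IsTP (∑ i ∈ s, k i) (fun θ => ∏ i ∈ s, f i θ) := by
  classical
  induction s using Finset.induction_on with
  | empty => simpa using isTP_const 0 1
  | insert a s hnot ih =>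
      rw [Finset.sum_insert hnot]
      apply isTP_congr (g := fun θ => f a θ * ∏ i ∈ s, f i θ)
      · intro θ; rw [Finset.prod_insert hnot]
      · exact (h a (Finset.mem_insert_self a s)).mul
          (ih (fun i hi => h i (Finset.mem_insert_of_mem hi)))

lemma IsTP.sum {ι : Type*} (s : Finset ι) (k : ℕ) (f : ι → ℝ → ℂ)
    (h : ∀ i ∈ s, IsTP k (f i)) :
    IsTP k (fun θ => ∑ i ∈ s, f i θ) := by
  classical
  induction s using Finset.induction_on with
  | empty => simpa using isTP_const k 0
  | insert a s hnot ih =>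
      apply isTP_congr (g := fun θ => f a θ + ∑ i ∈ s, f i θ)
      · intro θ; rw [Finset.sum_insert hnot]
      · exact (h a (Finset.mem_insert_self a s)).add
          (ih (fun i hi => h i (Finset.mem_insert_of_mem hi)))

/-- `θ ↦ u cos θ + v sin θ` is a trig polynomial of degree 1. -/
lemma isTP_cos_sin (u v : ℝ) :
    IsTP 1 (fun θ => ((Real.cos θ * u + Real.sin θ * v : ℝ) : ℂ)) := by
  refine ⟨fun r => if r = 1 then (u - v * Complex.I) / 2
      else if r = -1 then (u + v * Complex.I) / 2 else 0, fun r hr => ?_, fun θ => ?_⟩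
  · rcases eq_or_ne r 1 with h | h
    · simp [h]
    rcases eq_or_ne r (-1) with h' | h'
    · simp [h']
    · simp [h, h'] at hr
  · simp only [Nat.cast_one]
    rw [show Finset.Icc (-(1 : ℤ)) 1 = {-1, 0, 1} from rfl,
      Finset.sum_insert (by decide), Finset.sum_insert (by decide), Finset.sum_singleton]
    norm_num
    have e1 : tpE 1 θ = Complex.exp ((θ : ℂ) * Complex.I) := by
      rw [tpE]; norm_num
    have e2 : tpE (-1) θ = Complex.exp (-(θ : ℂ) * Complex.I) := by
      rw [tpE]; push_cast; ring_nf
    rw [e1, e2, Complex.cos, Complex.sin]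
    ring



lemma hasDerivAt_tpE (r : ℤ) (θ₀ : ℝ) :
    HasDerivAt (fun θ : ℝ => tpE r θ) ((r : ℂ) * Complex.I * tpE r θ₀) θ₀ := by
  have h : HasDerivAt (fun z : ℂ => Complex.exp ((r : ℂ) * z * Complex.I))
      (Complex.exp ((r : ℂ) * (θ₀ : ℂ) * Complex.I) * ((r : ℂ) * Complex.I)) (θ₀ : ℂ) := by
    have h1 : HasDerivAt (fun z : ℂ => (r : ℂ) * z * Complex.I) ((r : ℂ) * Complex.I) (θ₀ : ℂ) := by
      simpa using ((hasDerivAt_id ((θ₀ : ℝ) : ℂ)).const_mul (r : ℂ)).mul_const Complex.I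
    exact h1.cexp
  have := h.comp_ofReal
  simpa [tpE, mul_comm] using this

lemma hasDerivAt_tpSum (k : ℕ) (c : ℤ → ℂ) (θ₀ : ℝ) :
    HasDerivAt (fun θ : ℝ => ∑ r ∈ Finset.Icc (-(k : ℤ)) k, c r * tpE r θ)
      (∑ r ∈ Finset.Icc (-(k : ℤ)) k, c r * ((r : ℂ) * Complex.I * tpE r θ₀)) θ₀ :=
  HasDerivAt.fun_sum (fun r _ => (hasDerivAt_tpE r θ₀).const_mul (c r))

lemma sum_tpE_sample (N : ℕ) (hN : 0 < N) (a : ℤ) :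
    ∑ j ∈ Finset.range N, tpE a (2 * Real.pi * j / N) =
      if (N : ℤ) ∣ a then (N : ℂ) else 0 := by
  have hNR : (N : ℝ) ≠ 0 := Nat.cast_ne_zero.mpr hN.ne'
  set t : ℝ := a * (2 * Real.pi) / N with ht
  set ζ : ℂ := Complex.exp ((t : ℂ) * Complex.I) with hζ
  have hterm : ∀ j ∈ Finset.range N, tpE a (2 * Real.pi * j / N) = ζ ^ j := by
    intro j _
    rw [hζ, ← Complex.exp_nat_mul, tpE]
    congr 1
    push_cast [ht]
    ring
  rw [Finset.sum_congr rfl hterm]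
  by_cases hdvd : (N : ℤ) ∣ a
  · obtain ⟨m, rfl⟩ := hdvd
    have htm : t = (m : ℝ) * (2 * Real.pi) := by
      rw [ht]; push_cast; field_simp
    have hζ1 : ζ = 1 := by
      rw [hζ, htm]
      rw [show ((((m : ℝ) * (2 * Real.pi) : ℝ)) : ℂ) * Complex.I
          = (m : ℂ) * (2 * ↑Real.pi * Complex.I) by push_cast; ring]
      exact Complex.exp_int_mul_two_pi_mul_I m
    simp [hζ1, if_pos (dvd_mul_right (N : ℤ) m)]
  · rw [if_neg hdvd]
    have hζN : ζ ^ N = 1 := by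
      rw [hζ, ← Complex.exp_nat_mul]
      have htN : (N : ℝ) * t = (a : ℝ) * (2 * Real.pi) := by
        rw [ht]; field_simp
      have : (N : ℂ) * ((t : ℂ) * Complex.I) = (a : ℂ) * (2 * Real.pi * Complex.I) := by
        have := congrArg (fun r : ℝ => (r : ℂ)) htN
        push_cast at this ⊢
        linear_combination Complex.I * this
      rw [this]
      exact Complex.exp_int_mul_two_pi_mul_I a
    have hζne : ζ ≠ 1 := by
      intro h1
      have hcos : Real.cos t = 1 := by
        have := congrArg Complex.re h1
        rwa [hζ, Complex.exp_ofReal_mul_I_re, Complex.one_re] at this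
      obtain ⟨nn, hn⟩ := (Real.cos_eq_one_iff t).mp hcos
      rw [ht] at hn
      field_simp at hn
      apply hdvd
      refine ⟨nn, ?_⟩
      have h3 : ((a : ℝ)) * (2 * Real.pi) = ((N : ℝ) * nn) * (2 * Real.pi) := by
        linear_combination (-(2 * Real.pi)) * hn
      have h4 : (a : ℝ) = (N : ℝ) * nn :=
        mul_right_cancel₀ (by positivity) h3
      exact_mod_cast h4
    rw [geom_sum_eq hζne, hζN]
    simp



lemma sum_tpE_small {N : ℕ} (hN : 0 < N) {a : ℤ} (ha : a.natAbs < N) :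
    ∑ j ∈ Finset.range N, tpE a (2 * Real.pi * j / N) =
      if a = 0 then (N : ℂ) else 0 := by
  rw [sum_tpE_sample N hN a]
  rcases eq_or_ne a 0 with h | h
  · simp [h]
  · rw [if_neg h, if_neg]
    intro hdvd
    have h1 : (N : ℤ) ≤ |a| := Int.le_of_dvd (abs_pos.mpr h) ((dvd_abs _ _).mpr hdvd)
    rw [Int.abs_eq_natAbs] at h1
    omega

lemma count_diff (k : ℕ) (a : ℤ) :
    ∑ s ∈ Finset.Ico (0 : ℤ) k, ∑ t ∈ Finset.Ico (0 : ℤ) k,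
      (if t - s = a then (1 : ℂ) else 0) = (((k : ℤ) - |a|).toNat : ℂ) := by
  have hinner : ∀ s : ℤ, ∑ t ∈ Finset.Ico (0 : ℤ) k, (if t - s = a then (1 : ℂ) else 0)
      = if a + s ∈ Finset.Ico (0 : ℤ) k then (1 : ℂ) else 0 := by
    intro s
    rw [show (fun t : ℤ => if t - s = a then (1 : ℂ) else 0)
        = fun t : ℤ => if t = a + s then (1 : ℂ) else 0 by
      funext t; exact if_congr (by omega) rfl rfl]
    exact Finset.sum_ite_eq' _ _ _
  rw [Finset.sum_congr rfl (fun s _ => hinner s), Finset.sum_boole]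
  have hfilt : Finset.filter (fun s => a + s ∈ Finset.Ico (0 : ℤ) k) (Finset.Ico (0 : ℤ) k)
      = Finset.Ico (max 0 (-a)) (min (k : ℤ) ((k : ℤ) - a)) := by
    ext s
    simp only [Finset.mem_filter, Finset.mem_Ico, lt_min_iff, max_le_iff, le_max_iff,
      Finset.mem_Ico]
    omega
  rw [hfilt, Int.card_Ico]
  congr 1
  rcases abs_cases a with ⟨h1, _⟩ | ⟨h1, _⟩ <;> rw [h1] <;> omega

lemma tpE_eq (a : ℤ) (θ : ℝ) :
    tpE a θ = Complex.exp ((((a : ℝ) * θ : ℝ) : ℂ) * Complex.I) := by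
  rw [tpE]; congr 1; push_cast; ring

lemma tpE_add_neg (a : ℤ) (θ : ℝ) :
    tpE a θ + tpE (-a) θ = ((2 * Real.cos ((a : ℝ) * θ) : ℝ) : ℂ) := by
  rw [tpE_eq, tpE_eq]
  push_cast
  rw [Complex.exp_mul_I, Complex.exp_mul_I]
  simp only [neg_mul, Complex.cos_neg, Complex.sin_neg]
  ring

lemma tpE_sub_neg (a : ℤ) (θ : ℝ) :
    tpE a θ - tpE (-a) θ = 2 * ((Real.sin ((a : ℝ) * θ) : ℝ) : ℂ) * Complex.I := by
  rw [tpE_eq, tpE_eq]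
  push_cast
  rw [Complex.exp_mul_I, Complex.exp_mul_I]
  simp only [neg_mul, Complex.cos_neg, Complex.sin_neg]
  ring

lemma tpE_conj (a : ℤ) (θ : ℝ) :
    (starRingEnd ℂ) (tpE a θ) = tpE (-a) θ := by
  rw [tpE, tpE, ← Complex.exp_conj]
  congr 1
  simp [map_mul, Complex.conj_I, Complex.conj_ofReal]



lemma tpE_mul3 (a b d : ℤ) (θ : ℝ) :
    tpE a θ * (tpE b θ * tpE d θ) = tpE (a + (b + d)) θ := by
  rw [tpE_mul, tpE_mul]

lemma bernstein_coeff (k : ℕ) (hk : 0 < k) (M : ℝ) (c : ℤ → ℂ)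
    (hbound : ∀ θ : ℝ, ‖∑ r ∈ Finset.Icc (-(k : ℤ)) k, c r * tpE r θ‖ ≤ M) :
    ‖∑ r ∈ Finset.Icc (-(k : ℤ)) k, (r : ℂ) * c r‖ ≤ k * M := by
  classical
  set N : ℕ := 4 * k with hN
  have hNpos : 0 < N := by omega
  set θ : ℕ → ℝ := fun j => 2 * Real.pi * j / N with hθ
  set IccK := Finset.Icc (-(k : ℤ)) k with hIccK
  set Ico0 := Finset.Ico (0 : ℤ) (k : ℤ) with hIco0
  set A : ℕ → ℂ := fun j => ∑ r ∈ IccK, c r * tpE r (θ j) with hA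
  set B : ℕ → ℂ := fun j => tpE k (θ j) - tpE (-(k : ℤ)) (θ j) with hB
  set u : ℕ → ℂ := fun j => ∑ s ∈ Ico0, tpE s (θ j) with hu
  set ub : ℕ → ℂ := fun j => ∑ t ∈ Ico0, tpE (-t) (θ j) with hub
  have huu : ∀ j, u j * ub j = ∑ s ∈ Ico0, ∑ t ∈ Ico0, tpE (s - t) (θ j) := by
    intro j
    rw [hu, hub, Finset.sum_mul_sum]
    apply Finset.sum_congr rfl; intro s _
    apply Finset.sum_congr rfl; intro t _
    rw [tpE_mul, sub_eq_add_neg]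
  -- Claim 1
  have claim1 : ∑ j ∈ Finset.range N, A j * (B j * (u j * ub j))
      = -(N : ℂ) * ∑ r ∈ IccK, (r : ℂ) * c r := by
    have hpoint : ∀ j, A j * (B j * (u j * ub j))
        = ∑ s ∈ Ico0, ∑ t ∈ Ico0, ∑ r ∈ IccK,
            (c r * tpE (r + ((k : ℤ) + (s - t))) (θ j)
              - c r * tpE (r + (-(k : ℤ) + (s - t))) (θ j)) := by
      intro j
      rw [huu j, hB, hA]
      simp only [Finset.sum_mul, Finset.mul_sum, sub_mul, mul_sub]
      apply Finset.sum_congr rfl; intro s _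
      apply Finset.sum_congr rfl; intro t _
      rw [← Finset.sum_sub_distrib]
      apply Finset.sum_congr rfl; intro r _
      linear_combination (c r) * tpE_mul3 r k (s - t) (θ j)
        - (c r) * tpE_mul3 r (-(k : ℤ)) (s - t) (θ j)
    rw [Finset.sum_congr rfl (fun j _ => hpoint j)]
    rw [Finset.sum_comm]
    rw [Finset.sum_congr rfl (fun s _ => Finset.sum_comm ..)]
    rw [Finset.sum_congr rfl (fun s _ => Finset.sum_congr rfl
      (fun t _ => Finset.sum_comm ..))]
    have hinner : ∀ r ∈ IccK, ∀ s ∈ Ico0, ∀ t ∈ Ico0,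
        ∑ j ∈ Finset.range N,
          (c r * tpE (r + ((k : ℤ) + (s - t))) (θ j)
            - c r * tpE (r + (-(k : ℤ) + (s - t))) (θ j))
        = c r * ((N : ℂ) * (if t - s = r + k then (1 : ℂ) else 0)
            - (N : ℂ) * (if t - s = r - k then (1 : ℂ) else 0)) := by
      intro r hr s hs t ht
      rw [hIccK, Finset.mem_Icc] at hr
      rw [hIco0, Finset.mem_Ico] at hs
      rw [hIco0, Finset.mem_Ico] at ht
      rw [Finset.sum_sub_distrib, ← Finset.mul_sum, ← Finset.mul_sum]
      rw [sum_tpE_small hNpos (by rw [hN]; omega : (r + ((k : ℤ) + (s - t))).natAbs < N)]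
      rw [sum_tpE_small hNpos (by rw [hN]; omega : (r + (-(k : ℤ) + (s - t))).natAbs < N)]
      rw [if_congr (show r + ((k : ℤ) + (s - t)) = 0 ↔ t - s = r + k by omega) rfl rfl]
      rw [if_congr (show r + (-(k : ℤ) + (s - t)) = 0 ↔ t - s = r - k by omega) rfl rfl]
      split <;> split <;> ring
    rw [Finset.sum_congr rfl (fun s hs => Finset.sum_congr rfl
      (fun t ht => Finset.sum_congr rfl (fun r hr => hinner r hr s hs t ht)))]
    rw [Finset.sum_congr rfl (fun s _ => Finset.sum_comm ..)]
    rw [Finset.sum_comm]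
    have hcnt : ∀ r ∈ IccK,
        (((k : ℤ) - |r + k|).toNat : ℂ) - (((k : ℤ) - |r - k|).toNat : ℂ) = -(r : ℂ) := by
      intro r hr
      rw [hIccK, Finset.mem_Icc] at hr
      have hz : ((((k : ℤ) - |r + k|).toNat : ℤ) - (((k : ℤ) - |r - k|).toNat : ℤ)) = -r := by
        rcases abs_cases (r + k) with ⟨h1, _⟩ | ⟨h1, _⟩ <;>
          rcases abs_cases (r - k) with ⟨h2, _⟩ | ⟨h2, _⟩ <;> rw [h1, h2] <;> omega
      have := congrArg (fun z : ℤ => (z : ℂ)) hz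
      push_cast at this
      convert this using 2 <;> push_cast <;> ring
    have hper : ∀ r ∈ IccK,
        ∑ s ∈ Ico0, ∑ t ∈ Ico0,
          c r * ((N : ℂ) * (if t - s = r + k then (1 : ℂ) else 0)
            - (N : ℂ) * (if t - s = r - k then (1 : ℂ) else 0))
        = -(N : ℂ) * ((r : ℂ) * c r) := by
      intro r hr
      have hpull : ∑ s ∈ Ico0, ∑ t ∈ Ico0,
          c r * ((N : ℂ) * (if t - s = r + k then (1 : ℂ) else 0)
            - (N : ℂ) * (if t - s = r - k then (1 : ℂ) else 0))
          = c r * ((N : ℂ) * (∑ s ∈ Ico0, ∑ t ∈ Ico0, (if t - s = r + k then (1 : ℂ) else 0))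
            - (N : ℂ) * (∑ s ∈ Ico0, ∑ t ∈ Ico0, (if t - s = r - k then (1 : ℂ) else 0))) := by
        simp only [mul_sub, Finset.mul_sum, Finset.sum_sub_distrib]
      rw [hpull, hIco0, count_diff k (r + k), count_diff k (r - k)]
      have h := hcnt r hr
      linear_combination (c r) * (N : ℂ) * h
    rw [Finset.sum_congr rfl hper, ← Finset.mul_sum]
  -- Claim 2 (complex form)
  have claim2c : ∑ j ∈ Finset.range N,
      (1 - (tpE (2 * (k : ℤ)) (θ j) + tpE (-(2 * (k : ℤ))) (θ j)) / 2) * (u j * ub j)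
      = (N : ℂ) * k := by
    have hpoint : ∀ j, (1 - (tpE (2 * (k : ℤ)) (θ j) + tpE (-(2 * (k : ℤ))) (θ j)) / 2)
        * (u j * ub j)
        = ∑ s ∈ Ico0, ∑ t ∈ Ico0,
            (tpE (s - t) (θ j) - (tpE (2 * (k : ℤ) + (s - t)) (θ j)
              + tpE (-(2 * (k : ℤ)) + (s - t)) (θ j)) / 2) := by
      intro j
      rw [huu j, Finset.mul_sum]
      apply Finset.sum_congr rfl; intro s _
      rw [Finset.mul_sum]
      apply Finset.sum_congr rfl; intro t _
      linear_combination (-(1 : ℂ)/2) * tpE_mul (2 * (k : ℤ)) (s - t) (θ j)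
        + (-(1 : ℂ)/2) * tpE_mul (-(2 * (k : ℤ))) (s - t) (θ j)
    rw [Finset.sum_congr rfl (fun j _ => hpoint j)]
    rw [Finset.sum_comm]
    rw [Finset.sum_congr rfl (fun s _ => Finset.sum_comm ..)]
    have hinner : ∀ s ∈ Ico0, ∀ t ∈ Ico0,
        ∑ j ∈ Finset.range N,
          (tpE (s - t) (θ j) - (tpE (2 * (k : ℤ) + (s - t)) (θ j)
            + tpE (-(2 * (k : ℤ)) + (s - t)) (θ j)) / 2)
        = (N : ℂ) * (if t - s = 0 then (1 : ℂ) else 0) := by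
      intro s hs t ht
      rw [hIco0, Finset.mem_Ico] at hs
      rw [hIco0, Finset.mem_Ico] at ht
      rw [Finset.sum_sub_distrib, ← Finset.sum_div, Finset.sum_add_distrib]
      rw [sum_tpE_small hNpos (by rw [hN]; omega : (s - t).natAbs < N)]
      rw [sum_tpE_small hNpos (by rw [hN]; omega : (2 * (k : ℤ) + (s - t)).natAbs < N)]
      rw [sum_tpE_small hNpos (by rw [hN]; omega : (-(2 * (k : ℤ)) + (s - t)).natAbs < N)]
      rw [if_neg (by omega : ¬(2 * (k : ℤ) + (s - t) = 0))]
      rw [if_neg (by omega : ¬(-(2 * (k : ℤ)) + (s - t) = 0))]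
      rw [if_congr (show s - t = 0 ↔ t - s = 0 by omega) rfl rfl]
      split <;> ring
    rw [Finset.sum_congr rfl (fun s hs => Finset.sum_congr rfl (fun t ht => hinner s hs t ht))]
    have : ∑ s ∈ Ico0, ∑ t ∈ Ico0, (N : ℂ) * (if t - s = 0 then (1 : ℂ) else 0)
        = (N : ℂ) * ∑ s ∈ Ico0, ∑ t ∈ Ico0, (if t - s = 0 then (1 : ℂ) else 0) := by
      simp only [Finset.mul_sum]
    rw [this, hIco0, count_diff k 0]
    simp
  -- the real weight
  set ρ : ℕ → ℝ := fun j => 1 - Real.cos (((2 * (k : ℤ) : ℤ) : ℝ) * θ j) with hρ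
  have hρc : ∀ j, ((ρ j : ℝ) : ℂ)
      = 1 - (tpE (2 * (k : ℤ)) (θ j) + tpE (-(2 * (k : ℤ))) (θ j)) / 2 := by
    intro j
    rw [tpE_add_neg (2 * (k : ℤ)) (θ j), hρ]
    push_cast
    ring
  have hnormSq : ∀ j, ((Complex.normSq (u j) : ℝ) : ℂ) = u j * ub j := by
    intro j
    rw [← Complex.mul_conj]
    congr 1
    rw [hu, hub, map_sum]
    exact Finset.sum_congr rfl (fun s _ => tpE_conj s (θ j))
  have claim2r : ∑ j ∈ Finset.range N, ρ j * Complex.normSq (u j) = (N : ℝ) * k := by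
    have hC : ((∑ j ∈ Finset.range N, ρ j * Complex.normSq (u j) : ℝ) : ℂ)
        = (((N : ℝ) * k : ℝ) : ℂ) := by
      push_cast
      rw [show (∑ j ∈ Finset.range N, ((ρ j : ℂ) * (Complex.normSq (u j) : ℂ)))
          = ∑ j ∈ Finset.range N, (1 - (tpE (2 * (k : ℤ)) (θ j)
              + tpE (-(2 * (k : ℤ))) (θ j)) / 2) * (u j * ub j) from
        Finset.sum_congr rfl (fun j _ => by rw [hρc j, hnormSq j])]
      rw [claim2c]
    exact_mod_cast hC
  -- Claim 3 : pointwise bound on B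
  have hBle : ∀ j, ‖B j‖ ≤ ρ j := by
    intro j
    have harg : (((k : ℤ) : ℝ)) * θ j = j * (Real.pi / 2) := by
      rw [hθ, hN]
      have h4 : ((4 * k : ℕ) : ℝ) ≠ 0 := by positivity
      field_simp
      push_cast; ring
    have hsin : Real.sin (((k : ℤ) : ℝ) * θ j) = 0 ∨ Real.sin (((k : ℤ) : ℝ) * θ j) ^ 2 = 1 := by
      rw [harg]
      rcases Nat.even_or_odd j with ⟨a, ha⟩ | ⟨a, ha⟩
      · left
        rw [ha, show ((a + a : ℕ) : ℝ) * (Real.pi / 2) = a * Real.pi by push_cast; ring]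
        exact Real.sin_nat_mul_pi a
      · right
        rw [ha, show ((2 * a + 1 : ℕ) : ℝ) * (Real.pi / 2) = a * Real.pi + Real.pi / 2 by
          push_cast; ring]
        rw [Real.sin_add_pi_div_two]
        nlinarith [Real.sin_sq_add_cos_sq ((a : ℝ) * Real.pi), Real.sin_nat_mul_pi a]
    have hρval : ρ j = 2 * Real.sin (((k : ℤ) : ℝ) * θ j) ^ 2 := by
      simp only [hρ]
      have h2 : ((2 * (k : ℤ) : ℤ) : ℝ) * θ j = 2 * ((((k : ℤ) : ℝ)) * θ j) := by
        push_cast; ring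
      rw [h2, Real.cos_two_mul]
      nlinarith [Real.sin_sq_add_cos_sq (((k : ℤ) : ℝ) * θ j)]
    have hBval : ‖B j‖ = 2 * |Real.sin (((k : ℤ) : ℝ) * θ j)| := by
      simp only [hB]
      rw [tpE_sub_neg (k : ℤ) (θ j)]
      rw [norm_mul, norm_mul, Complex.norm_I, Complex.norm_real, Real.norm_eq_abs, Complex.norm_two]
      ring
    rcases hsin with h | h
    · rw [hBval, hρval, h]
      simp
    · have habs : |Real.sin (((k : ℤ) : ℝ) * θ j)| = 1 := by
        nlinarith [_root_.sq_abs (Real.sin (((k : ℤ) : ℝ) * θ j)),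
          abs_nonneg (Real.sin (((k : ℤ) : ℝ) * θ j))]
      rw [hBval, hρval, habs]
      nlinarith [_root_.sq_abs (Real.sin (((k : ℤ) : ℝ) * θ j)), habs]
  -- assembly
  have hM0 : 0 ≤ M := le_trans (norm_nonneg _) (hbound 0)
  have hstep : (N : ℝ) * ‖∑ r ∈ IccK, (r : ℂ) * c r‖ ≤ (N : ℝ) * (k * M) := by
    have h1 : (N : ℝ) * ‖∑ r ∈ IccK, (r : ℂ) * c r‖
        = ‖∑ j ∈ Finset.range N, A j * (B j * (u j * ub j))‖ := by
      have hmn : ‖-(N : ℂ)‖ = (N : ℝ) := by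
        rw [norm_neg, Complex.norm_natCast]
      rw [claim1, norm_mul, hmn]
    rw [h1]
    calc ‖∑ j ∈ Finset.range N, A j * (B j * (u j * ub j))‖
        ≤ ∑ j ∈ Finset.range N, ‖A j * (B j * (u j * ub j))‖ :=
          norm_sum_le _ _
      _ ≤ ∑ j ∈ Finset.range N, M * (ρ j * Complex.normSq (u j)) := by
          apply Finset.sum_le_sum
          intro j _
          rw [norm_mul, norm_mul]
          have huub : ‖u j * ub j‖ = Complex.normSq (u j) := by
            rw [← hnormSq j, Complex.norm_real, Real.norm_eq_abs,
              _root_.abs_of_nonneg (Complex.normSq_nonneg _)]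
          rw [huub]
          have hBn : 0 ≤ ‖B j‖ := norm_nonneg _
          have hρn : 0 ≤ ρ j := le_trans hBn (hBle j)
          apply mul_le_mul (hbound (θ j))
          · exact mul_le_mul_of_nonneg_right (hBle j) (Complex.normSq_nonneg _)
          · exact mul_nonneg hBn (Complex.normSq_nonneg _)
          · exact hM0
      _ = M * ((N : ℝ) * k) := by rw [← Finset.mul_sum, claim2r]
      _ = (N : ℝ) * (k * M) := by ring
  have hNR : (0 : ℝ) < N := by exact_mod_cast hNpos
  exact le_of_mul_le_mul_left hstep hNR



open MvPolynomial in
lemma hasDerivAt_eval_comp {n : ℕ} (p : MvPolynomial (Fin n) ℝ) (z : ℝ → (Fin n) → ℝ)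
    (z' : Fin n → ℝ) (θ₀ : ℝ) (hz : ∀ j, HasDerivAt (fun θ => z θ j) (z' j) θ₀) :
    HasDerivAt (fun θ => MvPolynomial.eval (z θ) p)
      (∑ j, z' j * MvPolynomial.eval (z θ₀) (MvPolynomial.pderiv j p)) θ₀ := by
  classical
  induction p using MvPolynomial.induction_on with
  | C a =>
      simpa [MvPolynomial.eval_C, MvPolynomial.pderiv_C] using (hasDerivAt_const θ₀ a)
  | add p q hp hq =>
      simpa [MvPolynomial.eval_add, map_add, mul_add, Finset.sum_add_distrib] using hp.fun_add hq
  | mul_X p j hp =>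
      have h := hp.fun_mul (hz j)
      have hfun : (fun θ => MvPolynomial.eval (z θ) (p * MvPolynomial.X j))
          = fun θ => MvPolynomial.eval (z θ) p * z θ j := by
        funext θ; simp [MvPolynomial.eval_mul, MvPolynomial.eval_X]
      rw [hfun]
      refine h.congr_deriv (Eq.symm ?_)
      have hterm : ∀ i : Fin n, z' i * MvPolynomial.eval (z θ₀)
            (MvPolynomial.pderiv i (p * MvPolynomial.X j))
          = z' i * MvPolynomial.eval (z θ₀) (MvPolynomial.pderiv i p) * z θ₀ j
            + (if i = j then z' i * MvPolynomial.eval (z θ₀) p else 0) := by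
        intro i
        rw [MvPolynomial.pderiv_mul, MvPolynomial.eval_add, MvPolynomial.eval_mul,
          MvPolynomial.eval_mul, MvPolynomial.eval_X]
        rcases eq_or_ne i j with h' | h'
        · subst h'
          rw [MvPolynomial.pderiv_X_self]
          simp
          ring
        · rw [MvPolynomial.pderiv_X_of_ne h'.symm]
          simp [h']
          ring
      rw [Finset.sum_congr rfl (fun i _ => hterm i), Finset.sum_add_distrib,
        ← Finset.sum_mul, Finset.sum_ite_eq' Finset.univ j
          (fun i => z' i * MvPolynomial.eval (z θ₀) p)]
      simp [mul_comm]



end TrigAux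

open MvPolynomial in
lemma isTP_eval_circle {n d : ℕ} (p : MvPolynomial (Fin n) ℝ) {D : ℕ}
    (hp : p.IsHomogeneous D) (hD : D ≤ d) (x y : Fin n → ℝ) :
    IsTP d (fun θ => ((MvPolynomial.eval
      (fun j => Real.cos θ * x j + Real.sin θ * y j) p : ℝ) : ℂ)) := by
  apply IsTP.mono hD
  apply isTP_congr (g := fun θ => ∑ m ∈ p.support, ((MvPolynomial.coeff m p : ℝ) : ℂ)
    * ∏ j, ((Real.cos θ * x j + Real.sin θ * y j : ℝ) : ℂ) ^ (m j))
  · intro θ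
    rw [MvPolynomial.eval_eq']
    push_cast
    rfl
  · apply IsTP.sum
    intro m hm
    have hdeg : ∑ j, m j = D := by
      have h1 := hp (MvPolynomial.mem_support_iff.mp hm)
      change Finsupp.weight (fun _ => 1) m = D at h1
      rw [← Finsupp.degree_eq_weight_one, Finsupp.degree_apply] at h1
      rw [← h1]
      exact (Finset.sum_subset (Finset.subset_univ _)
        (fun j _ hj => Finsupp.notMem_support_iff.mp hj)).symm
    have hprod : IsTP D (fun θ => ∏ j,
        ((Real.cos θ * x j + Real.sin θ * y j : ℝ) : ℂ) ^ (m j)) := by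
      rw [← hdeg]
      apply IsTP.prod Finset.univ (fun j => m j)
      intro j _
      have := (isTP_cos_sin (x j) (y j)).pow (m j)
      rwa [mul_one] at this
    exact hprod.const_mul _

/-- For mutually orthogonal unit vectors `x ⊥ y`,
`‖DP(x)(y)‖₂ ≤ d·‖P‖_∞` for a homogeneous system of maximal degree `d`. -/
theorem jacNorm_orthogonal_le {n m d : ℕ}
    (P : Fin m → MvPolynomial (Fin n) ℝ) (D : Fin m → ℕ)
    (hdeg : ∀ i, MvPolynomial.IsHomogeneous (P i) (D i))
    (hD : ∀ i, D i ≤ d)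
    (x y : Fin n → ℝ) (hx : (∑ j, x j ^ 2) = 1) (hy : (∑ j, y j ^ 2) = 1)
    (hxy : (∑ j, x j * y j) = 0) :
    jacNorm P x y ≤ (d : ℝ) * pSupNorm P := by
  classical
  set M := pSupNorm P with hM
  set z : ℝ → (Fin n) → ℝ := fun θ j => Real.cos θ * x j + Real.sin θ * y j with hz
  have hsphere : ∀ θ, (∑ j, z θ j ^ 2) = 1 := by
    intro θ
    have hterm : ∀ j, z θ j ^ 2 = Real.cos θ ^ 2 * x j ^ 2 + Real.sin θ ^ 2 * y j ^ 2
        + 2 * Real.cos θ * Real.sin θ * (x j * y j) := by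
      intro j; simp only [hz]; ring
    rw [Finset.sum_congr rfl (fun j _ => hterm j)]
    rw [Finset.sum_add_distrib, Finset.sum_add_distrib, ← Finset.mul_sum, ← Finset.mul_sum,
      ← Finset.mul_sum, hx, hy, hxy]
    have := Real.sin_sq_add_cos_sq θ
    linarith
  -- the sup is a bound
  have hBdd : BddAbove {r : ℝ | ∃ x : Fin n → ℝ, (∑ j, x j ^ 2) = 1 ∧ r = pNorm P x} := by
    set S : Set (Fin n → ℝ) := {w | ∑ j, w j ^ 2 = 1} with hS
    have himg : {r : ℝ | ∃ x : Fin n → ℝ, (∑ j, x j ^ 2) = 1 ∧ r = pNorm P x}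
        = pNorm P '' S := by
      ext r
      simp only [Set.mem_setOf_eq, Set.mem_image, hS]
      constructor
      · rintro ⟨w, hw, rfl⟩; exact ⟨w, hw, rfl⟩
      · rintro ⟨w, hw, rfl⟩; exact ⟨w, hw, rfl⟩
    rw [himg]
    have hclosed : IsClosed S := by
      have : Continuous fun w : Fin n → ℝ => ∑ j, w j ^ 2 :=
        continuous_finset_sum _ (fun j _ => (continuous_apply j).pow 2)
      exact isClosed_eq this continuous_const
    have hbdd : Bornology.IsBounded S := by
      apply Bornology.IsBounded.subset (Metric.isBounded_closedBall (x := (0 : Fin n → ℝ))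
        (r := 1))
      intro w hw
      rw [Metric.mem_closedBall]
      rw [dist_pi_le_iff (by norm_num : (0:ℝ) ≤ 1)]
      intro i
      have hd0 : dist (w i) ((0 : Fin n → ℝ) i) = |w i| := by
        simp [Real.dist_eq]
      rw [hd0]
      have h1 : w i ^ 2 ≤ 1 := by
        rw [← hw]
        exact Finset.single_le_sum (f := fun j => w j ^ 2)
          (fun j _ => sq_nonneg _) (Finset.mem_univ i)
      nlinarith [abs_nonneg (w i), _root_.sq_abs (w i)]
    have hcomp : IsCompact S := Metric.isCompact_of_isClosed_isBounded hclosed hbdd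
    have hcont : Continuous (pNorm P) := by
      apply Real.continuous_sqrt.comp
      exact continuous_finset_sum _ (fun i _ => (MvPolynomial.continuous_eval (P i)).pow 2)
    exact (hcomp.image hcont).bddAbove
  have hle : ∀ θ, pNorm P (z θ) ≤ M := fun θ => le_csSup hBdd ⟨z θ, hsphere θ, rfl⟩
  have hM0 : 0 ≤ M :=
    le_trans (Real.sqrt_nonneg _) (le_csSup hBdd ⟨x, hx, rfl⟩)
  -- the directional derivative data
  set w : Fin m → ℝ := fun i => ∑ j, y j * MvPolynomial.eval x (MvPolynomial.pderiv j (P i))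
    with hw
  set W : ℝ := Real.sqrt (∑ i, w i ^ 2) with hW
  have hjac : jacNorm P x y = W := rfl
  have hW0 : 0 ≤ W := Real.sqrt_nonneg _
  rcases eq_or_lt_of_le hW0 with hWz | hWpos
  · rw [hjac, ← hWz]
    positivity
  have hWsq : W ^ 2 = ∑ i, w i ^ 2 := Real.sq_sqrt (Finset.sum_nonneg fun i _ => sq_nonneg _)
  set v : Fin m → ℝ := fun i => w i / W with hv
  have hvsq : (∑ i, v i ^ 2) = 1 := by
    have : (∑ i, v i ^ 2) = (∑ i, w i ^ 2) / W ^ 2 := by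
      rw [Finset.sum_div]
      exact Finset.sum_congr rfl fun i _ => by rw [hv, div_pow]
    rw [this, ← hWsq, div_self (by positivity)]
  set g : ℝ → ℝ := fun θ => ∑ i, v i * MvPolynomial.eval (z θ) (P i) with hg
  -- bound on |g|
  have hgle : ∀ θ, |g θ| ≤ M := by
    intro θ
    have hcs : (∑ i, v i * MvPolynomial.eval (z θ) (P i)) ^ 2
        ≤ (∑ i, v i ^ 2) * (∑ i, MvPolynomial.eval (z θ) (P i) ^ 2) :=
      Finset.sum_mul_sq_le_sq_mul_sq _ _ _
    rw [hvsq, one_mul] at hcs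
    have h1 : |g θ| ≤ pNorm P (z θ) := by
      rw [hg, ← Real.sqrt_sq_eq_abs]
      exact Real.sqrt_le_sqrt hcs
    exact le_trans h1 (hle θ)
  -- g is a trig polynomial of degree ≤ d
  have hTP : IsTP d (fun θ => ((g θ : ℝ) : ℂ)) := by
    apply isTP_congr (g := fun θ => ∑ i, ((v i : ℝ) : ℂ)
      * ((MvPolynomial.eval (z θ) (P i) : ℝ) : ℂ))
    · intro θ; rw [hg]; push_cast; rfl
    · exact IsTP.sum Finset.univ d _
        (fun i _ => ((isTP_eval_circle (P i) (hdeg i) (hD i) x y).const_mul _))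
  obtain ⟨c, hcsupp, hrep⟩ := hTP
  -- derivative of g at 0 is W
  have hz0 : z 0 = x := by funext j; simp [hz]
  have hzj : ∀ j, HasDerivAt (fun θ => z θ j) (y j) 0 := by
    intro j
    have h1 := ((Real.hasDerivAt_cos 0).mul_const (x j)).fun_add
      ((Real.hasDerivAt_sin 0).mul_const (y j))
    simpa [hz] using h1
  have hgW : HasDerivAt g W 0 := by
    have h1 : HasDerivAt g (∑ i, v i * w i) 0 := by
      apply HasDerivAt.fun_sum
      intro i _
      have h2 := hasDerivAt_eval_comp (P i) z y 0 hzj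
      rw [hz0] at h2
      exact h2.const_mul (v i)
    have h3 : (∑ i, v i * w i) = W := by
      have : (∑ i, v i * w i) = (∑ i, w i ^ 2) / W := by
        rw [Finset.sum_div]
        exact Finset.sum_congr rfl fun i _ => by rw [hv]; ring
      rw [this, ← hWsq, sq, mul_div_assoc, div_self (by positivity), mul_one]
    rwa [h3] at h1
  have hgCW : HasDerivAt (fun θ => ((g θ : ℝ) : ℂ)) ((W : ℝ) : ℂ) 0 := hgW.ofReal_comp
  have hgCD : HasDerivAt (fun θ => ((g θ : ℝ) : ℂ))
      (∑ r ∈ Finset.Icc (-(d : ℤ)) d, c r * ((r : ℂ) * Complex.I * tpE r 0)) 0 := by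
    rw [show (fun θ => ((g θ : ℝ) : ℂ))
        = fun θ => ∑ r ∈ Finset.Icc (-(d : ℤ)) d, c r * tpE r θ from funext hrep]
    exact hasDerivAt_tpSum d c 0
  have hWeq : ((W : ℝ) : ℂ) = Complex.I * ∑ r ∈ Finset.Icc (-(d : ℤ)) d, (r : ℂ) * c r := by
    rw [hgCW.unique hgCD, Finset.mul_sum]
    apply Finset.sum_congr rfl
    intro r _
    rw [tpE_at_zero]
    ring
  have hWabs : W = ‖∑ r ∈ Finset.Icc (-(d : ℤ)) d, (r : ℂ) * c r‖ := by
    have h1 : ‖((W : ℝ) : ℂ)‖ = W := by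
      rw [Complex.norm_real, Real.norm_eq_abs, _root_.abs_of_nonneg hW0]
    rw [← h1, hWeq, norm_mul, Complex.norm_I, one_mul]
  rcases Nat.eq_zero_or_pos d with hd0 | hdpos
  · subst hd0
    rw [hjac, hWabs]
    rw [show (-(((0 : ℕ) : ℤ))) = 0 from rfl, show (((0 : ℕ) : ℤ)) = 0 from rfl,
      Finset.Icc_self, Finset.sum_singleton]
    simp
  · rw [hjac, hWabs]
    apply bernstein_coeff d hdpos M c
    intro θ
    rw [← hrep θ, Complex.norm_real, Real.norm_eq_abs]
    exact hgle θ
end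

section
/- Suppose a random vector X ∈ ℝ^n satisfies: E⟨X,θ⟩ = 0 for all unit θ; Prob(|⟨X,θ⟩| ≥ t) ≤ 2e^{−t²/K²} for all unit θ and t > 0; and Prob(|⟨a,X⟩| ≤ ε‖a‖₂) ≤ c₀ε for all a ∈ ℝ^n and ε > 0. Then K·c₀ ≥ 1/4. -/
open MeasureTheory

/-- If a random vector `X ∈ ℝⁿ` is centered, sub-Gaussian with constant `K`,
and satisfies the small-ball property with constant `c₀`, then `K·c₀ ≥ 1/4`. -/
theorem subGaussian_smallBall_product_bound
    {Ω : Type*} [MeasurableSpace Ω] (μ : Measure Ω) [IsProbabilityMeasure μ]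
    (n : ℕ) (hn : 1 ≤ n) (X : Ω → EuclideanSpace ℝ (Fin n))
    (hmeas : Measurable X)
    (K c₀ : ℝ) (hK : 0 < K) (hc₀ : 0 < c₀)
    (hint : ∀ θ : EuclideanSpace ℝ (Fin n),
      Integrable (fun ω => inner ℝ (X ω) θ : Ω → ℝ) μ)
    (hcent : ∀ θ : EuclideanSpace ℝ (Fin n), ‖θ‖ = 1 →
      (∫ ω, (inner ℝ (X ω) θ : ℝ) ∂μ) = 0)
    (hsg : ∀ θ : EuclideanSpace ℝ (Fin n), ‖θ‖ = 1 → ∀ t : ℝ, 0 < t →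
      μ {ω | t ≤ |(inner ℝ (X ω) θ : ℝ)|}
        ≤ ENNReal.ofReal (2 * Real.exp (-t ^ 2 / K ^ 2)))
    (hsb : ∀ a : EuclideanSpace ℝ (Fin n), ∀ ε : ℝ, 0 < ε →
      μ {ω | |(inner ℝ a (X ω) : ℝ)| ≤ ε * ‖a‖} ≤ ENNReal.ofReal (c₀ * ε)) :
    1 / 4 ≤ K * c₀ := by
  set θ : EuclideanSpace ℝ (Fin n) := EuclideanSpace.single ⟨0, hn⟩ (1 : ℝ) with hθdef
  have hθ : ‖θ‖ = 1 := by
    simp [hθdef, EuclideanSpace.norm_single]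
  have h1 := hsb θ (2 * K) (by positivity)
  have h2 := hsg θ hθ (2 * K) (by positivity)
  have hexp : -(2 * K) ^ 2 / K ^ 2 = -4 := by
    field_simp
    ring
  rw [hexp] at h2
  have hsub : (Set.univ : Set Ω) ⊆
      {ω | |(inner ℝ θ (X ω) : ℝ)| ≤ (2 * K) * ‖θ‖} ∪
      {ω | (2 * K) ≤ |(inner ℝ (X ω) θ : ℝ)|} := by
    intro ω _
    by_cases h : |(inner ℝ (X ω) θ : ℝ)| ≤ 2 * K
    · left
      simp only [Set.mem_setOf_eq, hθ, mul_one]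
      rwa [real_inner_comm]
    · right
      exact le_of_not_ge h
  have key : (1 : ENNReal) ≤ ENNReal.ofReal (c₀ * (2 * K)) +
      ENNReal.ofReal (2 * Real.exp (-4)) := by
    calc (1 : ENNReal) = μ Set.univ := (measure_univ).symm
      _ ≤ μ ({ω | |(inner ℝ θ (X ω) : ℝ)| ≤ (2 * K) * ‖θ‖} ∪
          {ω | (2 * K) ≤ |(inner ℝ (X ω) θ : ℝ)|}) := measure_mono hsub
      _ ≤ μ {ω | |(inner ℝ θ (X ω) : ℝ)| ≤ (2 * K) * ‖θ‖} +
          μ {ω | (2 * K) ≤ |(inner ℝ (X ω) θ : ℝ)|} := measure_union_le _ _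
      _ ≤ _ := add_le_add h1 h2
  rw [← ENNReal.ofReal_add (by positivity) (by positivity)] at key
  have hreal : (1 : ℝ) ≤ c₀ * (2 * K) + 2 * Real.exp (-4) :=
    ENNReal.one_le_ofReal.mp key
  have he : Real.exp (-4) ≤ 1 / 5 := by
    rw [Real.exp_neg]
    have h5 : (5 : ℝ) ≤ Real.exp 4 := by
      have := Real.add_one_le_exp (4 : ℝ)
      linarith
    rw [one_div]
    exact inv_anti₀ (by norm_num) h5
  nlinarith [hreal, he]
end
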